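/- arXiv:2006.16597 — 8 statements merged into one kernel-verified Lean document; each statement's English description precedes it below -/
import Mathlib

section
/- For every λ ≥ 0, the predictor with reject option Γ*_λ = (f*, A_λ) with acceptance region A_λ = {x ∈ ℝ^d : σ²(x) ≤ λ} minimizes the risk R_λ over all predictors with reject option: for every measurable f : ℝ^d → ℝ and every measurable set A ⊆ ℝ^d, one has R_λ(f*, A_λ) ≤ R_λ(f, A). -/
open MeasureTheory Set

noncomputable section

/-- `ℝ^d` with its Euclidean structure. -/
abbrev Euc (d : ℕ) := EuclideanSpace ℝ (Fin d)

/-- The risk `R_λ(f, A)` of the predictor with reject option `(f, A)`: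
`E[(Y - f(X))² 1{X ∈ A}] + λ P(X ∉ A)`. -/
def riskRO {Ω : Type*} [MeasurableSpace Ω] (μ : Measure Ω) {d : ℕ}
    (X : Ω → Euc d) (Y : Ω → ℝ) (lam : ℝ)
    (f : Euc d → ℝ) (A : Set (Euc d)) : ℝ :=
  (∫ ω, (Y ω - f (X ω)) ^ 2 * A.indicator (fun _ => (1 : ℝ)) (X ω) ∂μ)
    + lam * (μ {ω | X ω ∉ A}).toReal

private lemma integrable_mul_of_sq' {Ω : Type*} [MeasurableSpace Ω] {μ : Measure Ω}
    {p q : Ω → ℝ} (hp : AEStronglyMeasurable p μ) (hq : AEStronglyMeasurable q μ)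
    (hp2 : Integrable (fun ω => p ω ^ 2) μ) (hq2 : Integrable (fun ω => q ω ^ 2) μ) :
    Integrable (fun ω => p ω * q ω) μ := by
  refine (hp2.add hq2).mono' (hp.mul hq) ?_
  filter_upwards with ω
  simp only [Pi.add_apply]
  have h1 : ‖p ω * q ω‖ = |p ω| * |q ω| := by rw [Real.norm_eq_abs, abs_mul]
  rw [h1]
  nlinarith [sq_nonneg (|p ω| - |q ω|), sq_abs (p ω), sq_abs (q ω),
    abs_nonneg (p ω), abs_nonneg (q ω)]

private lemma integrable_of_sq' {Ω : Type*} [MeasurableSpace Ω] {μ : Measure Ω}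
    [IsFiniteMeasure μ] {p : Ω → ℝ} (hp : AEStronglyMeasurable p μ)
    (hp2 : Integrable (fun ω => p ω ^ 2) μ) : Integrable p μ := by
  have h1 := integrable_mul_of_sq' (q := fun _ => (1 : ℝ)) hp
    aestronglyMeasurable_const hp2 (by simpa using (integrable_const (1 : ℝ)))
  simpa using h1

/-- the predictor `(f*, {σ² ≤ λ})` minimizes the risk `R_λ` over all
predictors with reject option. -/
theorem optimal_predictor_minimizes_risk
    {Ω : Type*} [MeasurableSpace Ω] (μ : Measure Ω) [IsProbabilityMeasure μ]
    {d : ℕ} (X : Ω → Euc d) (Y : Ω → ℝ)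
    (hX : Measurable X) (hY : Measurable Y)
    (hY2 : Integrable (fun ω => (Y ω) ^ 2) μ)
    (fstar sigma2 : Euc d → ℝ)
    (hfstarMeas : Measurable fstar) (hsigma2Meas : Measurable sigma2)
    -- `f*` is (a version of) the conditional expectation `E[Y | X]`
    (hfstar : (fun ω => fstar (X ω)) =ᵐ[μ] μ[Y | MeasurableSpace.comap X inferInstance])
    -- `σ²` is (a version of) the conditional variance `E[(Y - f*(X))² | X]`
    (hsigma2 : (fun ω => sigma2 (X ω)) =ᵐ[μ]
      μ[(fun ω => (Y ω - fstar (X ω)) ^ 2) | MeasurableSpace.comap X inferInstance])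
    (hIntStar : Integrable (fun ω => (Y ω - fstar (X ω)) ^ 2) μ)
    (lam : ℝ) (hlam : 0 ≤ lam)
    (f : Euc d → ℝ) (hf : Measurable f)
    (A : Set (Euc d)) (hA : MeasurableSet A)
    (hInt : Integrable (fun ω => (Y ω - f (X ω)) ^ 2) μ) :
    riskRO μ X Y lam fstar {x | sigma2 x ≤ lam} ≤ riskRO μ X Y lam f A := by
  classical
  have hm : MeasurableSpace.comap X inferInstance ≤ ‹MeasurableSpace Ω› := hX.comap_le
  haveI : SigmaFinite (μ.trim hm) := by infer_instance
  have hXm : Measurable[MeasurableSpace.comap X inferInstance] X :=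
    Measurable.of_comap_le le_rfl
  have ha_meas : AEStronglyMeasurable (fun ω => Y ω - fstar (X ω)) μ :=
    (hY.sub (hfstarMeas.comp hX)).aestronglyMeasurable
  have ha : Integrable (fun ω => Y ω - fstar (X ω)) μ := integrable_of_sq' ha_meas hIntStar
  have hYint : Integrable Y μ := integrable_of_sq' hY.aestronglyMeasurable hY2
  have hfX_int : Integrable (fun ω => fstar (X ω)) μ := integrable_condExp.congr hfstar.symm
  have hσX_int : Integrable (fun ω => sigma2 (X ω)) μ := integrable_condExp.congr hsigma2.symm
  -- conditional expectation of `Y - f*(X)` is 0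
  have hμa : μ[(fun ω => Y ω - fstar (X ω))|MeasurableSpace.comap X inferInstance] =ᵐ[μ] 0 := by
    have h2 : μ[(fun ω => Y ω - fstar (X ω))|MeasurableSpace.comap X inferInstance]
        =ᵐ[μ] μ[Y|MeasurableSpace.comap X inferInstance] - μ[fun ω => fstar (X ω)|MeasurableSpace.comap X inferInstance] := condExp_sub hYint hfX_int _
    have hfX_sm : StronglyMeasurable[MeasurableSpace.comap X inferInstance]
        (fun ω => fstar (X ω)) := (hfstarMeas.comp hXm).stronglyMeasurable
    have h3 : μ[fun ω => fstar (X ω)|MeasurableSpace.comap X inferInstance]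
        = fun ω => fstar (X ω) :=
      condExp_of_stronglyMeasurable hm hfX_sm hfX_int
    rw [h3] at h2
    filter_upwards [h2, hfstar] with ω h2 hf'
    simp only [Pi.sub_apply] at h2
    simp [h2, hf']
  -- the key decomposition of the quadratic term of the risk
  have main : ∀ (g : Euc d → ℝ), Measurable g →
      Integrable (fun ω => (Y ω - g (X ω)) ^ 2) μ → ∀ B : Set (Euc d), MeasurableSet B →
      (∫ ω, (Y ω - g (X ω)) ^ 2 * B.indicator (fun _ => (1 : ℝ)) (X ω) ∂μ)
        = (∫ ω, sigma2 (X ω) * B.indicator (fun _ => (1 : ℝ)) (X ω) ∂μ)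
          + ∫ ω, (fstar (X ω) - g (X ω)) ^ 2 * B.indicator (fun _ => (1 : ℝ)) (X ω) ∂μ := by
    intro g hg hIg B hB
    have hi01 : ∀ ω, B.indicator (fun _ => (1 : ℝ)) (X ω) = 0
        ∨ B.indicator (fun _ => (1 : ℝ)) (X ω) = 1 := by
      intro ω
      by_cases h : X ω ∈ B
      · right; simp [Set.indicator_of_mem h]
      · left; simp [Set.indicator_of_notMem h]
    have hi_bd : ∀ ω, 0 ≤ B.indicator (fun _ => (1 : ℝ)) (X ω)
        ∧ B.indicator (fun _ => (1 : ℝ)) (X ω) ≤ 1 := by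
      intro ω; rcases hi01 ω with h | h <;> simp [h]
    have hi_m : StronglyMeasurable[MeasurableSpace.comap X inferInstance] (fun ω => B.indicator (fun _ => (1 : ℝ)) (X ω)) :=
      ((measurable_const.indicator hB).comp hXm).stronglyMeasurable
    have hi_meas : AEStronglyMeasurable (fun ω => B.indicator (fun _ => (1 : ℝ)) (X ω)) μ :=
      (hi_m.mono hm).aestronglyMeasurable
    have hc_meas : AEStronglyMeasurable (fun ω => Y ω - g (X ω)) μ :=
      (hY.sub (hg.comp hX)).aestronglyMeasurable
    have hc : Integrable (fun ω => Y ω - g (X ω)) μ := integrable_of_sq' hc_meas hIg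
    -- b is the m-measurable factor of the cross term
    have hb_m : StronglyMeasurable[MeasurableSpace.comap X inferInstance]
        (fun ω => (fstar (X ω) - g (X ω)) * B.indicator (fun _ => (1 : ℝ)) (X ω)) :=
      (((hfstarMeas.sub hg).mul (measurable_const.indicator hB)).comp hXm).stronglyMeasurable
    have hb_meas : AEStronglyMeasurable
        (fun ω => (fstar (X ω) - g (X ω)) * B.indicator (fun _ => (1 : ℝ)) (X ω)) μ :=
      (hb_m.mono hm).aestronglyMeasurable
    have he_diff : ∀ ω, fstar (X ω) - g (X ω) = (Y ω - g (X ω)) - (Y ω - fstar (X ω)) := by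
      intro ω; ring
    have hsum_int : Integrable (fun ω => 2 * (Y ω - fstar (X ω)) ^ 2
        + 2 * (Y ω - g (X ω)) ^ 2) μ := (hIntStar.const_mul 2).add (hIg.const_mul 2)
    -- integrability of the pieces
    have hb2 : Integrable (fun ω =>
        ((fstar (X ω) - g (X ω)) * B.indicator (fun _ => (1 : ℝ)) (X ω)) ^ 2) μ := by
      refine hsum_int.mono' ((hb_meas.mul hb_meas).congr ?_) ?_
      · filter_upwards with ω; simp only [Pi.mul_apply]; ring
      · filter_upwards with ω
        rw [Real.norm_eq_abs, abs_of_nonneg (sq_nonneg _), he_diff ω]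
        rcases hi01 ω with h | h <;> rw [h] <;>
          nlinarith [sq_nonneg ((Y ω - g (X ω)) + (Y ω - fstar (X ω))),
            sq_nonneg ((Y ω - g (X ω)) - (Y ω - fstar (X ω)))]
    have hba : Integrable (fun ω =>
        ((fstar (X ω) - g (X ω)) * B.indicator (fun _ => (1 : ℝ)) (X ω))
          * (Y ω - fstar (X ω))) μ :=
      integrable_mul_of_sq' hb_meas ha_meas hb2 hIntStar
    have hai : Integrable (fun ω =>
        B.indicator (fun _ => (1 : ℝ)) (X ω) * (Y ω - fstar (X ω)) ^ 2) μ := by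
      refine hIntStar.mono' (hi_meas.mul ((ha_meas.mul ha_meas).congr
        (by filter_upwards with ω; simp only [Pi.mul_apply]; rw [← sq]))) ?_
      filter_upwards with ω
      have hib := hi_bd ω
      rw [Real.norm_eq_abs, abs_of_nonneg (mul_nonneg hib.1 (sq_nonneg _))]
      nlinarith [sq_nonneg (Y ω - fstar (X ω))]
    have hei : Integrable (fun ω =>
        (fstar (X ω) - g (X ω)) ^ 2 * B.indicator (fun _ => (1 : ℝ)) (X ω)) μ := by
      refine hsum_int.mono' (((((hfstarMeas.comp hX).sub (hg.comp hX)).pow_const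
        2).aestronglyMeasurable.mul hi_meas)) ?_
      filter_upwards with ω
      have hib := hi_bd ω
      rw [Real.norm_eq_abs, abs_of_nonneg (mul_nonneg (sq_nonneg _) hib.1), he_diff ω]
      nlinarith [sq_nonneg ((Y ω - g (X ω)) + (Y ω - fstar (X ω))),
        sq_nonneg ((Y ω - g (X ω)) - (Y ω - fstar (X ω))), (hi_bd ω).1, (hi_bd ω).2,
        sq_nonneg ((Y ω - g (X ω)) - (Y ω - fstar (X ω)))]
    -- the cross term vanishes
    have hcross : (∫ ω, ((fstar (X ω) - g (X ω)) * B.indicator (fun _ => (1 : ℝ)) (X ω))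
        * (Y ω - fstar (X ω)) ∂μ) = 0 := by
      have h1 : μ[(fun ω => ((fstar (X ω) - g (X ω)) * B.indicator (fun _ => (1 : ℝ)) (X ω))
            * (Y ω - fstar (X ω)))|MeasurableSpace.comap X inferInstance]
          =ᵐ[μ] fun ω => ((fstar (X ω) - g (X ω)) * B.indicator (fun _ => (1 : ℝ)) (X ω))
            * (μ[(fun ω => Y ω - fstar (X ω))|MeasurableSpace.comap X inferInstance]) ω :=
        condExp_mul_of_stronglyMeasurable_left hb_m hba ha
      calc (∫ ω, ((fstar (X ω) - g (X ω)) * B.indicator (fun _ => (1 : ℝ)) (X ω))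
            * (Y ω - fstar (X ω)) ∂μ)
          = ∫ ω, (μ[(fun ω => ((fstar (X ω) - g (X ω)) * B.indicator (fun _ => (1 : ℝ)) (X ω))
            * (Y ω - fstar (X ω)))|MeasurableSpace.comap X inferInstance]) ω ∂μ := (integral_condExp hm).symm
        _ = ∫ ω, ((fstar (X ω) - g (X ω)) * B.indicator (fun _ => (1 : ℝ)) (X ω))
            * (μ[(fun ω => Y ω - fstar (X ω))|MeasurableSpace.comap X inferInstance]) ω ∂μ := integral_congr_ae h1
        _ = ∫ ω, (0 : ℝ) ∂μ := integral_congr_ae (by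
            filter_upwards [hμa] with ω h; rw [h]; simp)
        _ = 0 := integral_zero _ _
    -- the conditional variance identity
    have hvar : (∫ ω, (Y ω - fstar (X ω)) ^ 2 * B.indicator (fun _ => (1 : ℝ)) (X ω) ∂μ)
        = ∫ ω, sigma2 (X ω) * B.indicator (fun _ => (1 : ℝ)) (X ω) ∂μ := by
      have h1 : μ[(fun ω => B.indicator (fun _ => (1 : ℝ)) (X ω) * (Y ω - fstar (X ω)) ^ 2)|MeasurableSpace.comap X inferInstance]
          =ᵐ[μ] fun ω => B.indicator (fun _ => (1 : ℝ)) (X ω)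
            * (μ[(fun ω => (Y ω - fstar (X ω)) ^ 2)|MeasurableSpace.comap X inferInstance]) ω :=
        condExp_mul_of_stronglyMeasurable_left hi_m hai hIntStar
      calc (∫ ω, (Y ω - fstar (X ω)) ^ 2 * B.indicator (fun _ => (1 : ℝ)) (X ω) ∂μ)
          = ∫ ω, B.indicator (fun _ => (1 : ℝ)) (X ω) * (Y ω - fstar (X ω)) ^ 2 ∂μ := by
            congr 1; funext ω; ring
        _ = ∫ ω, (μ[(fun ω => B.indicator (fun _ => (1 : ℝ)) (X ω)
            * (Y ω - fstar (X ω)) ^ 2)|MeasurableSpace.comap X inferInstance]) ω ∂μ := (integral_condExp hm).symm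
        _ = ∫ ω, B.indicator (fun _ => (1 : ℝ)) (X ω)
            * (μ[(fun ω => (Y ω - fstar (X ω)) ^ 2)|MeasurableSpace.comap X inferInstance]) ω ∂μ := integral_congr_ae h1
        _ = ∫ ω, B.indicator (fun _ => (1 : ℝ)) (X ω) * sigma2 (X ω) ∂μ :=
            integral_congr_ae (by filter_upwards [hsigma2] with ω h; rw [← h])
        _ = ∫ ω, sigma2 (X ω) * B.indicator (fun _ => (1 : ℝ)) (X ω) ∂μ := by
            congr 1; funext ω; ring
    -- pointwise decomposition and conclusion
    have hdecomp : (fun ω => (Y ω - g (X ω)) ^ 2 * B.indicator (fun _ => (1 : ℝ)) (X ω))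
        = fun ω => (Y ω - fstar (X ω)) ^ 2 * B.indicator (fun _ => (1 : ℝ)) (X ω)
          + (2 * (((fstar (X ω) - g (X ω)) * B.indicator (fun _ => (1 : ℝ)) (X ω))
              * (Y ω - fstar (X ω)))
            + (fstar (X ω) - g (X ω)) ^ 2 * B.indicator (fun _ => (1 : ℝ)) (X ω)) := by
      funext ω; ring
    have hfirst : Integrable (fun ω =>
        (Y ω - fstar (X ω)) ^ 2 * B.indicator (fun _ => (1 : ℝ)) (X ω)) μ := by
      refine hIntStar.mono' ((ha_meas.mul ha_meas).congr
        (by filter_upwards with ω; simp only [Pi.mul_apply]; rw [← sq]) |>.mul hi_meas) ?_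
      filter_upwards with ω
      have hib := hi_bd ω
      rw [Real.norm_eq_abs, abs_of_nonneg (mul_nonneg (sq_nonneg _) hib.1)]
      nlinarith [sq_nonneg (Y ω - fstar (X ω))]
    have h2a : Integrable (fun ω =>
        2 * (((fstar (X ω) - g (X ω)) * B.indicator (fun _ => (1 : ℝ)) (X ω))
          * (Y ω - fstar (X ω)))) μ := hba.const_mul 2
    have hsum2 : Integrable (fun ω =>
        2 * (((fstar (X ω) - g (X ω)) * B.indicator (fun _ => (1 : ℝ)) (X ω))
          * (Y ω - fstar (X ω)))
        + (fstar (X ω) - g (X ω)) ^ 2 * B.indicator (fun _ => (1 : ℝ)) (X ω)) μ :=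
      h2a.add hei
    rw [hdecomp, integral_add hfirst hsum2, integral_add h2a hei, integral_const_mul,
      hcross, hvar]
    ring
  -- integrability of the indicator-weighted functions
  have hind_int : ∀ B : Set (Euc d), MeasurableSet B →
      Integrable (fun ω => sigma2 (X ω) * B.indicator (fun _ => (1 : ℝ)) (X ω)
        + lam * Bᶜ.indicator (fun _ => (1 : ℝ)) (X ω)) μ := by
    intro B hB
    have h1 : Integrable (fun ω => sigma2 (X ω) * B.indicator (fun _ => (1 : ℝ)) (X ω)) μ := by
      refine hσX_int.abs.mono' (((hsigma2Meas.comp hX).mul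
        ((measurable_const.indicator hB).comp hX)).aestronglyMeasurable) ?_
      filter_upwards with ω
      rw [Real.norm_eq_abs, abs_mul]
      by_cases h : X ω ∈ B
      · simp [Set.indicator_of_mem h]
      · simp [Set.indicator_of_notMem h, abs_nonneg]
    have h2 : Integrable (fun ω => lam * Bᶜ.indicator (fun _ => (1 : ℝ)) (X ω)) μ := by
      refine (integrable_const |lam|).mono' ((measurable_const.mul
        ((measurable_const.indicator hB.compl).comp hX)).aestronglyMeasurable) ?_
      filter_upwards with ω
      rw [Real.norm_eq_abs, abs_mul]
      by_cases h : X ω ∈ Bᶜ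
      · simp [Set.indicator_of_mem h]
      · simp [Set.indicator_of_notMem h, abs_nonneg]
    exact h1.add h2
  -- the abstention term as an integral
  have lam_term : ∀ B : Set (Euc d), MeasurableSet B →
      lam * (μ {ω | X ω ∉ B}).toReal
        = ∫ ω, lam * Bᶜ.indicator (fun _ => (1 : ℝ)) (X ω) ∂μ := by
    intro B hB
    have h0 : ∀ ω, Bᶜ.indicator (fun _ => (1 : ℝ)) (X ω)
        = (X ⁻¹' Bᶜ).indicator (fun _ => (1 : ℝ)) ω := by
      intro ω
      by_cases h : X ω ∈ Bᶜ
      · rw [Set.indicator_of_mem h, Set.indicator_of_mem (Set.mem_preimage.mpr h)]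
      · rw [Set.indicator_of_notMem h,
          Set.indicator_of_notMem (fun hh => h (Set.mem_preimage.mp hh))]
    have h1 : (∫ ω, Bᶜ.indicator (fun _ => (1 : ℝ)) (X ω) ∂μ)
        = (μ (X ⁻¹' Bᶜ)).toReal := by
      simp_rw [h0]
      exact integral_indicator_one (hX hB.compl)
    have h2 : {ω | X ω ∉ B} = X ⁻¹' Bᶜ := rfl
    rw [integral_const_mul, h1, h2]
  -- risk of a general predictor dominates J(B)
  have risk_ge : ∀ (g : Euc d → ℝ), Measurable g →
      Integrable (fun ω => (Y ω - g (X ω)) ^ 2) μ → ∀ B : Set (Euc d), MeasurableSet B →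
      (∫ ω, sigma2 (X ω) * B.indicator (fun _ => (1 : ℝ)) (X ω)
        + lam * Bᶜ.indicator (fun _ => (1 : ℝ)) (X ω) ∂μ) ≤ riskRO μ X Y lam g B := by
    intro g hg hIg B hB
    have h0 := main g hg hIg B hB
    have h1 : Integrable (fun ω => sigma2 (X ω) * B.indicator (fun _ => (1 : ℝ)) (X ω)) μ := by
      refine hσX_int.abs.mono' (((hsigma2Meas.comp hX).mul
        ((measurable_const.indicator hB).comp hX)).aestronglyMeasurable) ?_
      filter_upwards with ω
      rw [Real.norm_eq_abs, abs_mul]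
      by_cases h : X ω ∈ B
      · simp [Set.indicator_of_mem h]
      · simp [Set.indicator_of_notMem h, abs_nonneg]
    have h2 : Integrable (fun ω => lam * Bᶜ.indicator (fun _ => (1 : ℝ)) (X ω)) μ := by
      refine (integrable_const |lam|).mono' ((measurable_const.mul
        ((measurable_const.indicator hB.compl).comp hX)).aestronglyMeasurable) ?_
      filter_upwards with ω
      rw [Real.norm_eq_abs, abs_mul]
      by_cases h : X ω ∈ Bᶜ
      · simp [Set.indicator_of_mem h]
      · simp [Set.indicator_of_notMem h, abs_nonneg]
    have hnn : 0 ≤ ∫ ω, (fstar (X ω) - g (X ω)) ^ 2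
        * B.indicator (fun _ => (1 : ℝ)) (X ω) ∂μ := by
      refine integral_nonneg fun ω => mul_nonneg (sq_nonneg _) ?_
      by_cases h : X ω ∈ B
      · simp [Set.indicator_of_mem h]
      · simp [Set.indicator_of_notMem h]
    rw [integral_add h1 h2]
    unfold riskRO
    rw [h0, lam_term B hB]
    linarith
  -- risk of the optimal predictor equals J(A_lam)
  set Alam : Set (Euc d) := {x | sigma2 x ≤ lam} with hAlam_def
  have hAlam : MeasurableSet Alam := measurableSet_le hsigma2Meas measurable_const
  have risk_eq : riskRO μ X Y lam fstar Alam
      = ∫ ω, sigma2 (X ω) * Alam.indicator (fun _ => (1 : ℝ)) (X ω)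
        + lam * Alamᶜ.indicator (fun _ => (1 : ℝ)) (X ω) ∂μ := by
    have h0 := main fstar hfstarMeas hIntStar Alam hAlam
    have hz : (∫ ω, (fstar (X ω) - fstar (X ω)) ^ 2
        * Alam.indicator (fun _ => (1 : ℝ)) (X ω) ∂μ) = 0 := by
      simp
    have h1 : Integrable (fun ω => sigma2 (X ω)
        * Alam.indicator (fun _ => (1 : ℝ)) (X ω)) μ := by
      refine hσX_int.abs.mono' (((hsigma2Meas.comp hX).mul
        ((measurable_const.indicator hAlam).comp hX)).aestronglyMeasurable) ?_
      filter_upwards with ω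
      rw [Real.norm_eq_abs, abs_mul]
      by_cases h : X ω ∈ Alam
      · simp [Set.indicator_of_mem h]
      · simp [Set.indicator_of_notMem h, abs_nonneg]
    have h2 : Integrable (fun ω => lam * Alamᶜ.indicator (fun _ => (1 : ℝ)) (X ω)) μ := by
      refine (integrable_const |lam|).mono' ((measurable_const.mul
        ((measurable_const.indicator hAlam.compl).comp hX)).aestronglyMeasurable) ?_
      filter_upwards with ω
      rw [Real.norm_eq_abs, abs_mul]
      by_cases h : X ω ∈ Alamᶜ
      · simp [Set.indicator_of_mem h]
      · simp [Set.indicator_of_notMem h, abs_nonneg]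
    rw [integral_add h1 h2]
    unfold riskRO
    rw [h0, hz, lam_term Alam hAlam]
    ring
  -- final comparison: J(A_lam) ≤ J(A)
  have hJ : (∫ ω, sigma2 (X ω) * Alam.indicator (fun _ => (1 : ℝ)) (X ω)
        + lam * Alamᶜ.indicator (fun _ => (1 : ℝ)) (X ω) ∂μ)
      ≤ ∫ ω, sigma2 (X ω) * A.indicator (fun _ => (1 : ℝ)) (X ω)
        + lam * Aᶜ.indicator (fun _ => (1 : ℝ)) (X ω) ∂μ := by
    refine integral_mono (hind_int Alam hAlam) (hind_int A hA) fun ω => ?_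
    by_cases h1 : X ω ∈ Alam <;> by_cases h2 : X ω ∈ A
    · simp [Set.indicator_of_mem h1, Set.indicator_of_mem h2,
        Set.indicator_of_notMem (Set.notMem_compl_iff.mpr h1),
        Set.indicator_of_notMem (Set.notMem_compl_iff.mpr h2)]
    · have hle : sigma2 (X ω) ≤ lam := h1
      simp only [Set.indicator_of_mem h1, Set.indicator_of_notMem h2,
        Set.indicator_of_notMem (Set.notMem_compl_iff.mpr h1),
        Set.indicator_of_mem (Set.mem_compl h2)]
      linarith
    · have hgt : lam < sigma2 (X ω) := lt_of_not_ge h1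
      simp only [Set.indicator_of_notMem h1, Set.indicator_of_mem h2,
        Set.indicator_of_mem (Set.mem_compl h1),
        Set.indicator_of_notMem (Set.notMem_compl_iff.mpr h2)]
      linarith
    · simp [Set.indicator_of_notMem h1, Set.indicator_of_notMem h2,
        Set.indicator_of_mem (Set.mem_compl h1), Set.indicator_of_mem (Set.mem_compl h2)]
  calc riskRO μ X Y lam fstar Alam
      = _ := risk_eq
    _ ≤ _ := hJ
    _ ≤ riskRO μ X Y lam f A := risk_ge f hf hInt A hA
end
end

section
/- For all 0 ≤ λ < λ' such that P(σ²(X) ≤ λ) > 0, the optimal predictors Γ*_λ = (f*, {x : σ²(x) ≤ λ}) and Γ*_{λ'} = (f*, {x : σ²(x) ≤ λ'}) satisfy Err(Γ*_λ) ≤ Err(Γ*_{λ'}) and r(Γ*_λ) ≥ r(Γ*_{λ'}). -/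
open MeasureTheory Set

noncomputable section

/-- Rejection rate `r(f, A) = P(X ∉ A)` of a predictor with reject option. -/
def rejRate {Ω : Type*} [MeasurableSpace Ω] (μ : Measure Ω) {d : ℕ}
    (X : Ω → Euc d) (A : Set (Euc d)) : ℝ :=
  (μ {ω | X ω ∉ A}).toReal

/-- Conditional error `Err(f, A) = E[(Y - f(X))² | X ∈ A]`. -/
def errRO {Ω : Type*} [MeasurableSpace Ω] (μ : Measure Ω) {d : ℕ}
    (X : Ω → Euc d) (Y : Ω → ℝ) (f : Euc d → ℝ) (A : Set (Euc d)) : ℝ :=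
  (∫ ω, (Y ω - f (X ω)) ^ 2 * A.indicator (fun _ => (1 : ℝ)) (X ω) ∂μ)
    / (μ {ω | X ω ∈ A}).toReal

/-- monotonicity of error and rejection rate of the optimal predictors
`Γ*_λ = (f*, {σ² ≤ λ})` in the rejection parameter `λ`. -/
theorem optimal_predictor_monotone
    {Ω : Type*} [MeasurableSpace Ω] (μ : Measure Ω) [IsProbabilityMeasure μ]
    {d : ℕ} (X : Ω → Euc d) (Y : Ω → ℝ)
    (hX : Measurable X) (hY : Measurable Y)
    (hY2 : Integrable (fun ω => (Y ω) ^ 2) μ)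
    (fstar sigma2 : Euc d → ℝ)
    (hfstarMeas : Measurable fstar) (hsigma2Meas : Measurable sigma2)
    (hfstar : (fun ω => fstar (X ω)) =ᵐ[μ] μ[Y | MeasurableSpace.comap X inferInstance])
    (hsigma2 : (fun ω => sigma2 (X ω)) =ᵐ[μ]
      μ[(fun ω => (Y ω - fstar (X ω)) ^ 2) | MeasurableSpace.comap X inferInstance])
    (hIntStar : Integrable (fun ω => (Y ω - fstar (X ω)) ^ 2) μ)
    (lam lam' : ℝ) (hlam : 0 ≤ lam) (hlt : lam < lam')
    (hpos : 0 < μ {ω | sigma2 (X ω) ≤ lam}) :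
    errRO μ X Y fstar {x | sigma2 x ≤ lam} ≤ errRO μ X Y fstar {x | sigma2 x ≤ lam'} ∧
      rejRate μ X {x | sigma2 x ≤ lam'} ≤ rejRate μ X {x | sigma2 x ≤ lam} := by
  classical
  have hm : MeasurableSpace.comap X inferInstance ≤ _ := hX.comap_le
  set g : Ω → ℝ := fun ω => (Y ω - fstar (X ω)) ^ 2 with hg
  set h : Ω → ℝ := fun ω => sigma2 (X ω) with hh
  set A : Set (Euc d) := {x | sigma2 x ≤ lam} with hA
  set A' : Set (Euc d) := {x | sigma2 x ≤ lam'} with hA'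
  have hAmeas : MeasurableSet A := measurableSet_le hsigma2Meas measurable_const
  have hA'meas : MeasurableSet A' := measurableSet_le hsigma2Meas measurable_const
  set S : Set Ω := X ⁻¹' A with hS
  set S' : Set Ω := X ⁻¹' A' with hS'
  have hSmeas : MeasurableSet S := hX hAmeas
  have hS'meas : MeasurableSet S' := hX hA'meas
  have hSS' : S ⊆ S' := fun ω hω => le_trans hω hlt.le
  have hhInt : Integrable h μ := integrable_condExp.congr hsigma2.symm
  -- rewrite the numerator integrals
  have key : ∀ (B : Set (Euc d)), MeasurableSet B →
      (∫ ω, g ω * B.indicator (fun _ => (1 : ℝ)) (X ω) ∂μ) = ∫ ω in X ⁻¹' B, h ω ∂μ := by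
    intro B hB
    have h1 : (∫ ω, g ω * B.indicator (fun _ => (1 : ℝ)) (X ω) ∂μ)
        = ∫ ω in X ⁻¹' B, g ω ∂μ := by
      rw [← integral_indicator (hX hB)]
      congr 1
      ext ω
      by_cases hω : X ω ∈ B <;> simp [Set.indicator, hω]
    have h2 : (∫ ω in X ⁻¹' B, g ω ∂μ) = ∫ ω in X ⁻¹' B, h ω ∂μ := by
      rw [← setIntegral_condExp hm hIntStar ⟨B, hB, rfl⟩]
      exact setIntegral_congr_ae (hX hB) (hsigma2.symm.mono fun ω hω _ => hω)
    rw [h1, h2]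
  -- notation for the quantities
  set D : Set Ω := S' \ S with hD
  have hDmeas : MeasurableSet D := hS'meas.diff hSmeas
  set p : ℝ := (μ S).toReal with hp_def
  set q : ℝ := (μ D).toReal with hq_def
  set a : ℝ := ∫ ω in S, h ω ∂μ with ha_def
  set b : ℝ := ∫ ω in D, h ω ∂μ with hb_def
  have hpS : 0 < μ S := hpos
  have hp : 0 < p := ENNReal.toReal_pos hpS.ne' (measure_ne_top μ S)
  have hq : 0 ≤ q := ENNReal.toReal_nonneg
  have hSunion : S' = S ∪ D := (Set.union_diff_cancel hSS').symm
  have hmeasSplit : (μ S').toReal = p + q := by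
    rw [hSunion, measure_union disjoint_sdiff_right hDmeas,
      ENNReal.toReal_add (measure_ne_top μ S) (measure_ne_top μ D)]
  have hintSplit : (∫ ω in S', h ω ∂μ) = a + b := by
    rw [hSunion, setIntegral_union disjoint_sdiff_right hDmeas
      hhInt.integrableOn hhInt.integrableOn]
  have ha_le : a ≤ lam * p := by
    calc a ≤ ∫ _ω in S, lam ∂μ := by
          refine setIntegral_mono_on hhInt.integrableOn (integrableOn_const ?_) hSmeas
            (fun ω hω => hω)
          exact measure_ne_top μ S
      _ = lam * p := by simp [hp_def, mul_comm, Measure.real]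
  have hb_ge : lam * q ≤ b := by
    calc lam * q = ∫ _ω in D, lam ∂μ := by simp [hq_def, mul_comm, Measure.real]
      _ ≤ b := by
          refine setIntegral_mono_on (integrableOn_const ?_) hhInt.integrableOn hDmeas
            (fun ω hω => ?_)
          · exact measure_ne_top μ D
          · exact le_of_not_ge hω.2
  constructor
  · -- error monotonicity
    have e1 : errRO μ X Y fstar A = a / p := by
      rw [errRO, key A hAmeas]; rfl
    have e2 : errRO μ X Y fstar A' = (a + b) / (p + q) := by
      rw [errRO, key A' hA'meas, hintSplit, show (μ {ω | X ω ∈ A'}).toReal = p + q from hmeasSplit]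
    rw [e1, e2]
    rw [div_le_div_iff₀ hp (by linarith)]
    nlinarith [mul_le_mul_of_nonneg_right ha_le hq, mul_le_mul_of_nonneg_left hb_ge hp.le]
  · -- rejection rate monotonicity
    have : {ω | X ω ∉ A'} ⊆ {ω | X ω ∉ A} := fun ω hω hmem => hω (hSS' hmem)
    exact ENNReal.toReal_mono (measure_ne_top μ _) (measure_mono this)
end
end

section
/- Assume the cdf F_{σ²} of σ²(X) is continuous. Fix ε ∈ (0,1) and set λ_ε = F_{σ²}^{-1}(1−ε). Then the predictor Γ*_{λ_ε} = (f*, {x : σ²(x) ≤ λ_ε}) solves the constrained problem with rejection budget ε: its rejection rate r(Γ*_{λ_ε}) equals exactly ε, and every predictor with reject option (f, A) with r(f,A) ≤ ε satisfies Err(f,A) ≥ Err(Γ*_{λ_ε}). -/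
open MeasureTheory Set
open Filter Topology

noncomputable section

private lemma level_avg_aux (C Ds Da lam p qs qa a b : ℝ)
    (hp : 0 ≤ p) (hqs : 0 ≤ qs) (hqa : 0 ≤ qa)
    (hasplit : p + qs = a) (hbsplit : p + qa = b) (hab : a ≤ b) (ha0 : 0 < a)
    (hC : C ≤ lam * p) (hDs : Ds ≤ lam * qs) (hDa : lam * qa ≤ Da) :
    (C + Ds) * b ≤ (C + Da) * a := by
  subst hasplit hbsplit
  nlinarith [mul_nonneg (by linarith : (0:ℝ) ≤ qa - qs) (by linarith : (0:ℝ) ≤ lam * p - C),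
    mul_le_mul_of_nonneg_right hDs (by linarith : (0:ℝ) ≤ p + qa),
    mul_le_mul_of_nonneg_right hDa (by linarith : (0:ℝ) ≤ p + qs)]

/-- with `λ_ε = F_{σ²}^{-1}(1-ε)`, the predictor `(f*, {σ² ≤ λ_ε})` has
rejection rate exactly `ε` and minimal error among predictors with rejection rate `≤ ε`. -/
theorem optimal_predictor_fixed_rejection_rate
    {Ω : Type*} [MeasurableSpace Ω] (μ : Measure Ω) [IsProbabilityMeasure μ]
    {d : ℕ} (X : Ω → Euc d) (Y : Ω → ℝ)
    (hX : Measurable X) (hY : Measurable Y)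
    (hY2 : Integrable (fun ω => (Y ω) ^ 2) μ)
    (fstar sigma2 : Euc d → ℝ)
    (hfstarMeas : Measurable fstar) (hsigma2Meas : Measurable sigma2)
    (hfstar : (fun ω => fstar (X ω)) =ᵐ[μ] μ[Y | MeasurableSpace.comap X inferInstance])
    (hsigma2 : (fun ω => sigma2 (X ω)) =ᵐ[μ]
      μ[(fun ω => (Y ω - fstar (X ω)) ^ 2) | MeasurableSpace.comap X inferInstance])
    (hIntStar : Integrable (fun ω => (Y ω - fstar (X ω)) ^ 2) μ)
    -- the cdf `F_{σ²}` of `σ²(X)` is continuous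
    (hFcont : Continuous fun t => (μ {ω | sigma2 (X ω) ≤ t}).toReal)
    (ε : ℝ) (hε : ε ∈ Set.Ioo (0 : ℝ) 1)
    (lamε : ℝ)
    (hlamε : lamε = sInf {t : ℝ | 1 - ε ≤ (μ {ω | sigma2 (X ω) ≤ t}).toReal}) :
    rejRate μ X {x | sigma2 x ≤ lamε} = ε ∧
      ∀ (f : Euc d → ℝ) (A : Set (Euc d)), Measurable f → MeasurableSet A →
        Integrable (fun ω => (Y ω - f (X ω)) ^ 2) μ →
        rejRate μ X A ≤ ε →
        errRO μ X Y fstar {x | sigma2 x ≤ lamε} ≤ errRO μ X Y f A := by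
  obtain ⟨hε0, hε1⟩ := hε
  have hm : MeasurableSpace.comap X inferInstance ≤ ‹MeasurableSpace Ω› := hX.comap_le
  set F : ℝ → ℝ := fun t => (μ {ω | sigma2 (X ω) ≤ t}).toReal with hF_def
  have hmeasset : ∀ t : ℝ, MeasurableSet {ω | sigma2 (X ω) ≤ t} := fun t =>
    (hsigma2Meas.comp hX) measurableSet_Iic
  have hFmono : Monotone F := fun s t hst =>
    ENNReal.toReal_mono (measure_ne_top μ _)
      (measure_mono fun ω h => le_trans h hst)
  -- the set defining lamε
  set T : Set ℝ := {t : ℝ | 1 - ε ≤ F t} with hT_def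
  have hT_closed : IsClosed T := isClosed_le continuous_const hFcont
  -- F tends to 1 at +infty
  have hF_top : Tendsto (fun n : ℕ => μ {ω | sigma2 (X ω) ≤ (n : ℝ)}) atTop
      (𝓝 (μ (⋃ n : ℕ, {ω | sigma2 (X ω) ≤ (n : ℝ)}))) :=
    tendsto_measure_iUnion_atTop (fun i j hij ω h => by
      simp only [Set.mem_setOf_eq] at *; exact le_trans h (Nat.cast_le.mpr hij))
  have hUnion : (⋃ n : ℕ, {ω | sigma2 (X ω) ≤ (n : ℝ)}) = Set.univ := by
    ext ω; simp only [Set.mem_iUnion, Set.mem_setOf_eq, Set.mem_univ, iff_true]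
    obtain ⟨n, hn⟩ := exists_nat_ge (sigma2 (X ω))
    exact ⟨n, hn⟩
  have hT_ne : T.Nonempty := by
    rw [hUnion] at hF_top
    have h1 : Tendsto (fun n : ℕ => F (n : ℝ)) atTop (𝓝 1) := by
      have := (ENNReal.tendsto_toReal (measure_ne_top μ Set.univ)).comp hF_top
      rw [measure_univ, ENNReal.toReal_one] at this; exact this
    have h2 : ∀ᶠ n : ℕ in atTop, 1 - ε ≤ F (n : ℝ) :=
      h1.eventually_const_le (by linarith)
    obtain ⟨n, hn⟩ := h2.exists
    exact ⟨(n : ℝ), hn⟩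
  -- F tends to 0 at -infty (gives a lower bound for T)
  have hF_bot : Tendsto (fun n : ℕ => μ {ω | sigma2 (X ω) ≤ -(n : ℝ)}) atTop
      (𝓝 (μ (⋂ n : ℕ, {ω | sigma2 (X ω) ≤ -(n : ℝ)}))) :=
    tendsto_measure_iInter_atTop (fun n => (hmeasset _).nullMeasurableSet)
      (fun i j hij ω h => by
        simp only [Set.mem_setOf_eq] at *; exact le_trans h (neg_le_neg (Nat.cast_le.mpr hij)))
      ⟨0, measure_ne_top μ _⟩
  have hInter : (⋂ n : ℕ, {ω | sigma2 (X ω) ≤ -(n : ℝ)}) = (∅ : Set Ω) := by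
    ext ω; simp only [Set.mem_iInter, Set.mem_setOf_eq, Set.mem_empty_iff_false, iff_false,
      not_forall, not_le]
    obtain ⟨n, hn⟩ := exists_nat_gt (-(sigma2 (X ω)))
    exact ⟨n, by linarith⟩
  have hT_bdd : BddBelow T := by
    rw [hInter] at hF_bot
    have h1 : Tendsto (fun n : ℕ => F (-(n : ℝ))) atTop (𝓝 0) := by
      have := (ENNReal.tendsto_toReal (by simp)).comp hF_bot
      rw [measure_empty, ENNReal.toReal_zero] at this; exact this
    have h2 : ∀ᶠ n : ℕ in atTop, F (-(n : ℝ)) < 1 - ε :=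
      h1.eventually_lt_const (by linarith)
    obtain ⟨n, hn⟩ := h2.exists
    refine ⟨-(n : ℝ), fun t ht => ?_⟩
    by_contra hlt
    push_neg at hlt
    exact absurd (le_trans ht (hFmono hlt.le)) (not_le.2 hn)
  have hmemT : lamε ∈ T := hlamε ▸ hT_closed.csInf_mem hT_ne hT_bdd
  have hFlam_ge : 1 - ε ≤ F lamε := hmemT
  have hFlam_le : F lamε ≤ 1 - ε := by
    have hlt : ∀ t : ℝ, t < lamε → F t < 1 - ε := by
      intro t ht
      by_contra h
      push_neg at h
      exact absurd (hlamε ▸ csInf_le hT_bdd h) (not_le.2 ht)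
    have htend : Tendsto (fun n : ℕ => F (lamε - 1 / (n + 1))) atTop (𝓝 (F lamε)) := by
      refine (hFcont.tendsto lamε).comp ?_
      have : Tendsto (fun n : ℕ => lamε - 1 / ((n : ℝ) + 1)) atTop (𝓝 (lamε - 0)) :=
        tendsto_const_nhds.sub tendsto_one_div_add_atTop_nhds_zero_nat
      simpa using this
    refine le_of_tendsto htend (Eventually.of_forall fun n => (hlt _ ?_).le)
    have : (0 : ℝ) < 1 / ((n : ℝ) + 1) := by positivity
    linarith
  have hFlam : F lamε = 1 - ε := le_antisymm hFlam_le hFlam_ge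
  -- rejection rate
  have hrejstar : rejRate μ X {x | sigma2 x ≤ lamε} = ε := by
    unfold rejRate
    have hset : {ω | X ω ∉ {x | sigma2 x ≤ lamε}} = {ω | sigma2 (X ω) ≤ lamε}ᶜ := rfl
    rw [hset, measure_compl (hmeasset lamε) (measure_ne_top μ _), measure_univ,
      ENNReal.toReal_sub_of_le prob_le_one ENNReal.one_ne_top]
    have : (μ {ω | sigma2 (X ω) ≤ lamε}).toReal = F lamε := rfl
    rw [this, hFlam, ENNReal.toReal_one]; ring
  refine ⟨hrejstar, ?_⟩
  intro f A hfMeas hA hIntf hrej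
  -- notation
  set Astar : Set (Euc d) := {x | sigma2 x ≤ lamε} with hAstar_def
  have hAstar : MeasurableSet Astar := hsigma2Meas measurableSet_Iic
  set S : Set Ω := X ⁻¹' A with hS_def
  set Sstar : Set Ω := X ⁻¹' Astar with hSstar_def
  have hS : MeasurableSet S := hX hA
  have hSstar : MeasurableSet Sstar := hX hAstar
  set g : Ω → ℝ := fun ω => sigma2 (X ω) with hg_def
  have hg_int : Integrable g μ := integrable_condExp.congr hsigma2.symm
  -- measures as reals
  set a : ℝ := (μ Sstar).toReal with ha_def
  set b : ℝ := (μ S).toReal with hb_def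
  have ha_eq : a = 1 - ε := hFlam
  have ha_pos : 0 < a := by rw [ha_eq]; linarith
  have hb_ge : 1 - ε ≤ b := by
    have h1 : rejRate μ X A = 1 - b := by
      unfold rejRate
      have hset : {ω | X ω ∉ A} = Sᶜ := rfl
      rw [hset, measure_compl hS (measure_ne_top μ _), measure_univ,
        ENNReal.toReal_sub_of_le prob_le_one ENNReal.one_ne_top]
      simp [hb_def]
    rw [h1] at hrej; linarith
  have hb_pos : 0 < b := lt_of_lt_of_le ha_pos (ha_eq ▸ hb_ge)
  -- integrability facts
  have hXm : @Measurable Ω (Euc d) (MeasurableSpace.comap X inferInstance) _ X :=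
    Measurable.of_comap_le le_rfl
  have hfstarX2 : Integrable (fun ω => (fstar (X ω)) ^ 2) μ := by
    refine Integrable.mono' ((hY2.const_mul 2).add (hIntStar.const_mul 2))
      (((hfstarMeas.comp hX).pow_const 2).aestronglyMeasurable)
      (Eventually.of_forall fun ω => ?_)
    rw [Real.norm_eq_abs, abs_of_nonneg (sq_nonneg _)]
    simp only [Pi.add_apply]
    nlinarith [sq_nonneg (Y ω + (Y ω - fstar (X ω)))]
  have hfX2 : Integrable (fun ω => (f (X ω)) ^ 2) μ := by
    refine Integrable.mono' ((hY2.const_mul 2).add (hIntf.const_mul 2))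
      (((hfMeas.comp hX).pow_const 2).aestronglyMeasurable)
      (Eventually.of_forall fun ω => ?_)
    rw [Real.norm_eq_abs, abs_of_nonneg (sq_nonneg _)]
    simp only [Pi.add_apply]
    nlinarith [sq_nonneg (Y ω + (Y ω - f (X ω)))]
  have hdiff2 : Integrable (fun ω => (fstar (X ω) - f (X ω)) ^ 2) μ := by
    refine Integrable.mono' ((hfstarX2.const_mul 2).add (hfX2.const_mul 2))
      ((((hfstarMeas.sub hfMeas).comp hX).pow_const 2).aestronglyMeasurable)
      (Eventually.of_forall fun ω => ?_)
    rw [Real.norm_eq_abs, abs_of_nonneg (sq_nonneg _)]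
    simp only [Pi.add_apply]
    nlinarith [sq_nonneg (fstar (X ω) + f (X ω))]
  have hY_int : Integrable Y μ := by
    refine Integrable.mono' (hY2.add (integrable_const 1)) hY.aestronglyMeasurable
      (Eventually.of_forall fun ω => ?_)
    rw [Real.norm_eq_abs]
    simp only [Pi.add_apply]
    nlinarith [sq_nonneg (|Y ω| - 1), sq_abs (Y ω), abs_nonneg (Y ω)]
  -- the weight function and orthogonality
  set w : Euc d → ℝ := fun x => (fstar x - f x) * A.indicator (fun _ => (1 : ℝ)) x with hw_def
  have hw : Measurable w :=
    (hfstarMeas.sub hfMeas).mul (measurable_const.indicator hA)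
  have hind_le : ∀ x : Euc d, |A.indicator (fun _ => (1 : ℝ)) x| ≤ 1 := by
    intro x; by_cases h : x ∈ A <;> simp [h]
  have hw_le : ∀ x, |w x| ≤ |fstar x - f x| := by
    intro x
    rw [hw_def]
    calc |(fstar x - f x) * A.indicator (fun _ => (1 : ℝ)) x|
        = |fstar x - f x| * |A.indicator (fun _ => (1 : ℝ)) x| := abs_mul _ _
      _ ≤ |fstar x - f x| * 1 := by
          exact mul_le_mul_of_nonneg_left (hind_le x) (abs_nonneg _)
      _ = |fstar x - f x| := mul_one _
  have hwY_int : Integrable (fun ω => w (X ω) * Y ω) μ := by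
    refine Integrable.mono' (hdiff2.add hY2)
      (((hw.comp hX).mul hY).aestronglyMeasurable)
      (Eventually.of_forall fun ω => ?_)
    rw [Real.norm_eq_abs, abs_mul]
    have h1 := hw_le (X ω)
    have h2 : |fstar (X ω) - f (X ω)| * |Y ω| ≤ (fstar (X ω) - f (X ω)) ^ 2 + (Y ω) ^ 2 := by
      nlinarith [sq_nonneg (|fstar (X ω) - f (X ω)| - |Y ω|), sq_abs (fstar (X ω) - f (X ω)),
        sq_abs (Y ω), abs_nonneg (fstar (X ω) - f (X ω)), abs_nonneg (Y ω)]
    calc |w (X ω)| * |Y ω| ≤ |fstar (X ω) - f (X ω)| * |Y ω| :=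
          mul_le_mul_of_nonneg_right h1 (abs_nonneg _)
      _ ≤ (fstar (X ω) - f (X ω)) ^ 2 + (Y ω) ^ 2 := h2
  have hwfstar_int : Integrable (fun ω => w (X ω) * fstar (X ω)) μ := by
    refine Integrable.mono' (hdiff2.add hfstarX2)
      (((hw.comp hX).mul (hfstarMeas.comp hX)).aestronglyMeasurable)
      (Eventually.of_forall fun ω => ?_)
    rw [Real.norm_eq_abs, abs_mul]
    have h1 := hw_le (X ω)
    have h2 : |fstar (X ω) - f (X ω)| * |fstar (X ω)| ≤
        (fstar (X ω) - f (X ω)) ^ 2 + (fstar (X ω)) ^ 2 := by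
      nlinarith [sq_nonneg (|fstar (X ω) - f (X ω)| - |fstar (X ω)|),
        sq_abs (fstar (X ω) - f (X ω)), sq_abs (fstar (X ω)),
        abs_nonneg (fstar (X ω) - f (X ω)), abs_nonneg (fstar (X ω))]
    calc |w (X ω)| * |fstar (X ω)| ≤ |fstar (X ω) - f (X ω)| * |fstar (X ω)| :=
          mul_le_mul_of_nonneg_right h1 (abs_nonneg _)
      _ ≤ (fstar (X ω) - f (X ω)) ^ 2 + (fstar (X ω)) ^ 2 := h2
  have hwXm : StronglyMeasurable[MeasurableSpace.comap X inferInstance]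
      (fun ω => w (X ω)) := (hw.comp hXm).stronglyMeasurable
  have horth : ∫ ω, w (X ω) * Y ω ∂μ = ∫ ω, w (X ω) * fstar (X ω) ∂μ := by
    have hpull := condExp_mul_of_stronglyMeasurable_left (μ := μ) hwXm hwY_int hY_int
    calc ∫ ω, w (X ω) * Y ω ∂μ
        = ∫ ω, (μ[(fun ω => w (X ω)) * Y|MeasurableSpace.comap X inferInstance]) ω ∂μ :=
          (integral_condExp hm).symm
      _ = ∫ ω, ((fun ω => w (X ω)) * μ[Y|MeasurableSpace.comap X inferInstance]) ω ∂μ :=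
          integral_congr_ae hpull
      _ = ∫ ω, w (X ω) * fstar (X ω) ∂μ := by
          refine integral_congr_ae ?_
          filter_upwards [hfstar] with ω hω
          simp [Pi.mul_apply, hω]
  -- numerator comparison: ∫ (Y-f)² 1_A(X) ≥ ∫ (Y-f*)² 1_A(X)
  set ind : Ω → ℝ := fun ω => A.indicator (fun _ => (1 : ℝ)) (X ω) with hind_def
  have hP_int : Integrable (fun ω => (Y ω - fstar (X ω)) ^ 2 * ind ω) μ := by
    refine Integrable.mono' hIntStar
      ((((hY.sub (hfstarMeas.comp hX)).pow_const 2).mul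
        ((measurable_const.indicator hA).comp hX)).aestronglyMeasurable)
      (Eventually.of_forall fun ω => ?_)
    rw [Real.norm_eq_abs, abs_mul, abs_of_nonneg (sq_nonneg _)]
    calc (Y ω - fstar (X ω)) ^ 2 * |ind ω| ≤ (Y ω - fstar (X ω)) ^ 2 * 1 :=
          mul_le_mul_of_nonneg_left (hind_le (X ω)) (sq_nonneg _)
      _ = (Y ω - fstar (X ω)) ^ 2 := mul_one _
  have hQ_int : Integrable (fun ω => (fstar (X ω) - f (X ω)) ^ 2 * ind ω) μ := by
    refine Integrable.mono' hdiff2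
      (((((hfstarMeas.sub hfMeas).comp hX).pow_const 2).mul
        ((measurable_const.indicator hA).comp hX)).aestronglyMeasurable)
      (Eventually.of_forall fun ω => ?_)
    rw [Real.norm_eq_abs, abs_mul, abs_of_nonneg (sq_nonneg _)]
    calc (fstar (X ω) - f (X ω)) ^ 2 * |ind ω| ≤ (fstar (X ω) - f (X ω)) ^ 2 * 1 :=
          mul_le_mul_of_nonneg_left (hind_le (X ω)) (sq_nonneg _)
      _ = (fstar (X ω) - f (X ω)) ^ 2 := mul_one _
  have hNsplit : ∫ ω, (Y ω - f (X ω)) ^ 2 * ind ω ∂μ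
      = (∫ ω, (Y ω - fstar (X ω)) ^ 2 * ind ω ∂μ)
        + (∫ ω, (fstar (X ω) - f (X ω)) ^ 2 * ind ω ∂μ)
        + 2 * ((∫ ω, w (X ω) * Y ω ∂μ) - ∫ ω, w (X ω) * fstar (X ω) ∂μ) := by
    have hid : ∀ ω, (Y ω - f (X ω)) ^ 2 * ind ω
        = (Y ω - fstar (X ω)) ^ 2 * ind ω + (fstar (X ω) - f (X ω)) ^ 2 * ind ω
          + 2 * (w (X ω) * Y ω - w (X ω) * fstar (X ω)) := by
      intro ω
      have hwX : w (X ω) = (fstar (X ω) - f (X ω)) * ind ω := rfl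
      rw [hwX]; ring
    have hPQ : Integrable (fun ω => (Y ω - fstar (X ω)) ^ 2 * ind ω
        + (fstar (X ω) - f (X ω)) ^ 2 * ind ω) μ := hP_int.add hQ_int
    have h2RT : Integrable (fun ω => 2 * (w (X ω) * Y ω - w (X ω) * fstar (X ω))) μ :=
      (hwY_int.sub hwfstar_int).const_mul 2
    rw [integral_congr_ae (Eventually.of_forall hid), integral_add hPQ h2RT,
      integral_add hP_int hQ_int, integral_const_mul, integral_sub hwY_int hwfstar_int]
  have hQ_nonneg : 0 ≤ ∫ ω, (fstar (X ω) - f (X ω)) ^ 2 * ind ω ∂μ := by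
    refine integral_nonneg fun ω => mul_nonneg (sq_nonneg _) ?_
    by_cases h : X ω ∈ A <;> simp [hind_def, h]
  have hN : ∫ ω, (Y ω - fstar (X ω)) ^ 2 * ind ω ∂μ ≤ ∫ ω, (Y ω - f (X ω)) ^ 2 * ind ω ∂μ := by
    rw [hNsplit, horth]; linarith
  -- conversion: ∫ (Y-f*)² 1_B(X) = ∫_{X⁻¹B} g
  have hconv : ∀ (B : Set (Euc d)), MeasurableSet B →
      (∫ ω, (Y ω - fstar (X ω)) ^ 2 * B.indicator (fun _ => (1 : ℝ)) (X ω) ∂μ)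
        = ∫ ω in X ⁻¹' B, g ω ∂μ := by
    intro B hB
    have h1 : (fun ω => (Y ω - fstar (X ω)) ^ 2 * B.indicator (fun _ => (1 : ℝ)) (X ω))
        = (X ⁻¹' B).indicator (fun ω => (Y ω - fstar (X ω)) ^ 2) := by
      funext ω; by_cases h : X ω ∈ B <;> simp [h]
    rw [h1, integral_indicator (hX hB),
      ← setIntegral_condExp hm hIntStar (⟨B, hB, rfl⟩ :
        MeasurableSet[MeasurableSpace.comap X inferInstance] (X ⁻¹' B))]
    exact integral_congr_ae (ae_restrict_of_ae hsigma2.symm)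
  -- level-set averaging
  set p : ℝ := (μ (Sstar ∩ S)).toReal with hp_def
  set qs : ℝ := (μ (Sstar \ S)).toReal with hqs_def
  set qa : ℝ := (μ (S \ Sstar)).toReal with hqa_def
  have hp0 : 0 ≤ p := ENNReal.toReal_nonneg
  have hqs0 : 0 ≤ qs := ENNReal.toReal_nonneg
  have hqa0 : 0 ≤ qa := ENNReal.toReal_nonneg
  have ha_split : p + qs = a := by
    rw [hp_def, hqs_def, ha_def, ← measure_inter_add_diff Sstar hS,
      ENNReal.toReal_add (measure_ne_top μ _) (measure_ne_top μ _)]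
  have hb_split : p + qa = b := by
    rw [hp_def, hqa_def, hb_def, ← measure_inter_add_diff S hSstar,
      ENNReal.toReal_add (measure_ne_top μ _) (measure_ne_top μ _), Set.inter_comm]
  have hg_le : ∀ ω ∈ Sstar, g ω ≤ lamε := fun ω h => h
  have hg_ge : ∀ ω ∈ S \ Sstar, lamε ≤ g ω := fun ω h => le_of_lt (not_le.1 h.2)
  have hC_le : ∫ ω in Sstar ∩ S, g ω ∂μ ≤ lamε * p := by
    have := setIntegral_mono_on hg_int.integrableOn
      integrableOn_const (hSstar.inter hS)
      (fun ω h => hg_le ω h.1)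
    exact (by simpa [mul_comm, setIntegral_const] using this : _ ≤ lamε * μ.real (Sstar ∩ S))
  have hDs_le : ∫ ω in Sstar \ S, g ω ∂μ ≤ lamε * qs := by
    have := setIntegral_mono_on hg_int.integrableOn
      integrableOn_const (hSstar.diff hS)
      (fun ω h => hg_le ω h.1)
    exact (by simpa [mul_comm, setIntegral_const] using this : _ ≤ lamε * μ.real (Sstar \ S))
  have hDa_ge : lamε * qa ≤ ∫ ω in S \ Sstar, g ω ∂μ := by
    have := setIntegral_mono_on
      integrableOn_const hg_int.integrableOn
      (hS.diff hSstar) hg_ge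
    exact (by simpa [mul_comm, setIntegral_const] using this : lamε * μ.real (S \ Sstar) ≤ _)
  have hIstar : ∫ ω in Sstar, g ω ∂μ
      = (∫ ω in Sstar ∩ S, g ω ∂μ) + ∫ ω in Sstar \ S, g ω ∂μ := by
    rw [← setIntegral_union (Set.disjoint_sdiff_right.mono_left Set.inter_subset_right)
      (hSstar.diff hS) hg_int.integrableOn hg_int.integrableOn,
      Set.inter_union_diff]
  have hIS : ∫ ω in S, g ω ∂μ
      = (∫ ω in Sstar ∩ S, g ω ∂μ) + ∫ ω in S \ Sstar, g ω ∂μ := by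
    rw [← setIntegral_union (Set.disjoint_sdiff_right.mono_left Set.inter_subset_left)
      (hS.diff hSstar) hg_int.integrableOn hg_int.integrableOn,
      Set.inter_comm, Set.inter_union_diff]
  -- put everything together
  have hkey : (∫ ω in Sstar, g ω ∂μ) / a ≤ (∫ ω in S, g ω ∂μ) / b := by
    rw [div_le_div_iff₀ ha_pos hb_pos, hIstar, hIS]
    exact level_avg_aux _ _ _ lamε p qs qa a b hp0 hqs0 hqa0 ha_split hb_split
      (ha_eq ▸ hb_ge) ha_pos hC_le hDs_le hDa_ge
  -- conclude
  unfold errRO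
  have he1 : {ω | X ω ∈ Astar} = Sstar := rfl
  have he2 : {ω | X ω ∈ A} = S := rfl
  rw [he1, he2, hconv Astar hAstar]
  calc (∫ ω in X ⁻¹' Astar, g ω ∂μ) / (μ Sstar).toReal
      ≤ (∫ ω in S, g ω ∂μ) / b := hkey
    _ ≤ (∫ ω, (Y ω - f (X ω)) ^ 2 * A.indicator (fun _ => (1 : ℝ)) (X ω) ∂μ) / b := by
        refine (div_le_div_iff_of_pos_right hb_pos).mpr ?_
        calc ∫ ω in S, g ω ∂μ
            = ∫ ω, (Y ω - fstar (X ω)) ^ 2 * A.indicator (fun _ => (1 : ℝ)) (X ω) ∂μ :=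
              (hconv A hA).symm
          _ ≤ _ := hN
    _ = _ := rfl
end
end

section
/- Fix ε ∈ (0,1) and let λ_ε = F_{σ²}^{-1}(1−ε) and A*_ε = {x : σ²(x) ≤ λ_ε}. For every predictor with reject option (f, A), the excess risk satisfies the exact identity E_ε(f,A) = E[(f*(X) − f(X))² 1{X ∈ A}] + E[|σ²(X) − λ_ε| 1{1{X ∈ A} ≠ 1{X ∈ A*_ε}}]. -/
open MeasureTheory Set

noncomputable section

/-- exact identity for the excess risk
`E_ε(f,A) = R_{λ_ε}(f,A) - R_{λ_ε}(f*, A*_ε)`. -/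
theorem excess_risk_identity
    {Ω : Type*} [MeasurableSpace Ω] (μ : Measure Ω) [IsProbabilityMeasure μ]
    {d : ℕ} (X : Ω → Euc d) (Y : Ω → ℝ)
    (hX : Measurable X) (hY : Measurable Y)
    (hY2 : Integrable (fun ω => (Y ω) ^ 2) μ)
    (fstar sigma2 : Euc d → ℝ)
    (hfstarMeas : Measurable fstar) (hsigma2Meas : Measurable sigma2)
    (hfstar : (fun ω => fstar (X ω)) =ᵐ[μ] μ[Y | MeasurableSpace.comap X inferInstance])
    (hsigma2 : (fun ω => sigma2 (X ω)) =ᵐ[μ]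
      μ[(fun ω => (Y ω - fstar (X ω)) ^ 2) | MeasurableSpace.comap X inferInstance])
    (hIntStar : Integrable (fun ω => (Y ω - fstar (X ω)) ^ 2) μ)
    (ε : ℝ) (hε : ε ∈ Set.Ioo (0 : ℝ) 1)
    (lamε : ℝ)
    (hlamε : lamε = sInf {t : ℝ | 1 - ε ≤ (μ {ω | sigma2 (X ω) ≤ t}).toReal})
    (f : Euc d → ℝ) (hf : Measurable f)
    (A : Set (Euc d)) (hA : MeasurableSet A)
    (hInt : Integrable (fun ω => (Y ω - f (X ω)) ^ 2) μ) :
    riskRO μ X Y lamε f A - riskRO μ X Y lamε fstar {x | sigma2 x ≤ lamε} =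
      (∫ ω, (fstar (X ω) - f (X ω)) ^ 2 * A.indicator (fun _ => (1 : ℝ)) (X ω) ∂μ)
        + ∫ ω, |sigma2 (X ω) - lamε| *
            Set.indicator {x | (x ∈ A) ≠ (x ∈ {x' | sigma2 x' ≤ lamε})}
              (fun _ => (1 : ℝ)) (X ω) ∂μ := by
  clear hlamε hε
  have hm : MeasurableSpace.comap X inferInstance ≤ ‹MeasurableSpace Ω› := hX.comap_le
  haveI : SigmaFinite (μ.trim hm) := inferInstance
  have hXm : Measurable[MeasurableSpace.comap X inferInstance] X := fun s hs => ⟨s, hs, rfl⟩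
  set Astar : Set (Euc d) := {x | sigma2 x ≤ lamε} with hAstar_def
  have hAstarMeas : MeasurableSet Astar := measurableSet_le hsigma2Meas measurable_const
  -- helper: rewrite products with indicators as indicators of preimages
  have hcomp : ∀ (B : Set (Euc d)) (F : Ω → ℝ),
      (fun ω => F ω * B.indicator (fun _ => (1 : ℝ)) (X ω)) = (X ⁻¹' B).indicator F := by
    intro B F
    funext ω
    by_cases h : X ω ∈ B <;> simp [h]
  -- basic integrabilities
  have hYint : Integrable Y μ := by
    refine (hY2.add (integrable_const 1)).mono' hY.aestronglyMeasurable ?_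
    filter_upwards with ω
    have := sq_abs (Y ω)
    rw [Real.norm_eq_abs]
    simp only [Pi.add_apply]
    nlinarith [sq_nonneg (|Y ω| - 1), abs_nonneg (Y ω)]
  have hfXint : Integrable (fun ω => fstar (X ω)) μ := integrable_condExp.congr hfstar.symm
  have hs2Int : Integrable (fun ω => sigma2 (X ω)) μ := integrable_condExp.congr hsigma2.symm
  have hgInt : Integrable (fun ω => Y ω - fstar (X ω)) μ := hYint.sub hfXint
  have hprod : ∀ (B : Set (Euc d)), MeasurableSet B → ∀ (F : Ω → ℝ), Integrable F μ →
      Integrable (fun ω => F ω * B.indicator (fun _ => (1 : ℝ)) (X ω)) μ := by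
    intro B hB F hFi
    rw [hcomp]
    exact hFi.indicator (hX hB)
  -- h² integrable
  have hH2 : Integrable (fun ω => (fstar (X ω) - f (X ω)) ^ 2) μ := by
    refine ((hInt.add hIntStar).const_mul 2).mono'
      (((hfstarMeas.comp hX).sub (hf.comp hX)).pow_const 2).aestronglyMeasurable ?_
    filter_upwards with ω
    rw [Real.norm_eq_abs, abs_of_nonneg (sq_nonneg _)]
    simp only [Pi.add_apply]
    nlinarith [sq_nonneg (Y ω - f (X ω) + (Y ω - fstar (X ω)))]
  -- cross term
  set k : Euc d → ℝ := fun x => (fstar x - f x) * A.indicator (fun _ => (1 : ℝ)) x with hk_def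
  have hkMeas : Measurable k := (hfstarMeas.sub hf).mul (measurable_const.indicator hA)
  have hkm : StronglyMeasurable[MeasurableSpace.comap X inferInstance]
      (fun ω => k (X ω)) := (hkMeas.comp hXm).stronglyMeasurable
  have hkabs : ∀ ω, |k (X ω)| ≤ |fstar (X ω) - f (X ω)| := by
    intro ω
    by_cases h : X ω ∈ A <;> simp [hk_def, h, abs_nonneg]
  have hcInt : Integrable ((fun ω => k (X ω)) * fun ω => Y ω - fstar (X ω)) μ := by
    refine ((hH2.add hIntStar).div_const 2).mono'
      (((hkMeas.comp hX).mul (hY.sub (hfstarMeas.comp hX))).aestronglyMeasurable) ?_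
    filter_upwards with ω
    rw [Pi.mul_apply, Real.norm_eq_abs, abs_mul, Pi.add_apply]
    have h1 := hkabs ω
    have h2 : |fstar (X ω) - f (X ω)| * |Y ω - fstar (X ω)| ≤
        ((fstar (X ω) - f (X ω)) ^ 2 + (Y ω - fstar (X ω)) ^ 2) / 2 := by
      nlinarith [sq_nonneg (|fstar (X ω) - f (X ω)| - |Y ω - fstar (X ω)|),
        sq_abs (fstar (X ω) - f (X ω)), sq_abs (Y ω - fstar (X ω))]
    nlinarith [abs_nonneg (Y ω - fstar (X ω)), abs_nonneg (fstar (X ω) - f (X ω)),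
      abs_nonneg (k (X ω))]
  have hg0 : μ[(fun ω => Y ω - fstar (X ω)) | MeasurableSpace.comap X inferInstance]
      =ᵐ[μ] 0 := by
    have hsub := condExp_sub (μ := μ) (m := MeasurableSpace.comap X inferInstance)
      (f := Y) (g := fun ω => fstar (X ω)) hYint hfXint
    have hself : μ[(fun ω => fstar (X ω)) | MeasurableSpace.comap X inferInstance]
        = fun ω => fstar (X ω) :=
      condExp_of_stronglyMeasurable hm
        (Measurable.stronglyMeasurable (hfstarMeas.comp hXm)) hfXint
    have hrfl : μ[(fun ω => Y ω - fstar (X ω)) | MeasurableSpace.comap X inferInstance]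
        = μ[(Y - fun ω => fstar (X ω)) | MeasurableSpace.comap X inferInstance] := rfl
    rw [hrfl]
    filter_upwards [hsub, hfstar] with ω h1 h2
    simp only [Pi.zero_apply]
    rw [h1, Pi.sub_apply, hself, ← h2]
    ring
  have hcross : ∫ ω, k (X ω) * (Y ω - fstar (X ω)) ∂μ = 0 := by
    have h1 := condExp_mul_of_stronglyMeasurable_left hkm hcInt hgInt
    have h2 : (fun ω => k (X ω) * (Y ω - fstar (X ω)))
        = ((fun ω => k (X ω)) * fun ω => Y ω - fstar (X ω)) := rfl
    have h3 : ((fun ω => k (X ω)) *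
        μ[(fun ω => Y ω - fstar (X ω)) | MeasurableSpace.comap X inferInstance])
        =ᵐ[μ] (fun _ => (0 : ℝ)) := by
      filter_upwards [hg0] with ω hω
      simp only [Pi.mul_apply]
      rw [hω]
      simp
    rw [h2, ← integral_condExp hm, integral_congr_ae h1, integral_congr_ae h3, integral_zero]
  -- conditional variance identity on measurable sets
  have hcv : ∀ (B : Set (Euc d)), MeasurableSet B →
      ∫ ω, (Y ω - fstar (X ω)) ^ 2 * B.indicator (fun _ => (1 : ℝ)) (X ω) ∂μ
        = ∫ ω, sigma2 (X ω) * B.indicator (fun _ => (1 : ℝ)) (X ω) ∂μ := by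
    intro B hB
    have hBm : MeasurableSet[MeasurableSpace.comap X inferInstance] (X ⁻¹' B) := ⟨B, hB, rfl⟩
    rw [hcomp, hcomp, integral_indicator (hX hB), integral_indicator (hX hB),
      ← setIntegral_condExp hm hIntStar hBm]
    exact setIntegral_congr_ae (hX hB) (hsigma2.mono fun ω h _ => h.symm)
  -- measures of rejection regions as integrals
  have hq : ∀ (B : Set (Euc d)), MeasurableSet B →
      (μ {ω | X ω ∉ B}).toReal = 1 - ∫ ω, B.indicator (fun _ => (1 : ℝ)) (X ω) ∂μ := by
    intro B hB
    have h1 : {ω | X ω ∉ B} = (X ⁻¹' B)ᶜ := rfl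
    have h2 : (fun ω => B.indicator (fun _ => (1 : ℝ)) (X ω))
        = (X ⁻¹' B).indicator (fun _ => (1 : ℝ)) := by
      have := hcomp B (fun _ => (1 : ℝ))
      simpa using this
    rw [h1, h2, integral_indicator_const (1 : ℝ) (hX hB), smul_eq_mul, mul_one,
      measure_compl (hX hB) (measure_ne_top μ _), measure_univ,
      ENNReal.toReal_sub_of_le prob_le_one ENNReal.one_ne_top]
    simp
    rfl
  have hIndInt : ∀ (B : Set (Euc d)), MeasurableSet B →
      Integrable (fun ω => B.indicator (fun _ => (1 : ℝ)) (X ω)) μ := by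
    intro B hB
    have h2 : (fun ω => B.indicator (fun _ => (1 : ℝ)) (X ω))
        = (X ⁻¹' B).indicator (fun _ => (1 : ℝ)) := by
      have := hcomp B (fun _ => (1 : ℝ)); simpa using this
    rw [h2]
    exact (integrable_const 1).indicator (hX hB)
  -- expansion of the first integral
  have hI1 : ∫ ω, (Y ω - f (X ω)) ^ 2 * A.indicator (fun _ => (1 : ℝ)) (X ω) ∂μ
      = (∫ ω, (Y ω - fstar (X ω)) ^ 2 * A.indicator (fun _ => (1 : ℝ)) (X ω) ∂μ)
        + (∫ ω, (fstar (X ω) - f (X ω)) ^ 2 * A.indicator (fun _ => (1 : ℝ)) (X ω) ∂μ) := by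
    have hpt : (fun ω => (Y ω - f (X ω)) ^ 2 * A.indicator (fun _ => (1 : ℝ)) (X ω))
        = fun ω => ((Y ω - fstar (X ω)) ^ 2 * A.indicator (fun _ => (1 : ℝ)) (X ω)
            + (fstar (X ω) - f (X ω)) ^ 2 * A.indicator (fun _ => (1 : ℝ)) (X ω))
            + 2 * (k (X ω) * (Y ω - fstar (X ω))) := by
      funext ω
      simp only [hk_def]
      ring
    have i12 : Integrable (fun ω => (Y ω - fstar (X ω)) ^ 2 * A.indicator (fun _ => (1 : ℝ)) (X ω)
        + (fstar (X ω) - f (X ω)) ^ 2 * A.indicator (fun _ => (1 : ℝ)) (X ω)) μ :=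
      (hprod A hA _ hIntStar).add (hprod A hA _ hH2)
    have i3 : Integrable (fun ω => 2 * (k (X ω) * (Y ω - fstar (X ω)))) μ := hcInt.const_mul 2
    rw [hpt, integral_add i12 i3,
      integral_add (hprod A hA _ hIntStar) (hprod A hA _ hH2),
      integral_const_mul 2 _, hcross]
    ring
  -- pointwise symmetric-difference identity
  have hpt2 : ∀ ω, (sigma2 (X ω) - lamε) *
        (A.indicator (fun _ => (1 : ℝ)) (X ω) - Astar.indicator (fun _ => (1 : ℝ)) (X ω))
      = |sigma2 (X ω) - lamε| *
          Set.indicator {x | (x ∈ A) ≠ (x ∈ {x' | sigma2 x' ≤ lamε})}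
            (fun _ => (1 : ℝ)) (X ω) := by
    intro ω
    by_cases hxA : X ω ∈ A <;> by_cases hxS : sigma2 (X ω) ≤ lamε
    · have hD : X ω ∉ {x | (x ∈ A) ≠ (x ∈ {x' | sigma2 x' ≤ lamε})} := by
        simp [hxA, hxS]
      simp [hAstar_def, hxA, hxS, Set.indicator_of_notMem hD]
    · have hD : X ω ∈ {x | (x ∈ A) ≠ (x ∈ {x' | sigma2 x' ≤ lamε})} := by
        simp [hxA, hxS]
      have hSt : Astar.indicator (fun _ => (1 : ℝ)) (X ω) = 0 :=
        Set.indicator_of_notMem (by simpa [hAstar_def] using hxS) _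
      rw [hSt, Set.indicator_of_mem hxA, Set.indicator_of_mem hD,
        abs_of_pos (by linarith [lt_of_not_ge hxS])]
      ring
    · have hD : X ω ∈ {x | (x ∈ A) ≠ (x ∈ {x' | sigma2 x' ≤ lamε})} := by
        simp [hxA, hxS]
      have hSt : Astar.indicator (fun _ => (1 : ℝ)) (X ω) = 1 :=
        Set.indicator_of_mem (by simpa [hAstar_def] using hxS) _
      rw [hSt, Set.indicator_of_notMem hxA, Set.indicator_of_mem hD,
        abs_of_nonpos (by linarith)]
      ring
    · have hD : X ω ∉ {x | (x ∈ A) ≠ (x ∈ {x' | sigma2 x' ≤ lamε})} := by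
        simp [hxA, hxS]
      have hSt : Astar.indicator (fun _ => (1 : ℝ)) (X ω) = 0 :=
        Set.indicator_of_notMem (by simpa [hAstar_def] using hxS) _
      rw [hSt, Set.indicator_of_notMem hxA, Set.indicator_of_notMem hD]
      ring
  -- combine the variance and measure terms
  have hfin : (∫ ω, sigma2 (X ω) * A.indicator (fun _ => (1 : ℝ)) (X ω) ∂μ)
      - (∫ ω, sigma2 (X ω) * Astar.indicator (fun _ => (1 : ℝ)) (X ω) ∂μ)
      - lamε * (∫ ω, A.indicator (fun _ => (1 : ℝ)) (X ω) ∂μ)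
      + lamε * (∫ ω, Astar.indicator (fun _ => (1 : ℝ)) (X ω) ∂μ)
      = ∫ ω, |sigma2 (X ω) - lamε| *
          Set.indicator {x | (x ∈ A) ≠ (x ∈ {x' | sigma2 x' ≤ lamε})}
            (fun _ => (1 : ℝ)) (X ω) ∂μ := by
    rw [← integral_congr_ae (Filter.Eventually.of_forall hpt2)]
    have hpt3 : (fun ω => (sigma2 (X ω) - lamε) *
          (A.indicator (fun _ => (1 : ℝ)) (X ω) - Astar.indicator (fun _ => (1 : ℝ)) (X ω)))
        = fun ω => (sigma2 (X ω) * A.indicator (fun _ => (1 : ℝ)) (X ω)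
            - sigma2 (X ω) * Astar.indicator (fun _ => (1 : ℝ)) (X ω))
          - (lamε * A.indicator (fun _ => (1 : ℝ)) (X ω)
            - lamε * Astar.indicator (fun _ => (1 : ℝ)) (X ω)) := by
      funext ω; ring
    have i1 : Integrable (fun ω => sigma2 (X ω) * A.indicator (fun _ => (1 : ℝ)) (X ω)
        - sigma2 (X ω) * Astar.indicator (fun _ => (1 : ℝ)) (X ω)) μ :=
      (hprod A hA _ hs2Int).sub (hprod Astar hAstarMeas _ hs2Int)
    have i2 : Integrable (fun ω => lamε * A.indicator (fun _ => (1 : ℝ)) (X ω)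
        - lamε * Astar.indicator (fun _ => (1 : ℝ)) (X ω)) μ :=
      ((hIndInt A hA).const_mul lamε).sub ((hIndInt Astar hAstarMeas).const_mul lamε)
    have i3 : Integrable (fun ω => lamε * A.indicator (fun _ => (1 : ℝ)) (X ω)) μ :=
      (hIndInt A hA).const_mul lamε
    have i4 : Integrable (fun ω => lamε * Astar.indicator (fun _ => (1 : ℝ)) (X ω)) μ :=
      (hIndInt Astar hAstarMeas).const_mul lamε
    rw [hpt3, integral_sub i1 i2,
      integral_sub (hprod A hA _ hs2Int) (hprod Astar hAstarMeas _ hs2Int),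
      integral_sub i3 i4, integral_const_mul lamε _, integral_const_mul lamε _]
    ring
  -- final assembly
  simp only [riskRO]
  rw [hI1, hcv A hA, hcv Astar hAstarMeas, hq A hA, hq Astar hAstarMeas]
  rw [← hfin]
  ring
end
end

section
/- Let ε ∈ (0,1). Assume σ² is bounded by M > 0 and F_{σ²} is continuous. Let g, s : ℝ^d → ℝ be measurable functions and suppose the cdf F_s(t) = P(s(X) ≤ t) is continuous. Set λ̃_ε = F_s^{-1}(1−ε) and let Γ̃ = (g, {x : s(x) ≤ λ̃_ε}). Then E_ε(Γ̃) ≤ E[(g(X) − f*(X))²] + E[|s(X) − σ²(X)|] + C·|F_s(λ_ε) − F_{σ²}(λ_ε)|, where C > 0 is a constant depending only on M and λ_ε (one may take C = M + λ_ε). -/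
open MeasureTheory Set

noncomputable section

open Filter Topology in
/-- For a continuous cdf, the generalized inverse hits the level exactly. -/
lemma cdf_quantile_eq {Ω : Type*} [MeasurableSpace Ω] (μ : Measure Ω) [IsProbabilityMeasure μ]
    (Z : Ω → ℝ) (hZ : Measurable Z)
    (hcont : Continuous fun t => (μ {ω | Z ω ≤ t}).toReal)
    (p : ℝ) (hp0 : 0 < p) (hp1 : p < 1) :
    (μ {ω | Z ω ≤ sInf {t : ℝ | p ≤ (μ {ω | Z ω ≤ t}).toReal}}).toReal = p := by
  set G : ℝ → ℝ := fun t => (μ {ω | Z ω ≤ t}).toReal with hG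
  have hmono : Monotone G := by
    intro a b hab
    exact ENNReal.toReal_mono (measure_ne_top _ _)
      (measure_mono (fun ω h => le_trans h hab))
  have hub : ∃ n : ℕ, p ≤ G n := by
    have hU : Tendsto (fun n : ℕ => μ {ω | Z ω ≤ (n : ℝ)}) atTop
        (𝓝 (μ (⋃ n : ℕ, {ω | Z ω ≤ (n : ℝ)}))) := by
      apply tendsto_measure_iUnion_atTop
      intro a b hab ω h
      simp only [mem_setOf_eq] at h ⊢
      exact le_trans h (by exact_mod_cast hab)
    have hUu : (⋃ n : ℕ, {ω | Z ω ≤ (n : ℝ)}) = univ := by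
      ext ω; simp only [mem_iUnion, mem_setOf_eq, mem_univ, iff_true]
      obtain ⟨n, hn⟩ := exists_nat_ge (Z ω)
      exact ⟨n, hn⟩
    rw [hUu, measure_univ] at hU
    have hU' : Tendsto (fun n : ℕ => G n) atTop (𝓝 1) := by
      have := (ENNReal.tendsto_toReal (by norm_num : (1:ENNReal) ≠ ⊤)).comp hU
      rw [ENNReal.toReal_one] at this; exact this
    have := hU'.eventually (eventually_ge_nhds (by linarith : p < 1))
    obtain ⟨n, hn⟩ := this.exists
    exact ⟨n, hn⟩
  have hlb : ∃ n : ℕ, G (-(n:ℝ)) < p := by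
    have hI : Tendsto (fun n : ℕ => μ {ω | Z ω ≤ -(n : ℝ)}) atTop
        (𝓝 (μ (⋂ n : ℕ, {ω | Z ω ≤ -(n : ℝ)}))) := by
      apply tendsto_measure_iInter_atTop
      · intro n; exact (measurableSet_le hZ measurable_const).nullMeasurableSet
      · intro a b hab ω h
        simp only [mem_setOf_eq] at h ⊢
        refine le_trans h (neg_le_neg ?_)
        exact_mod_cast hab
      · exact ⟨0, measure_ne_top _ _⟩
    have hIe : (⋂ n : ℕ, {ω | Z ω ≤ -(n : ℝ)}) = ∅ := by
      ext ω; simp only [mem_iInter, mem_setOf_eq, mem_empty_iff_false, iff_false, not_forall]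
      obtain ⟨n, hn⟩ := exists_nat_gt (-(Z ω))
      exact ⟨n, by push_neg; linarith⟩
    rw [hIe, measure_empty] at hI
    have hI' : Tendsto (fun n : ℕ => G (-(n:ℝ))) atTop (𝓝 0) := by
      have := (ENNReal.tendsto_toReal (by norm_num : (0:ENNReal) ≠ ⊤)).comp hI
      rw [ENNReal.toReal_zero] at this; exact this
    have := hI'.eventually (eventually_lt_nhds hp0)
    obtain ⟨n, hn⟩ := this.exists
    exact ⟨n, hn⟩
  obtain ⟨n₁, hn₁⟩ := hub
  obtain ⟨n₀, hn₀⟩ := hlb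
  set S : Set ℝ := {t : ℝ | p ≤ G t} with hS
  have hSne : S.Nonempty := ⟨n₁, hn₁⟩
  have hSbdd : BddBelow S := by
    refine ⟨-(n₀:ℝ), fun t ht => ?_⟩
    by_contra hlt
    push_neg at hlt
    exact absurd (le_trans ht (hmono hlt.le)) (not_le.mpr hn₀)
  have hSclosed : IsClosed S := IsClosed.preimage hcont isClosed_Ici
  have hmem : sInf S ∈ S := hSclosed.csInf_mem hSne hSbdd
  have hge : p ≤ G (sInf S) := hmem
  have hle : G (sInf S) ≤ p := by
    have htend : Tendsto G (𝓝[<] (sInf S)) (𝓝 (G (sInf S))) :=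
      (hcont.continuousAt).mono_left nhdsWithin_le_nhds
    refine le_of_tendsto htend ?_
    filter_upwards [self_mem_nhdsWithin] with t ht
    by_contra hc
    push_neg at hc
    exact absurd (csInf_le hSbdd hc.le) (not_le.mpr ht)
  exact le_antisymm hle hge

set_option maxHeartbeats 1000000 in
/-- excess-risk bound for a pseudo-oracle plug-in predictor built from
estimators `g` of `f*` and `s` of `σ²`, with constant `C = M + λ_ε`. -/
theorem excess_risk_pseudo_oracle_bound
    {Ω : Type*} [MeasurableSpace Ω] (μ : Measure Ω) [IsProbabilityMeasure μ]
    {d : ℕ} (X : Ω → Euc d) (Y : Ω → ℝ)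
    (hX : Measurable X) (hY : Measurable Y)
    (hY2 : Integrable (fun ω => (Y ω) ^ 2) μ)
    (fstar sigma2 : Euc d → ℝ)
    (hfstarMeas : Measurable fstar) (hsigma2Meas : Measurable sigma2)
    (hfstar : (fun ω => fstar (X ω)) =ᵐ[μ] μ[Y | MeasurableSpace.comap X inferInstance])
    (hsigma2 : (fun ω => sigma2 (X ω)) =ᵐ[μ]
      μ[(fun ω => (Y ω - fstar (X ω)) ^ 2) | MeasurableSpace.comap X inferInstance])
    (hIntStar : Integrable (fun ω => (Y ω - fstar (X ω)) ^ 2) μ)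
    (M : ℝ) (hM : 0 < M) (hsigma2Bdd : ∀ x, 0 ≤ sigma2 x ∧ sigma2 x ≤ M)
    -- the cdf `F_{σ²}` of `σ²(X)` is continuous
    (hFcont : Continuous fun t => (μ {ω | sigma2 (X ω) ≤ t}).toReal)
    (ε : ℝ) (hε : ε ∈ Set.Ioo (0 : ℝ) 1)
    (lamε : ℝ)
    (hlamε : lamε = sInf {t : ℝ | 1 - ε ≤ (μ {ω | sigma2 (X ω) ≤ t}).toReal})
    (g s : Euc d → ℝ) (hg : Measurable g) (hs : Measurable s)
    (hIntg : Integrable (fun ω => (Y ω - g (X ω)) ^ 2) μ)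
    (hInts : Integrable (fun ω => |s (X ω) - sigma2 (X ω)|) μ)
    -- the cdf `F_s` of `s(X)` is continuous
    (hFscont : Continuous fun t => (μ {ω | s (X ω) ≤ t}).toReal)
    (lamTilde : ℝ)
    (hlamTilde : lamTilde = sInf {t : ℝ | 1 - ε ≤ (μ {ω | s (X ω) ≤ t}).toReal}) :
    riskRO μ X Y lamε g {x | s x ≤ lamTilde}
        - riskRO μ X Y lamε fstar {x | sigma2 x ≤ lamε} ≤
      (∫ ω, (g (X ω) - fstar (X ω)) ^ 2 ∂μ)
        + (∫ ω, |s (X ω) - sigma2 (X ω)| ∂μ)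
        + (M + lamε) *
            |(μ {ω | s (X ω) ≤ lamε}).toReal - (μ {ω | sigma2 (X ω) ≤ lamε}).toReal| := by
  classical
  obtain ⟨hε0, hε1⟩ := hε
  -- abbreviations
  set At : Set (Euc d) := {x | s x ≤ lamTilde} with hAtdef
  set As : Set (Euc d) := {x | sigma2 x ≤ lamε} with hAsdef
  set B : Set (Euc d) := {x | s x ≤ lamε} with hBdef
  have hAt : MeasurableSet At := measurableSet_le hs measurable_const
  have hAs : MeasurableSet As := measurableSet_le hsigma2Meas measurable_const
  have hB : MeasurableSet B := measurableSet_le hs measurable_const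
  -- indicator basics
  have hiv : ∀ (A : Set (Euc d)) (x : Euc d),
      A.indicator (fun _ => (1:ℝ)) x = if x ∈ A then 1 else 0 := by
    intro A x; rw [Set.indicator_apply]
  have hind01 : ∀ (A : Set (Euc d)) (x : Euc d),
      0 ≤ A.indicator (fun _ => (1:ℝ)) x ∧ A.indicator (fun _ => (1:ℝ)) x ≤ 1 := by
    intro A x; rw [hiv]; split_ifs <;> norm_num
  -- integrability of bounded measurable functions
  have hIntBdd : ∀ (f : Ω → ℝ) (c : ℝ), Measurable f → (∀ ω, |f ω| ≤ c) →
      Integrable f μ := by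
    intro f c hf hb
    refine Integrable.mono' (integrable_const c) hf.aestronglyMeasurable ?_
    filter_upwards with ω
    rw [Real.norm_eq_abs]; exact hb ω
  -- integral of an indicator composed with X
  have hint_ind : ∀ (A : Set (Euc d)), MeasurableSet A →
      ∫ ω, A.indicator (fun _ => (1:ℝ)) (X ω) ∂μ = (μ (X ⁻¹' A)).toReal := by
    intro A hA
    have h1 : (fun ω => A.indicator (fun _ => (1:ℝ)) (X ω))
        = (X ⁻¹' A).indicator (fun _ => (1:ℝ)) := by
      funext ω; by_cases h : X ω ∈ A <;> simp [Set.indicator_apply, h]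
    rw [h1, integral_indicator_const (1:ℝ) (hX hA)]
    simp
    rfl
  -- complement probability
  have hcompl : ∀ (A : Set (Euc d)), MeasurableSet A →
      (μ {ω | X ω ∉ A}).toReal = 1 - (μ (X ⁻¹' A)).toReal := by
    intro A hA
    have h1 : {ω | X ω ∉ A} = (X ⁻¹' A)ᶜ := rfl
    rw [h1, measure_compl (hX hA) (measure_ne_top _ _), measure_univ,
      ENNReal.toReal_sub_of_le prob_le_one (by simp)]
    simp
  -- cdf values at the quantiles
  have hGl : (μ {ω | s (X ω) ≤ lamTilde}).toReal = 1 - ε := by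
    rw [hlamTilde]
    exact cdf_quantile_eq μ (fun ω => s (X ω)) (hs.comp hX) hFscont (1 - ε)
      (by linarith) (by linarith)
  have hFl : (μ {ω | sigma2 (X ω) ≤ lamε}).toReal = 1 - ε := by
    rw [hlamε]
    exact cdf_quantile_eq μ (fun ω => sigma2 (X ω)) (hsigma2Meas.comp hX) hFcont (1 - ε)
      (by linarith) (by linarith)
  -- bounds on lamε
  have hSlow : ∀ t ∈ {t : ℝ | 1 - ε ≤ (μ {ω | sigma2 (X ω) ≤ t}).toReal}, (0:ℝ) ≤ t := by
    intro t ht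
    by_contra hlt
    push_neg at hlt
    have hempty : {ω | sigma2 (X ω) ≤ t} = ∅ := by
      ext ω; simp only [mem_setOf_eq, mem_empty_iff_false, iff_false, not_le]
      exact lt_of_lt_of_le hlt (hsigma2Bdd (X ω)).1
    simp only [mem_setOf_eq, hempty, measure_empty, ENNReal.toReal_zero] at ht
    linarith
  have hMS : M ∈ {t : ℝ | 1 - ε ≤ (μ {ω | sigma2 (X ω) ≤ t}).toReal} := by
    have huniv : {ω | sigma2 (X ω) ≤ M} = univ := by
      ext ω; simp only [mem_setOf_eq, mem_univ, iff_true]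
      exact (hsigma2Bdd (X ω)).2
    simp only [mem_setOf_eq, huniv, measure_univ, ENNReal.toReal_one]
    linarith
  have hlam0 : 0 ≤ lamε := by
    rw [hlamε]; exact le_csInf ⟨M, hMS⟩ hSlow
  have hlamM : lamε ≤ M := by
    rw [hlamε]
    exact csInf_le ⟨0, hSlow⟩ hMS
  -- integrability facts
  have hYint : Integrable Y μ := by
    refine Integrable.mono' (hY2.add (integrable_const 1)) hY.aestronglyMeasurable ?_
    filter_upwards with ω
    rw [Real.norm_eq_abs, Pi.add_apply]
    nlinarith [sq_nonneg (Y ω), sq_nonneg (|Y ω| - 1), abs_nonneg (Y ω), sq_abs (Y ω)]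
  have hfXint : Integrable (fun ω => fstar (X ω)) μ :=
    (integrable_condExp).congr hfstar.symm
  have hgf2int : Integrable (fun ω => (g (X ω) - fstar (X ω)) ^ 2) μ := by
    refine Integrable.mono' ((hIntStar.const_mul 2).add (hIntg.const_mul 2))
      (((hg.comp hX).sub (hfstarMeas.comp hX)).pow_const 2).aestronglyMeasurable ?_
    filter_upwards with ω
    rw [Real.norm_eq_abs, Pi.add_apply, abs_of_nonneg (sq_nonneg _)]
    nlinarith [sq_nonneg (Y ω - fstar (X ω)), sq_nonneg (Y ω - g (X ω)),
      sq_nonneg ((Y ω - fstar (X ω)) + (Y ω - g (X ω)))]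
  -- product integrability for the cross term
  have hprodInt : ∀ (φ : Euc d → ℝ), Measurable φ →
      Integrable (fun ω => (φ (X ω)) ^ 2) μ →
      Integrable (fun ω => φ (X ω) * (Y ω - fstar (X ω))) μ := by
    intro φ hφ hφ2
    refine Integrable.mono' (hφ2.add hIntStar) ?_ ?_
    · exact ((hφ.comp hX).mul (hY.sub (hfstarMeas.comp hX))).aestronglyMeasurable
    · filter_upwards with ω
      rw [Real.norm_eq_abs, abs_mul, Pi.add_apply]
      nlinarith [sq_nonneg (|φ (X ω)| - |Y ω - fstar (X ω)|), sq_abs (φ (X ω)),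
        sq_abs (Y ω - fstar (X ω)), abs_nonneg (φ (X ω)), abs_nonneg (Y ω - fstar (X ω))]
  -- cross term vanishes
  have key_cross : ∀ (φ : Euc d → ℝ), Measurable φ →
      Integrable (fun ω => (φ (X ω)) ^ 2) μ →
      ∫ ω, φ (X ω) * (Y ω - fstar (X ω)) ∂μ = 0 := by
    intro φ hφ hφ2
    have hprod : Integrable ((fun ω => φ (X ω)) * (fun ω => Y ω - fstar (X ω))) μ :=
      hprodInt φ hφ hφ2
    have hYf : Integrable (fun ω => Y ω - fstar (X ω)) μ := hYint.sub hfXint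
    set m := MeasurableSpace.comap X inferInstance with hmdef
    have hm : m ≤ _ := hX.comap_le
    haveI : SigmaFinite (μ.trim hm) := by
      have : IsFiniteMeasure (μ.trim hm) := isFiniteMeasure_trim hm
      infer_instance
    have hXm : Measurable[m] X := fun t ht => ⟨t, ht, rfl⟩
    have hcompSM : ∀ (ψ : Euc d → ℝ), Measurable ψ →
        StronglyMeasurable[m] (fun ω => ψ (X ω)) :=
      fun ψ hψ => (hψ.comp hXm).stronglyMeasurable
    have hcond0 : μ[(fun ω => Y ω - fstar (X ω)) | m] =ᵐ[μ] 0 := by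
      have h1 : μ[(fun ω => Y ω - fstar (X ω)) | m] =ᵐ[μ]
          μ[Y | m] - μ[(fun ω => fstar (X ω)) | m] := condExp_sub hYint hfXint m
      have h2 : μ[(fun ω => fstar (X ω)) | m] = fun ω => fstar (X ω) :=
        condExp_of_stronglyMeasurable hm (hcompSM fstar hfstarMeas) hfXint
      filter_upwards [h1, hfstar] with ω hω hω2
      simp only [hω, h2, Pi.sub_apply, Pi.zero_apply, ← hω2]
      ring
    have h1 := condExp_mul_of_stronglyMeasurable_left (hcompSM φ hφ) hprod hYf
    calc ∫ ω, φ (X ω) * (Y ω - fstar (X ω)) ∂μ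
        = ∫ ω, (μ[(fun ω => φ (X ω)) * (fun ω => Y ω - fstar (X ω)) | m]) ω ∂μ :=
          (integral_condExp hm).symm
      _ = ∫ ω, ((fun ω => φ (X ω)) * μ[(fun ω => Y ω - fstar (X ω)) | m]) ω ∂μ :=
          integral_congr_ae h1
      _ = ∫ ω, (0:ℝ) ∂μ := by
          refine integral_congr_ae ?_
          filter_upwards [hcond0] with ω hω
          simp [hω]
      _ = 0 := integral_zero _ _
  -- variance identity
  have key_var : ∀ (A : Set (Euc d)), MeasurableSet A →
      ∫ ω, (Y ω - fstar (X ω)) ^ 2 * A.indicator (fun _ => (1:ℝ)) (X ω) ∂μ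
        = ∫ ω, sigma2 (X ω) * A.indicator (fun _ => (1:ℝ)) (X ω) ∂μ := by
    intro A hA
    have hprod : Integrable ((fun ω => A.indicator (fun _ => (1:ℝ)) (X ω)) *
        (fun ω => (Y ω - fstar (X ω)) ^ 2)) μ := by
      refine Integrable.mono' hIntStar ?_ ?_
      · exact (((measurable_const (a := (1:ℝ))).indicator hA).comp hX).aestronglyMeasurable.mul
          hIntStar.aestronglyMeasurable
      · filter_upwards with ω
        rw [Pi.mul_apply, Real.norm_eq_abs, abs_mul,
          abs_of_nonneg (sq_nonneg (Y ω - fstar (X ω)))]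
        calc |A.indicator (fun _ => (1:ℝ)) (X ω)| * (Y ω - fstar (X ω)) ^ 2
            ≤ 1 * (Y ω - fstar (X ω)) ^ 2 := by
              refine mul_le_mul_of_nonneg_right ?_ (sq_nonneg _)
              rw [abs_of_nonneg (hind01 A (X ω)).1]; exact (hind01 A (X ω)).2
          _ = (Y ω - fstar (X ω)) ^ 2 := one_mul _
    set m := MeasurableSpace.comap X inferInstance with hmdef
    have hm : m ≤ _ := hX.comap_le
    haveI : SigmaFinite (μ.trim hm) := by
      have : IsFiniteMeasure (μ.trim hm) := isFiniteMeasure_trim hm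
      infer_instance
    have hXm : Measurable[m] X := fun t ht => ⟨t, ht, rfl⟩
    have hindm : StronglyMeasurable[m] (fun ω => A.indicator (fun _ => (1:ℝ)) (X ω)) :=
      (((measurable_const (a := (1:ℝ))).indicator hA).comp hXm).stronglyMeasurable
    have h1 := condExp_mul_of_stronglyMeasurable_left hindm hprod hIntStar
    calc ∫ ω, (Y ω - fstar (X ω)) ^ 2 * A.indicator (fun _ => (1:ℝ)) (X ω) ∂μ
        = ∫ ω, ((fun ω => A.indicator (fun _ => (1:ℝ)) (X ω)) *
            (fun ω => (Y ω - fstar (X ω)) ^ 2)) ω ∂μ := by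
          refine integral_congr_ae (Filter.Eventually.of_forall fun ω => ?_)
          simp [mul_comm]
      _ = ∫ ω, (μ[(fun ω => A.indicator (fun _ => (1:ℝ)) (X ω)) *
            (fun ω => (Y ω - fstar (X ω)) ^ 2) | m]) ω ∂μ := (integral_condExp hm).symm
      _ = ∫ ω, ((fun ω => A.indicator (fun _ => (1:ℝ)) (X ω)) *
            μ[(fun ω => (Y ω - fstar (X ω)) ^ 2) | m]) ω ∂μ := integral_congr_ae h1
      _ = ∫ ω, sigma2 (X ω) * A.indicator (fun _ => (1:ℝ)) (X ω) ∂μ := by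
          refine integral_congr_ae ?_
          filter_upwards [hsigma2] with ω hω
          simp only [Pi.mul_apply, ← hω]
          ring
  -- shorthand for the two cdf values at lamε
  set cF : ℝ := (μ {ω | sigma2 (X ω) ≤ lamε}).toReal with hcFdef
  set cG : ℝ := (μ {ω | s (X ω) ≤ lamε}).toReal with hcGdef
  -- more integrability
  have hIntMulInd : ∀ (f : Ω → ℝ), Integrable f μ → Measurable f →
      ∀ (A : Set (Euc d)), MeasurableSet A →
      Integrable (fun ω => f ω * A.indicator (fun _ => (1:ℝ)) (X ω)) μ := by
    intro f hf hfm A hA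
    refine hf.abs.mono' (hfm.mul
      (((measurable_const (a := (1:ℝ))).indicator hA).comp hX)).aestronglyMeasurable ?_
    filter_upwards with ω
    rw [Real.norm_eq_abs, abs_mul]
    calc |f ω| * |A.indicator (fun _ => (1:ℝ)) (X ω)|
        ≤ |f ω| * 1 := by
          refine mul_le_mul_of_nonneg_left ?_ (abs_nonneg _)
          rw [abs_of_nonneg (hind01 A (X ω)).1]; exact (hind01 A (X ω)).2
      _ = |f ω| := mul_one _
  have hσXint : Integrable (fun ω => sigma2 (X ω)) μ := by
    refine hIntBdd _ M (hsigma2Meas.comp hX) fun ω => ?_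
    rw [abs_of_nonneg (hsigma2Bdd (X ω)).1]; exact (hsigma2Bdd (X ω)).2
  have hindMeas : ∀ (A : Set (Euc d)), MeasurableSet A →
      Measurable (fun ω => A.indicator (fun _ => (1:ℝ)) (X ω)) :=
    fun A hA => ((measurable_const (a := (1:ℝ))).indicator hA).comp hX
  have hintiA : ∀ (A : Set (Euc d)), MeasurableSet A →
      Integrable (fun ω => A.indicator (fun _ => (1:ℝ)) (X ω)) μ := by
    intro A hA
    refine hIntBdd _ 1 (hindMeas A hA) fun ω => ?_
    rw [abs_of_nonneg (hind01 A (X ω)).1]; exact (hind01 A (X ω)).2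
  -- indicator integrals
  have hiAt_int : ∫ ω, At.indicator (fun _ => (1:ℝ)) (X ω) ∂μ = 1 - ε := by
    rw [hint_ind At hAt]
    exact hGl
  have hiAs_int : ∫ ω, As.indicator (fun _ => (1:ℝ)) (X ω) ∂μ = 1 - ε := by
    rw [hint_ind As hAs]
    exact hFl
  -- risk formulas
  have hriskg : riskRO μ X Y lamε g At
      = (∫ ω, (Y ω - g (X ω)) ^ 2 * At.indicator (fun _ => (1:ℝ)) (X ω) ∂μ) + lamε * ε := by
    simp only [riskRO]
    rw [hcompl At hAt]
    have h1 : X ⁻¹' At = {ω | s (X ω) ≤ lamTilde} := rfl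
    rw [h1, hGl]; ring
  have hriskf : riskRO μ X Y lamε fstar As
      = (∫ ω, sigma2 (X ω) * As.indicator (fun _ => (1:ℝ)) (X ω) ∂μ) + lamε * ε := by
    simp only [riskRO]
    rw [key_var As hAs, hcompl As hAs]
    have h1 : X ⁻¹' As = {ω | sigma2 (X ω) ≤ lamε} := rfl
    rw [h1]
    rw [← hcFdef, hFl]; ring
  -- decomposition of the first risk integral
  have hφm : Measurable (fun x => (fstar x - g x) * At.indicator (fun _ => (1:ℝ)) x) :=
    (hfstarMeas.sub hg).mul ((measurable_const (a := (1:ℝ))).indicator hAt)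
  have hφ2 : Integrable (fun ω =>
      ((fstar (X ω) - g (X ω)) * At.indicator (fun _ => (1:ℝ)) (X ω)) ^ 2) μ := by
    refine hgf2int.mono' ((hφm.comp hX).pow_const 2).aestronglyMeasurable ?_
    filter_upwards with ω
    rw [Real.norm_eq_abs, abs_of_nonneg (sq_nonneg _)]
    have h1 := (hind01 At (X ω)).1
    have h2 := (hind01 At (X ω)).2
    nlinarith [mul_nonneg (mul_nonneg (sq_nonneg (fstar (X ω) - g (X ω))) h1)
        (sub_nonneg.mpr h2),
      mul_nonneg (sq_nonneg (fstar (X ω) - g (X ω))) (sub_nonneg.mpr h2)]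
  have hcross := key_cross (fun x => (fstar x - g x) * At.indicator (fun _ => (1:ℝ)) x) hφm hφ2
  have hYf2iAt : Integrable
      (fun ω => (Y ω - fstar (X ω)) ^ 2 * At.indicator (fun _ => (1:ℝ)) (X ω)) μ :=
    hIntMulInd _ hIntStar ((hY.sub (hfstarMeas.comp hX)).pow_const 2) At hAt
  have hgf2iAt : Integrable
      (fun ω => (g (X ω) - fstar (X ω)) ^ 2 * At.indicator (fun _ => (1:ℝ)) (X ω)) μ :=
    hIntMulInd _ hgf2int (((hg.comp hX).sub (hfstarMeas.comp hX)).pow_const 2) At hAt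
  have hcrossInt : Integrable (fun ω =>
      ((fstar (X ω) - g (X ω)) * At.indicator (fun _ => (1:ℝ)) (X ω))
        * (Y ω - fstar (X ω))) μ :=
    hprodInt _ hφm hφ2
  have hI1 : ∫ ω, (Y ω - g (X ω)) ^ 2 * At.indicator (fun _ => (1:ℝ)) (X ω) ∂μ
      = (∫ ω, (Y ω - fstar (X ω)) ^ 2 * At.indicator (fun _ => (1:ℝ)) (X ω) ∂μ)
        + (∫ ω, (g (X ω) - fstar (X ω)) ^ 2 * At.indicator (fun _ => (1:ℝ)) (X ω) ∂μ) := by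
    have hpt : ∀ ω, (Y ω - g (X ω)) ^ 2 * At.indicator (fun _ => (1:ℝ)) (X ω)
        = ((Y ω - fstar (X ω)) ^ 2 * At.indicator (fun _ => (1:ℝ)) (X ω)
            + (g (X ω) - fstar (X ω)) ^ 2 * At.indicator (fun _ => (1:ℝ)) (X ω))
          + 2 * (((fstar (X ω) - g (X ω)) * At.indicator (fun _ => (1:ℝ)) (X ω))
            * (Y ω - fstar (X ω))) := by
      intro ω; ring
    have e1 : ∫ ω, ((Y ω - fstar (X ω)) ^ 2 * At.indicator (fun _ => (1:ℝ)) (X ω)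
          + (g (X ω) - fstar (X ω)) ^ 2 * At.indicator (fun _ => (1:ℝ)) (X ω))
          + 2 * (((fstar (X ω) - g (X ω)) * At.indicator (fun _ => (1:ℝ)) (X ω))
            * (Y ω - fstar (X ω))) ∂μ
        = (∫ ω, (Y ω - fstar (X ω)) ^ 2 * At.indicator (fun _ => (1:ℝ)) (X ω)
            + (g (X ω) - fstar (X ω)) ^ 2 * At.indicator (fun _ => (1:ℝ)) (X ω) ∂μ)
          + ∫ ω, 2 * (((fstar (X ω) - g (X ω)) * At.indicator (fun _ => (1:ℝ)) (X ω))
            * (Y ω - fstar (X ω))) ∂μ :=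
      integral_add (hYf2iAt.add hgf2iAt) (hcrossInt.const_mul 2)
    have e2 : ∫ ω, (Y ω - fstar (X ω)) ^ 2 * At.indicator (fun _ => (1:ℝ)) (X ω)
          + (g (X ω) - fstar (X ω)) ^ 2 * At.indicator (fun _ => (1:ℝ)) (X ω) ∂μ
        = (∫ ω, (Y ω - fstar (X ω)) ^ 2 * At.indicator (fun _ => (1:ℝ)) (X ω) ∂μ)
          + ∫ ω, (g (X ω) - fstar (X ω)) ^ 2 * At.indicator (fun _ => (1:ℝ)) (X ω) ∂μ :=
      integral_add hYf2iAt hgf2iAt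
    rw [integral_congr_ae (Filter.Eventually.of_forall hpt), e1, e2, integral_const_mul, hcross]
    ring
  -- J difference as a single integral
  have hσiA : ∀ (A : Set (Euc d)), MeasurableSet A →
      Integrable (fun ω => sigma2 (X ω) * A.indicator (fun _ => (1:ℝ)) (X ω)) μ :=
    fun A hA => hIntMulInd _ hσXint (hsigma2Meas.comp hX) A hA
  have hJ : (∫ ω, sigma2 (X ω) * At.indicator (fun _ => (1:ℝ)) (X ω) ∂μ)
      - (∫ ω, sigma2 (X ω) * As.indicator (fun _ => (1:ℝ)) (X ω) ∂μ)
      = ∫ ω, (sigma2 (X ω) - lamε)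
          * (At.indicator (fun _ => (1:ℝ)) (X ω) - As.indicator (fun _ => (1:ℝ)) (X ω)) ∂μ := by
    have hpt : ∀ ω, (sigma2 (X ω) - lamε)
        * (At.indicator (fun _ => (1:ℝ)) (X ω) - As.indicator (fun _ => (1:ℝ)) (X ω))
        = (sigma2 (X ω) * At.indicator (fun _ => (1:ℝ)) (X ω)
            - sigma2 (X ω) * As.indicator (fun _ => (1:ℝ)) (X ω))
          - (lamε * At.indicator (fun _ => (1:ℝ)) (X ω)
            - lamε * As.indicator (fun _ => (1:ℝ)) (X ω)) := by
      intro ω; ring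
    have e1 : ∫ ω, (sigma2 (X ω) * At.indicator (fun _ => (1:ℝ)) (X ω)
          - sigma2 (X ω) * As.indicator (fun _ => (1:ℝ)) (X ω))
          - (lamε * At.indicator (fun _ => (1:ℝ)) (X ω)
            - lamε * As.indicator (fun _ => (1:ℝ)) (X ω)) ∂μ
        = (∫ ω, sigma2 (X ω) * At.indicator (fun _ => (1:ℝ)) (X ω)
            - sigma2 (X ω) * As.indicator (fun _ => (1:ℝ)) (X ω) ∂μ)
          - ∫ ω, lamε * At.indicator (fun _ => (1:ℝ)) (X ω)
            - lamε * As.indicator (fun _ => (1:ℝ)) (X ω) ∂μ :=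
      integral_sub ((hσiA At hAt).sub (hσiA As hAs))
        (((hintiA At hAt).const_mul lamε).sub ((hintiA As hAs).const_mul lamε))
    have e2 : ∫ ω, sigma2 (X ω) * At.indicator (fun _ => (1:ℝ)) (X ω)
          - sigma2 (X ω) * As.indicator (fun _ => (1:ℝ)) (X ω) ∂μ
        = (∫ ω, sigma2 (X ω) * At.indicator (fun _ => (1:ℝ)) (X ω) ∂μ)
          - ∫ ω, sigma2 (X ω) * As.indicator (fun _ => (1:ℝ)) (X ω) ∂μ :=
      integral_sub (hσiA At hAt) (hσiA As hAs)
    have e3 : ∫ ω, lamε * At.indicator (fun _ => (1:ℝ)) (X ω)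
          - lamε * As.indicator (fun _ => (1:ℝ)) (X ω) ∂μ
        = (∫ ω, lamε * At.indicator (fun _ => (1:ℝ)) (X ω) ∂μ)
          - ∫ ω, lamε * As.indicator (fun _ => (1:ℝ)) (X ω) ∂μ :=
      integral_sub ((hintiA At hAt).const_mul lamε) ((hintiA As hAs).const_mul lamε)
    rw [integral_congr_ae (Filter.Eventually.of_forall hpt), e1, e2, e3,
      integral_const_mul, integral_const_mul, hiAt_int, hiAs_int]
    ring
  -- split into the two comparison terms
  have hint1 : Integrable (fun ω => (sigma2 (X ω) - lamε)
      * (At.indicator (fun _ => (1:ℝ)) (X ω) - B.indicator (fun _ => (1:ℝ)) (X ω))) μ := by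
    refine hIntBdd _ M (((hsigma2Meas.comp hX).sub measurable_const).mul
      ((hindMeas At hAt).sub (hindMeas B hB))) fun ω => ?_
    rw [abs_mul]
    have h1 := (hind01 At (X ω)).1; have h2 := (hind01 At (X ω)).2
    have h3 := (hind01 B (X ω)).1; have h4 := (hind01 B (X ω)).2
    have h5 := (hsigma2Bdd (X ω)).1; have h6 := (hsigma2Bdd (X ω)).2
    have ha : |sigma2 (X ω) - lamε| ≤ M := abs_le.mpr ⟨by linarith, by linarith⟩
    have hb : |At.indicator (fun _ => (1:ℝ)) (X ω) - B.indicator (fun _ => (1:ℝ)) (X ω)| ≤ 1 :=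
      abs_le.mpr ⟨by linarith, by linarith⟩
    calc |sigma2 (X ω) - lamε| * |At.indicator (fun _ => (1:ℝ)) (X ω)
          - B.indicator (fun _ => (1:ℝ)) (X ω)|
        ≤ M * 1 := mul_le_mul ha hb (abs_nonneg _) (le_of_lt hM)
      _ = M := mul_one M
  have hint2 : Integrable (fun ω => (sigma2 (X ω) - lamε)
      * (B.indicator (fun _ => (1:ℝ)) (X ω) - As.indicator (fun _ => (1:ℝ)) (X ω))) μ := by
    refine hIntBdd _ M (((hsigma2Meas.comp hX).sub measurable_const).mul
      ((hindMeas B hB).sub (hindMeas As hAs))) fun ω => ?_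
    rw [abs_mul]
    have h1 := (hind01 B (X ω)).1; have h2 := (hind01 B (X ω)).2
    have h3 := (hind01 As (X ω)).1; have h4 := (hind01 As (X ω)).2
    have h5 := (hsigma2Bdd (X ω)).1; have h6 := (hsigma2Bdd (X ω)).2
    have ha : |sigma2 (X ω) - lamε| ≤ M := abs_le.mpr ⟨by linarith, by linarith⟩
    have hb : |B.indicator (fun _ => (1:ℝ)) (X ω) - As.indicator (fun _ => (1:ℝ)) (X ω)| ≤ 1 :=
      abs_le.mpr ⟨by linarith, by linarith⟩
    calc |sigma2 (X ω) - lamε| * |B.indicator (fun _ => (1:ℝ)) (X ω)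
          - As.indicator (fun _ => (1:ℝ)) (X ω)|
        ≤ M * 1 := mul_le_mul ha hb (abs_nonneg _) (le_of_lt hM)
      _ = M := mul_one M
  have hsplit : ∫ ω, (sigma2 (X ω) - lamε)
      * (At.indicator (fun _ => (1:ℝ)) (X ω) - As.indicator (fun _ => (1:ℝ)) (X ω)) ∂μ
      = (∫ ω, (sigma2 (X ω) - lamε)
          * (At.indicator (fun _ => (1:ℝ)) (X ω) - B.indicator (fun _ => (1:ℝ)) (X ω)) ∂μ)
        + (∫ ω, (sigma2 (X ω) - lamε)
          * (B.indicator (fun _ => (1:ℝ)) (X ω) - As.indicator (fun _ => (1:ℝ)) (X ω)) ∂μ) := by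
    rw [← integral_add hint1 hint2]
    refine integral_congr_ae (Filter.Eventually.of_forall fun ω => ?_)
    ring
  -- bound the middle term by M * |cG - cF|
  have habs_ind : ∫ ω, |At.indicator (fun _ => (1:ℝ)) (X ω)
      - B.indicator (fun _ => (1:ℝ)) (X ω)| ∂μ = |cG - cF| := by
    have hiB_int : ∫ ω, B.indicator (fun _ => (1:ℝ)) (X ω) ∂μ = cG := by
      rw [hint_ind B hB, hcGdef]
      rfl
    rcases le_total lamε lamTilde with h | h
    · have hmono : cG ≤ 1 - ε := by
        rw [hcGdef, ← hGl]
        exact ENNReal.toReal_mono (measure_ne_top _ _)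
          (measure_mono fun ω hω => le_trans hω h)
      have hpt : ∀ ω, |At.indicator (fun _ => (1:ℝ)) (X ω) - B.indicator (fun _ => (1:ℝ)) (X ω)|
          = At.indicator (fun _ => (1:ℝ)) (X ω) - B.indicator (fun _ => (1:ℝ)) (X ω) := by
        intro ω
        rw [hiv, hiv]
        by_cases h1 : X ω ∈ At <;> by_cases h2 : X ω ∈ B
        · simp [h1, h2]
        · simp [h1, h2]
        · exfalso
          simp only [hAtdef, hBdef, mem_setOf_eq] at h1 h2
          exact h1 (le_trans h2 h)
        · simp [h1, h2]
      rw [integral_congr_ae (Filter.Eventually.of_forall hpt),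
        integral_sub (hintiA At hAt) (hintiA B hB), hiAt_int, hiB_int, hFl,
        abs_of_nonpos (by linarith), neg_sub]
    · have hmono : 1 - ε ≤ cG := by
        rw [hcGdef, ← hGl]
        exact ENNReal.toReal_mono (measure_ne_top _ _)
          (measure_mono fun ω hω => le_trans hω h)
      have hpt : ∀ ω, |At.indicator (fun _ => (1:ℝ)) (X ω) - B.indicator (fun _ => (1:ℝ)) (X ω)|
          = B.indicator (fun _ => (1:ℝ)) (X ω) - At.indicator (fun _ => (1:ℝ)) (X ω) := by
        intro ω
        rw [hiv, hiv]
        by_cases h1 : X ω ∈ At <;> by_cases h2 : X ω ∈ B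
        · simp [h1, h2]
        · exfalso
          simp only [hAtdef, hBdef, mem_setOf_eq] at h1 h2
          exact h2 (le_trans h1 h)
        · simp [h1, h2]
        · simp [h1, h2]
      rw [integral_congr_ae (Filter.Eventually.of_forall hpt),
        integral_sub (hintiA B hB) (hintiA At hAt), hiAt_int, hiB_int, hFl,
        abs_of_nonneg (by linarith)]
  have hintabs : Integrable (fun ω => |At.indicator (fun _ => (1:ℝ)) (X ω)
      - B.indicator (fun _ => (1:ℝ)) (X ω)|) μ := by
    refine hIntBdd _ 1 (((hindMeas At hAt).sub (hindMeas B hB)).abs) fun ω => ?_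
    rw [abs_abs]
    have h1 := (hind01 At (X ω)).1; have h2 := (hind01 At (X ω)).2
    have h3 := (hind01 B (X ω)).1; have h4 := (hind01 B (X ω)).2
    exact abs_le.mpr ⟨by linarith, by linarith⟩
  have h8 : ∫ ω, (sigma2 (X ω) - lamε)
      * (At.indicator (fun _ => (1:ℝ)) (X ω) - B.indicator (fun _ => (1:ℝ)) (X ω)) ∂μ
      ≤ M * |cG - cF| := by
    have hmono : ∫ ω, (sigma2 (X ω) - lamε)
        * (At.indicator (fun _ => (1:ℝ)) (X ω) - B.indicator (fun _ => (1:ℝ)) (X ω)) ∂μ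
        ≤ ∫ ω, M * |At.indicator (fun _ => (1:ℝ)) (X ω)
            - B.indicator (fun _ => (1:ℝ)) (X ω)| ∂μ := by
      refine integral_mono hint1 (hintabs.const_mul M) fun ω => ?_
      have h5 := (hsigma2Bdd (X ω)).1; have h6 := (hsigma2Bdd (X ω)).2
      have ha : |sigma2 (X ω) - lamε| ≤ M := abs_le.mpr ⟨by linarith, by linarith⟩
      calc (sigma2 (X ω) - lamε)
            * (At.indicator (fun _ => (1:ℝ)) (X ω) - B.indicator (fun _ => (1:ℝ)) (X ω))
          ≤ |(sigma2 (X ω) - lamε)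
            * (At.indicator (fun _ => (1:ℝ)) (X ω) - B.indicator (fun _ => (1:ℝ)) (X ω))| :=
            le_abs_self _
        _ = |sigma2 (X ω) - lamε| * |At.indicator (fun _ => (1:ℝ)) (X ω)
            - B.indicator (fun _ => (1:ℝ)) (X ω)| := abs_mul _ _
        _ ≤ M * |At.indicator (fun _ => (1:ℝ)) (X ω)
            - B.indicator (fun _ => (1:ℝ)) (X ω)| :=
            mul_le_mul_of_nonneg_right ha (abs_nonneg _)
    rw [integral_const_mul, habs_ind] at hmono
    exact hmono
  -- bound the last term by the L1 error of s
  have h9 : ∫ ω, (sigma2 (X ω) - lamε)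
      * (B.indicator (fun _ => (1:ℝ)) (X ω) - As.indicator (fun _ => (1:ℝ)) (X ω)) ∂μ
      ≤ ∫ ω, |s (X ω) - sigma2 (X ω)| ∂μ := by
    refine integral_mono hint2 hInts fun ω => ?_
    rw [hiv, hiv]
    have hle := le_abs_self (s (X ω) - sigma2 (X ω))
    have hge := neg_abs_le (s (X ω) - sigma2 (X ω))
    by_cases h1 : X ω ∈ B <;> by_cases h2 : X ω ∈ As
    · rw [if_pos h1, if_pos h2]
      nlinarith
    · rw [if_pos h1, if_neg h2]
      simp only [hBdef, mem_setOf_eq] at h1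
      simp only [hAsdef, mem_setOf_eq] at h2
      push_neg at h2
      nlinarith
    · rw [if_neg h1, if_pos h2]
      simp only [hBdef, mem_setOf_eq] at h1
      simp only [hAsdef, mem_setOf_eq] at h2
      push_neg at h1
      nlinarith
    · rw [if_neg h1, if_neg h2]
      nlinarith
  -- the approximation term restricted to the acceptance region
  have hI3 : ∫ ω, (g (X ω) - fstar (X ω)) ^ 2 * At.indicator (fun _ => (1:ℝ)) (X ω) ∂μ
      ≤ ∫ ω, (g (X ω) - fstar (X ω)) ^ 2 ∂μ := by
    refine integral_mono hgf2iAt hgf2int fun ω => ?_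
    have h1 := (hind01 At (X ω)).1; have h2 := (hind01 At (X ω)).2
    nlinarith [sq_nonneg (g (X ω) - fstar (X ω))]
  -- final assembly
  have hfinal : (M + lamε) * |cG - cF| = M * |cG - cF| + lamε * |cG - cF| := by ring
  have hnn : 0 ≤ lamε * |cG - cF| := mul_nonneg hlam0 (abs_nonneg _)
  rw [hriskg, hriskf, hI1, key_var At hAt]
  linarith [hJ, hsplit, h8, h9, hI3]
end
end

section
/- For every ε ∈ (0,1) and every β > 0: E[|1{F̂_N(s(X)) ≥ 1−ε} − 1{F_s(s(X)) ≥ 1−ε}|] ≤ 2(β + exp(−2Nβ²)). -/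
open MeasureTheory ProbabilityTheory Set

noncomputable section

/-- Empirical cdf of `s(X_1), …, s(X_N)` evaluated at `t`. -/
def empCdf {Ω : Type*} {d N : ℕ} (s : Euc d → ℝ) (Xs : Fin N → Ω → Euc d)
    (ω : Ω) (t : ℝ) : ℝ :=
  (N : ℝ)⁻¹ * ∑ i : Fin N, if s (Xs i ω) ≤ t then (1 : ℝ) else 0

section Auxiliary

open Real Filter Topology

-- Hoeffding's lemma, Bernoulli case

lemma bern_pos (p : ℝ) (hp0 : 0 ≤ p) (hp1 : p ≤ 1) (x : ℝ) :
    0 < 1 - p + p * exp x := by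
  rcases lt_or_eq_of_le hp1 with h | h
  · have : 0 ≤ p * exp x := mul_nonneg hp0 (exp_pos x).le
    linarith
  · subst h; simpa using exp_pos x

lemma bern_hoeffding (p : ℝ) (hp0 : 0 ≤ p) (hp1 : p ≤ 1) (l : ℝ) :
    (1 - p) * exp (-(l * p)) + p * exp (l * (1 - p)) ≤ exp (l ^ 2 / 8) := by
  have hD := bern_pos p hp0 hp1
  -- f x = x^2/8 + x*p - log (1 - p + p * exp x); show f l ≥ 0
  set f : ℝ → ℝ := fun x => x ^ 2 / 8 + x * p - log (1 - p + p * exp x) with hf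
  set f' : ℝ → ℝ := fun x => x / 4 + p - p * exp x / (1 - p + p * exp x) with hf'
  have hDer : ∀ x, HasDerivAt f (f' x) x := by
    intro x
    have h1 : HasDerivAt (fun x : ℝ => 1 - p + p * exp x) (p * exp x) x :=
      ((Real.hasDerivAt_exp x).const_mul p).const_add (1 - p)
    have h2 : HasDerivAt (fun x : ℝ => log (1 - p + p * exp x))
        (p * exp x / (1 - p + p * exp x)) x := h1.log (hD x).ne'
    have h3 : HasDerivAt (fun x : ℝ => x ^ 2 / 8 + x * p) (x / 4 + p) x := by
      have := ((hasDerivAt_pow 2 x).div_const 8).add ((hasDerivAt_id x).mul_const p)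
      exact this.congr_deriv (by ring)
    exact h3.sub h2
  have hDer' : ∀ x, HasDerivAt f'
      (1/4 - p * (1 - p) * exp x / (1 - p + p * exp x) ^ 2) x := by
    intro x
    have h1 : HasDerivAt (fun x : ℝ => 1 - p + p * exp x) (p * exp x) x :=
      ((Real.hasDerivAt_exp x).const_mul p).const_add (1 - p)
    have h2 : HasDerivAt (fun x : ℝ => p * exp x) (p * exp x) x :=
      (Real.hasDerivAt_exp x).const_mul p
    have h3 := h2.div h1 (hD x).ne'
    have h4 : HasDerivAt (fun x : ℝ => x / 4 + p) (1/4) x := by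
      simpa using ((hasDerivAt_id x).div_const 4).add_const p
    have := h4.sub h3
    refine this.congr_deriv ?_
    field_simp
    ring
  have hf'mono : Monotone f' := by
    apply monotone_of_deriv_nonneg
    · exact fun x => (hDer' x).differentiableAt
    · intro x
      rw [(hDer' x).deriv]
      have h1 : 0 < (1 - p + p * exp x) ^ 2 := pow_pos (hD x) 2
      rw [sub_nonneg, div_le_iff₀ h1]
      nlinarith [sq_nonneg (1 - p - p * exp x), exp_pos x, mul_nonneg hp0 (sub_nonneg.mpr hp1)]
  have hf'0 : f' 0 = 0 := by simp [hf']
  have hf0 : f 0 = 0 := by simp [hf]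
  have hdiff : Differentiable ℝ f := fun x => (hDer x).differentiableAt
  have key : 0 ≤ f l := by
    rcases le_total 0 l with h | h
    · have hmono : MonotoneOn f (Set.Ici (0:ℝ)) := by
        refine monotoneOn_of_deriv_nonneg (convex_Ici 0) hdiff.continuous.continuousOn
          (hdiff.differentiableOn) ?_
        intro x hx
        rw [(hDer x).deriv, ← hf'0]
        exact hf'mono (le_of_lt (by simpa using hx))
      have := hmono (Set.self_mem_Ici) (Set.mem_Ici.mpr h) h
      linarith [hf0 ▸ this]
    · have hanti : AntitoneOn f (Set.Iic (0:ℝ)) := by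
        refine antitoneOn_of_deriv_nonpos (convex_Iic 0) hdiff.continuous.continuousOn
          (hdiff.differentiableOn) ?_
        intro x hx
        rw [(hDer x).deriv, ← hf'0]
        exact hf'mono (le_of_lt (by simpa using hx))
      have := hanti (Set.mem_Iic.mpr h) (Set.self_mem_Iic) h
      linarith [hf0 ▸ this]
  have hlog : log (1 - p + p * exp l) ≤ l ^ 2 / 8 + l * p := by
    simp only [hf] at key; linarith
  have h2 : (1 - p + p * exp l) ≤ exp (l ^ 2 / 8 + l * p) := by
    rw [← Real.exp_log (hD l)]; exact exp_le_exp.mpr hlog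
  have e1 : exp (l * (1 - p)) = exp l * exp (-(l * p)) := by
    rw [← Real.exp_add]; congr 1; ring
  calc (1 - p) * exp (-(l * p)) + p * exp (l * (1 - p))
      = (1 - p + p * exp l) * exp (-(l * p)) := by rw [e1]; ring
    _ ≤ exp (l ^ 2 / 8 + l * p) * exp (-(l * p)) :=
        mul_le_mul_of_nonneg_right h2 (exp_pos _).le
    _ = exp (l ^ 2 / 8) := by rw [← Real.exp_add]; congr 1; ring

open scoped Classical in
lemma mgf_bernoulli {Ω : Type*} [MeasurableSpace Ω] (μ : Measure Ω) [IsProbabilityMeasure μ]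
    (A : Set Ω) (hA : MeasurableSet A) (p l : ℝ) (hp : (μ A).toReal = p) :
    mgf (fun ω => (if ω ∈ A then (1:ℝ) else 0) - p) μ l
      = (1 - p) * Real.exp (-(l * p)) + p * Real.exp (l * (1 - p)) := by
  have hfun : (fun ω => Real.exp (l * ((if ω ∈ A then (1:ℝ) else 0) - p)))
      = fun ω => Real.exp (-(l * p))
        + A.indicator (fun _ => Real.exp (l * (1 - p)) - Real.exp (-(l * p))) ω := by
    funext ω
    by_cases h : ω ∈ A <;>
      simp [h, Set.indicator_apply] <;> ring_nf
  rw [mgf, hfun, integral_add (integrable_const _)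
    ((integrable_const _).indicator hA), integral_const, integral_indicator_const _ hA]
  simp [Measure.real, hp]
  ring


lemma hoeffding_iid {Ω : Type*} [MeasurableSpace Ω] {μ : Measure Ω} [IsProbabilityMeasure μ]
    {N : ℕ} (hN : 0 < N) (W : Fin N → Ω → ℝ) (hW : ∀ i, Measurable (W i))
    (hind : iIndepFun W μ) (t p β : ℝ) (hβ : 0 < β)
    (hp : ∀ i, (μ {ω | W i ω ≤ t}).toReal = p) :
    (μ {ω | β ≤ |(N:ℝ)⁻¹ * (∑ i, if W i ω ≤ t then (1:ℝ) else 0) - p|}).toReal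
      ≤ 2 * Real.exp (-2 * N * β ^ 2) := by
  classical
  have i0 : Fin N := ⟨0, hN⟩
  have hp0 : 0 ≤ p := (hp i0) ▸ ENNReal.toReal_nonneg
  have hp1 : p ≤ 1 := by
    rw [← hp i0]
    exact le_trans (ENNReal.toReal_mono ENNReal.one_ne_top prob_le_one) (by simp)
  set B : Fin N → Ω → ℝ := fun i ω => (if W i ω ≤ t then (1:ℝ) else 0) - p with hB
  have hAmeas : ∀ i, MeasurableSet {ω | W i ω ≤ t} :=
    fun i => measurableSet_le (hW i) measurable_const
  have hBmeas : ∀ i, Measurable (B i) := by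
    intro i
    exact ((measurable_const.ite (hAmeas i) measurable_const).sub measurable_const)
  have hBind : iIndepFun B μ := by
    have := hind.comp (fun i (x : ℝ) => (if x ≤ t then (1:ℝ) else 0) - p)
      (fun i => (measurable_const.ite measurableSet_Iic measurable_const).sub measurable_const)
    exact this
  have hBbd : ∀ i ω, |B i ω| ≤ 1 := by
    intro i ω
    simp only [hB]
    split_ifs <;> rw [abs_le] <;> constructor <;> linarith
  have hint : ∀ (l : ℝ) (i : Fin N), Integrable (fun ω => exp (l * B i ω)) μ := by
    intro l i
    refine (integrable_const (Real.exp |l|)).mono'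
      (((hBmeas i).const_mul l).exp.aestronglyMeasurable) (ae_of_all _ fun ω => ?_)
    rw [Real.norm_eq_abs, Real.abs_exp]
    apply Real.exp_le_exp.mpr
    calc l * B i ω ≤ |l * B i ω| := le_abs_self _
      _ = |l| * |B i ω| := abs_mul _ _
      _ ≤ |l| * 1 := mul_le_mul_of_nonneg_left (hBbd i ω) (abs_nonneg l)
      _ = |l| := mul_one _
  have hmgf_i : ∀ (l : ℝ) (i : Fin N), mgf (B i) μ l ≤ exp (l ^ 2 / 8) := by
    intro l i
    have hfe : B i = fun ω => (if ω ∈ {ω | W i ω ≤ t} then (1:ℝ) else 0) - p := by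
      funext ω; by_cases h : W i ω ≤ t <;> simp [hB, h]
    rw [hfe, mgf_bernoulli μ _ (hAmeas i) p l (hp i)]
    exact bern_hoeffding p hp0 hp1 l
  have hmgf : ∀ l : ℝ, mgf (∑ i, B i) μ l ≤ exp (l ^ 2 / 8) ^ N := by
    intro l
    rw [hBind.mgf_sum hBmeas Finset.univ]
    calc ∏ i : Fin N, mgf (B i) μ l ≤ ∏ _i : Fin N, exp (l ^ 2 / 8) :=
          Finset.prod_le_prod (fun i _ => mgf_nonneg) (fun i _ => hmgf_i l i)
      _ = exp (l ^ 2 / 8) ^ N := by rw [Finset.prod_const, Finset.card_univ, Fintype.card_fin]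
  have hSsum : ∀ ω, (∑ i, B i) ω = (∑ i, if W i ω ≤ t then (1:ℝ) else 0) - N * p := by
    intro ω
    simp only [Finset.sum_apply, hB, Finset.sum_sub_distrib, Finset.sum_const,
      Finset.card_univ, Fintype.card_fin, nsmul_eq_mul]
  -- event inclusion
  have hsub : {ω | β ≤ |(N:ℝ)⁻¹ * (∑ i, if W i ω ≤ t then (1:ℝ) else 0) - p|}
      ⊆ {ω | (N:ℝ) * β ≤ (∑ i, B i) ω} ∪ {ω | (∑ i, B i) ω ≤ -((N:ℝ) * β)} := by
    intro ω hω
    simp only [Set.mem_setOf_eq] at hω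
    have hNpos : (0:ℝ) < N := Nat.cast_pos.mpr hN
    have heq : (N:ℝ)⁻¹ * (∑ i, if W i ω ≤ t then (1:ℝ) else 0) - p
        = (N:ℝ)⁻¹ * (∑ i, B i) ω := by
      rw [hSsum ω]; field_simp
    rw [heq, abs_mul, abs_inv, Nat.abs_cast] at hω
    have h2 : (N:ℝ) * β ≤ |(∑ i, B i) ω| := by
      have hinv : (N:ℝ) * (N:ℝ)⁻¹ = 1 := mul_inv_cancel₀ hNpos.ne'
      calc (N:ℝ) * β ≤ (N:ℝ) * ((N:ℝ)⁻¹ * |(∑ i, B i) ω|) := by gcongr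
        _ = |(∑ i, B i) ω| := by rw [← mul_assoc, hinv, one_mul]
    rcases le_abs.mp h2 with h | h
    · exact Or.inl h
    · exact Or.inr (by simp only [Set.mem_setOf_eq]; linarith)
  have hup : (μ {ω | (N:ℝ) * β ≤ (∑ i, B i) ω}).toReal ≤ exp (-2 * N * β ^ 2) := by
    calc (μ {ω | (N:ℝ) * β ≤ (∑ i, B i) ω}).toReal
        ≤ exp (-(4 * β) * ((N:ℝ) * β)) * mgf (∑ i, B i) μ (4 * β) :=
          measure_ge_le_exp_mul_mgf ((N:ℝ) * β) (by positivity)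
            (hBind.integrable_exp_mul_sum hBmeas (fun i _ => hint _ i))
      _ ≤ exp (-(4 * β) * ((N:ℝ) * β)) * exp ((4 * β) ^ 2 / 8) ^ N := mul_le_mul_of_nonneg_left (hmgf _) (exp_pos _).le
      _ = exp (-2 * N * β ^ 2) := by
          rw [← Real.exp_nat_mul, ← Real.exp_add]; congr 1; ring
  have hlo : (μ {ω | (∑ i, B i) ω ≤ -((N:ℝ) * β)}).toReal ≤ exp (-2 * N * β ^ 2) := by
    calc (μ {ω | (∑ i, B i) ω ≤ -((N:ℝ) * β)}).toReal
        ≤ exp (-(-(4 * β)) * (-((N:ℝ) * β))) * mgf (∑ i, B i) μ (-(4 * β)) :=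
          measure_le_le_exp_mul_mgf (-((N:ℝ) * β)) (by nlinarith)
            (hBind.integrable_exp_mul_sum hBmeas (fun i _ => hint _ i))
      _ ≤ exp (-(-(4 * β)) * (-((N:ℝ) * β))) * exp ((-(4 * β)) ^ 2 / 8) ^ N := mul_le_mul_of_nonneg_left (hmgf _) (exp_pos _).le
      _ = exp (-2 * N * β ^ 2) := by
          rw [← Real.exp_nat_mul, ← Real.exp_add]; congr 1; ring
  calc (μ {ω | β ≤ |(N:ℝ)⁻¹ * (∑ i, if W i ω ≤ t then (1:ℝ) else 0) - p|}).toReal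
      ≤ (μ {ω | (N:ℝ) * β ≤ (∑ i, B i) ω} + μ {ω | (∑ i, B i) ω ≤ -((N:ℝ) * β)}).toReal :=
        ENNReal.toReal_mono
          (ENNReal.add_ne_top.mpr ⟨measure_ne_top _ _, measure_ne_top _ _⟩)
          ((measure_mono hsub).trans (measure_union_le _ _))
    _ = (μ {ω | (N:ℝ) * β ≤ (∑ i, B i) ω}).toReal
        + (μ {ω | (∑ i, B i) ω ≤ -((N:ℝ) * β)}).toReal :=
        ENNReal.toReal_add (measure_ne_top _ _) (measure_ne_top _ _)
    _ ≤ 2 * Real.exp (-2 * N * β ^ 2) := by linarith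

lemma middle_bound {Ω : Type*} [MeasurableSpace Ω] (μ : Measure Ω) [IsProbabilityMeasure μ]
    (Y : Ω → ℝ) (hY : Measurable Y) (a b : ℝ) (hab : a ≤ b)
    (F : ℝ → ℝ) (hF : ∀ t, (μ {ω | Y ω ≤ t}).toReal = F t) (hFc : Continuous F) :
    (μ {ω | a < F (Y ω) ∧ F (Y ω) < b}).toReal ≤ b - a := by
  haveI : IsProbabilityMeasure (μ.map Y) := Measure.isProbabilityMeasure_map hY.aemeasurable
  have hFcdf : F = cdf (μ.map Y) := by
    funext t
    rw [← hF t, cdf_eq_real, measureReal_def, Measure.map_apply hY measurableSet_Iic]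
    rfl
  have hmono : Monotone F := hFcdf ▸ monotone_cdf _
  have hbot : Tendsto F atBot (𝓝 0) := hFcdf ▸ tendsto_cdf_atBot _
  have htop : Tendsto F atTop (𝓝 1) := hFcdf ▸ tendsto_cdf_atTop _
  have hF01 : ∀ t, 0 ≤ F t ∧ F t ≤ 1 := by
    intro t; rw [hFcdf]; exact ⟨cdf_nonneg _ _, cdf_le_one _ _⟩
  have hle1 : ∀ s : Set Ω, (μ s).toReal ≤ 1 :=
    fun s => le_trans (ENNReal.toReal_mono ENNReal.one_ne_top prob_le_one) (by simp)
  have claim : ∀ r : ℝ, 0 < r → r < 1 → ∃ t, F t = r := by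
    intro r hr0 hr1
    obtain ⟨t0, ht0⟩ : ∃ t0, F t0 < r := (hbot.eventually (gt_mem_nhds hr0)).exists
    obtain ⟨t1, ht1⟩ : ∃ t1, r < F t1 := (htop.eventually (lt_mem_nhds hr1)).exists
    have h01 : t0 ≤ t1 := by
      by_contra h
      exact absurd (hmono (le_of_not_ge h)) (by linarith)
    obtain ⟨t, _, htr⟩ := intermediate_value_Icc h01 hFc.continuousOn ⟨ht0.le, ht1.le⟩
    exact ⟨t, htr⟩
  -- degenerate cases
  rcases le_or_gt b 0 with hb0 | hb0
  · have : {ω | a < F (Y ω) ∧ F (Y ω) < b} = ∅ := by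
      ext ω; simp only [mem_setOf_eq, mem_empty_iff_false, iff_false, not_and]
      intro _; linarith [(hF01 (Y ω)).1]
    rw [this]; simp; linarith
  rcases le_or_gt 1 a with ha1 | ha1
  · have : {ω | a < F (Y ω) ∧ F (Y ω) < b} = ∅ := by
      ext ω; simp only [mem_setOf_eq, mem_empty_iff_false, iff_false, not_and]
      intro h; linarith [(hF01 (Y ω)).2]
    rw [this]; simp; linarith
  rcases eq_or_lt_of_le hab with rfl | hab'
  · have : {ω | a < F (Y ω) ∧ F (Y ω) < a} = ∅ := by
      ext ω; simp only [mem_setOf_eq, mem_empty_iff_false, iff_false, not_and]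
      intro h; linarith
    rw [this]; simp
  -- main estimates
  have Pa : a ≤ (μ {ω | F (Y ω) ≤ a}).toReal := by
    rcases le_or_gt a 0 with ha0 | ha0
    · exact le_trans ha0 ENNReal.toReal_nonneg
    · obtain ⟨t, ht⟩ := claim a ha0 ha1
      have hsub : {ω | Y ω ≤ t} ⊆ {ω | F (Y ω) ≤ a} :=
        fun ω hω => le_trans (hmono hω) ht.le
      calc a = (μ {ω | Y ω ≤ t}).toReal := by rw [hF t, ht]
        _ ≤ (μ {ω | F (Y ω) ≤ a}).toReal :=
          ENNReal.toReal_mono (measure_ne_top _ _) (measure_mono hsub)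
  have Pb : 1 - b ≤ (μ {ω | b ≤ F (Y ω)}).toReal := by
    rcases le_or_gt 1 b with hb1 | hb1
    · linarith [ENNReal.toReal_nonneg (a := μ {ω | b ≤ F (Y ω)})]
    · obtain ⟨t, ht⟩ := claim b hb0 hb1
      have hmeas : MeasurableSet {ω | Y ω ≤ t} := measurableSet_le hY measurable_const
      have hsub : {ω | Y ω ≤ t}ᶜ ⊆ {ω | b ≤ F (Y ω)} := by
        intro ω hω
        simp only [mem_compl_iff, mem_setOf_eq, not_le] at hω
        exact ht ▸ hmono hω.le
      have hcompl : (μ {ω | Y ω ≤ t}ᶜ).toReal = 1 - b := by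
        rw [prob_compl_eq_one_sub hmeas,
          ENNReal.toReal_sub_of_le prob_le_one ENNReal.one_ne_top]
        rw [ENNReal.toReal_one, hF t, ht]
      calc 1 - b = (μ {ω | Y ω ≤ t}ᶜ).toReal := hcompl.symm
        _ ≤ (μ {ω | b ≤ F (Y ω)}).toReal :=
          ENNReal.toReal_mono (measure_ne_top _ _) (measure_mono hsub)
  -- combine
  have hFYmeas : Measurable (fun ω => F (Y ω)) := hFc.measurable.comp hY
  set M := {ω | a < F (Y ω) ∧ F (Y ω) < b} with hM
  set Sa := {ω | F (Y ω) ≤ a} with hSa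
  set Sb := {ω | b ≤ F (Y ω)} with hSb
  have mSa : MeasurableSet Sa := measurableSet_le hFYmeas measurable_const
  have mSb : MeasurableSet Sb := measurableSet_le measurable_const hFYmeas
  have dab : Disjoint Sa Sb := by
    rw [Set.disjoint_left]
    intro ω h1 h2
    simp only [hSa, hSb, mem_setOf_eq] at h1 h2
    linarith
  have dM : Disjoint M (Sa ∪ Sb) := by
    rw [Set.disjoint_left]
    intro ω h1 h2
    simp only [hM, mem_setOf_eq] at h1
    rcases h2 with h2 | h2 <;> simp only [hSa, hSb, mem_setOf_eq] at h2 <;> linarith [h1.1, h1.2]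
  have key : (μ M).toReal + ((μ Sa).toReal + (μ Sb).toReal) ≤ 1 := by
    calc (μ M).toReal + ((μ Sa).toReal + (μ Sb).toReal)
        = (μ M + (μ Sa + μ Sb)).toReal := by
          rw [ENNReal.toReal_add (measure_ne_top _ _)
            (ENNReal.add_ne_top.mpr ⟨measure_ne_top _ _, measure_ne_top _ _⟩),
            ENNReal.toReal_add (measure_ne_top _ _) (measure_ne_top _ _)]
      _ = (μ (M ∪ (Sa ∪ Sb))).toReal := by
          rw [measure_union dM (mSa.union mSb), measure_union dab mSb]
      _ ≤ 1 := hle1 _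
  linarith

-- pointwise indicator mismatch bound

lemma ptwise (c m fv β : ℝ) (hβ : 0 < β) :
    |(if c ≤ m then (1:ℝ) else 0) - (if c ≤ fv then (1:ℝ) else 0)|
      ≤ (if c - β < fv ∧ fv < c + β then (1:ℝ) else 0)
        + (if β ≤ |m - fv| then (1:ℝ) else 0) := by
  have hA : (0:ℝ) ≤ (if c - β < fv ∧ fv < c + β then (1:ℝ) else 0) := by positivity
  have hB : (0:ℝ) ≤ (if β ≤ |m - fv| then (1:ℝ) else 0) := by positivity
  by_cases h1 : c ≤ m <;> by_cases h2 : c ≤ fv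
  · simp [h1, h2]; linarith
  · -- mismatch : c ≤ m, fv < c
    rw [if_pos h1, if_neg h2]
    push_neg at h2
    by_cases hm : c - β < fv ∧ fv < c + β
    · rw [if_pos hm]; rw [abs_of_nonneg] <;> linarith
    · have hfv : fv ≤ c - β := by
        push_neg at hm
        by_contra hc
        push_neg at hc
        have := hm hc
        linarith
      have : β ≤ |m - fv| := le_trans (by linarith) (le_abs_self _)
      rw [if_pos this]; rw [abs_of_nonneg] <;> linarith
  · -- mismatch : m < c ≤ fv
    rw [if_neg h1, if_pos h2]
    push_neg at h1
    by_cases hm : c - β < fv ∧ fv < c + β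
    · rw [if_pos hm]; rw [abs_of_nonpos] <;> linarith
    · have hfv : c + β ≤ fv := by
        push_neg at hm
        exact hm (by linarith)
      have : β ≤ |m - fv| := by
        rw [abs_sub_comm]
        exact le_trans (by linarith) (le_abs_self _)
      rw [if_pos this]; rw [abs_of_nonpos] <;> linarith
  · simp [h1, h2]; linarith

lemma indicator_integrable {Ω : Type*} [MeasurableSpace Ω] (μ : Measure Ω)
    [IsFiniteMeasure μ] {g : Ω → Prop} [DecidablePred g] (hg : MeasurableSet {ω | g ω}) :
    Integrable (fun ω => if g ω then (1:ℝ) else 0) μ := by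
  refine (integrable_const (1:ℝ)).mono'
    ((measurable_const.ite hg measurable_const).aestronglyMeasurable)
    (Filter.Eventually.of_forall fun ω => ?_)
  split_ifs <;> simp

lemma indicator_integral {Ω : Type*} [MeasurableSpace Ω] (μ : Measure Ω)
    [IsFiniteMeasure μ] {g : Ω → Prop} [DecidablePred g] (hg : MeasurableSet {ω | g ω}) :
    (∫ ω, (if g ω then (1:ℝ) else 0) ∂μ) = (μ {ω | g ω}).toReal := by
  have h : (fun ω => if g ω then (1:ℝ) else 0) = ({ω | g ω}).indicator (fun _ => (1:ℝ)) := by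
    funext ω; by_cases h : g ω <;> simp [h, Set.indicator_apply, Set.mem_setOf_eq]
  rw [h, integral_indicator_const _ hg]; simp [Measure.real]


end Auxiliary

/-- for every `ε ∈ (0,1)` and `β > 0`,
`E[|1{F̂_N(s(X)) ≥ 1-ε} - 1{F_s(s(X)) ≥ 1-ε}|] ≤ 2(β + exp(-2Nβ²))`. -/
theorem empirical_threshold_mismatch_bound
    {Ω : Type*} [MeasurableSpace Ω] (μ : Measure Ω) [IsProbabilityMeasure μ]
    {d N : ℕ} (X : Ω → Euc d) (Xs : Fin N → Ω → Euc d)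
    (hX : Measurable X) (hXs : ∀ i, Measurable (Xs i))
    -- `X, X_1, …, X_N` are i.i.d.
    (hIndep : iIndepFun (Fin.cons (α := fun _ : Fin (N+1) => Ω → Euc d) X Xs) μ)
    (hIdent : ∀ i, Measure.map (Xs i) μ = Measure.map X μ)
    (s : Euc d → ℝ) (hs : Measurable s)
    -- the cdf `F_s` of `s(X)` is continuous
    (hFcont : Continuous fun t => (μ {ω | s (X ω) ≤ t}).toReal)
    (ε : ℝ) (hε : ε ∈ Set.Ioo (0 : ℝ) 1) (β : ℝ) (hβ : 0 < β) :
    (∫ ω, |(if 1 - ε ≤ empCdf s Xs ω (s (X ω)) then (1 : ℝ) else 0)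
        - (if 1 - ε ≤ (μ {ω' | s (X ω') ≤ s (X ω)}).toReal then (1 : ℝ) else 0)| ∂μ) ≤
      2 * (β + Real.exp (-2 * N * β ^ 2)) := by
  set F : ℝ → ℝ := fun t => (μ {ω | s (X ω) ≤ t}).toReal with hF
  set Y : Ω → ℝ := fun ω => s (X ω) with hYdef
  have hYm : Measurable Y := hs.comp hX
  -- measurability of the empirical cdf evaluated at s (X ω)
  have hempm : Measurable fun ω => empCdf s Xs ω (s (X ω)) := by
    apply Measurable.const_mul
    apply Finset.measurable_sum
    intro i _
    exact Measurable.ite (measurableSet_le (hs.comp (hXs i)) hYm)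
      measurable_const measurable_const
  have hFYm : Measurable fun ω => F (Y ω) := hFcont.measurable.comp hYm
  -- the two indicator functions are integrable
  have hint1 : Integrable (fun ω => if 1 - ε ≤ empCdf s Xs ω (s (X ω)) then (1:ℝ) else 0) μ :=
    indicator_integrable μ (measurableSet_le measurable_const hempm)
  have hint2 : Integrable (fun ω => if 1 - ε ≤ F (Y ω) then (1:ℝ) else 0) μ :=
    indicator_integrable μ (measurableSet_le measurable_const hFYm)
  have hintd : Integrable (fun ω => |(if 1 - ε ≤ empCdf s Xs ω (s (X ω)) then (1:ℝ) else 0)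
      - (if 1 - ε ≤ F (Y ω) then (1:ℝ) else 0)|) μ := (hint1.sub hint2).abs
  -- the two majorant indicators
  have hAset : MeasurableSet {ω | 1 - ε - β < F (Y ω) ∧ F (Y ω) < 1 - ε + β} :=
    (measurableSet_lt measurable_const hFYm).inter (measurableSet_lt hFYm measurable_const)
  have hBset : MeasurableSet {ω | β ≤ |empCdf s Xs ω (s (X ω)) - F (Y ω)|} :=
    measurableSet_le measurable_const (hempm.sub hFYm).abs
  have hintA : Integrable (fun ω => if 1 - ε - β < F (Y ω) ∧ F (Y ω) < 1 - ε + β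
      then (1:ℝ) else 0) μ := indicator_integrable μ hAset
  have hintB : Integrable (fun ω => if β ≤ |empCdf s Xs ω (s (X ω)) - F (Y ω)|
      then (1:ℝ) else 0) μ := indicator_integrable μ hBset
  -- pointwise bound
  have hpt : ∀ ω, |(if 1 - ε ≤ empCdf s Xs ω (s (X ω)) then (1:ℝ) else 0)
      - (if 1 - ε ≤ F (Y ω) then (1:ℝ) else 0)|
      ≤ (if 1 - ε - β < F (Y ω) ∧ F (Y ω) < 1 - ε + β then (1:ℝ) else 0)
        + (if β ≤ |empCdf s Xs ω (s (X ω)) - F (Y ω)| then (1:ℝ) else 0) := by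
    intro ω
    have := ptwise (1 - ε) (empCdf s Xs ω (s (X ω))) (F (Y ω)) β hβ
    simpa [sub_eq_add_neg] using this
  -- part A bound
  have hAbound : (μ {ω | 1 - ε - β < F (Y ω) ∧ F (Y ω) < 1 - ε + β}).toReal ≤ 2 * β := by
    have := middle_bound μ Y hYm (1 - ε - β) (1 - ε + β) (by linarith) F (fun t => rfl) hFcont
    linarith
  -- part B bound
  have hBbound : (μ {ω | β ≤ |empCdf s Xs ω (s (X ω)) - F (Y ω)|}).toReal
      ≤ 2 * Real.exp (-2 * N * β ^ 2) := by
    rcases Nat.eq_zero_or_pos N with hN | hN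
    · subst hN
      have h1 : (μ {ω | β ≤ |empCdf s Xs ω (s (X ω)) - F (Y ω)|}).toReal ≤ 1 :=
        le_trans (ENNReal.toReal_mono ENNReal.one_ne_top prob_le_one) (by simp)
      refine le_trans h1 ?_
      have : (-2 : ℝ) * ((0:ℕ):ℝ) * β ^ 2 = 0 := by norm_num
      rw [this, Real.exp_zero]
      norm_num
    -- main case
    set V : Ω → (Fin N → ℝ) := fun ω i => s (Xs i ω) with hV
    have hVm : Measurable V := measurable_pi_lambda _ (fun i => hs.comp (hXs i))
    -- iid family of the real scores
    set g : Fin (N+1) → Ω → ℝ :=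
      fun j ω => s (Fin.cons (α := fun _ : Fin (N+1) => Ω → Euc d) X Xs j ω) with hg
    have hgind : iIndepFun g μ :=
      hIndep.comp (fun _ => s) (fun _ => hs)
    have hgmeas : ∀ j, Measurable (g j) := by
      intro j
      induction j using Fin.cases with
      | zero => exact hs.comp hX
      | succ i => simp only [hg, Fin.cons_succ]; exact hs.comp (hXs i)
    have hWind : iIndepFun
        (fun i ω => s (Xs i ω)) μ := by
      rw [iIndepFun_iff_measure_inter_preimage_eq_mul]
      intro S sets hsets
      classical
      have hmain := hgind.measure_inter_preimage_eq_mul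
        (S.map ⟨Fin.succ, Fin.succ_injective N⟩)
        (sets := fun j => Fin.cases Set.univ sets j) ?_
      · have hset_eq : (⋂ i ∈ S, (fun ω => s (Xs i ω)) ⁻¹' sets i)
            = ⋂ j ∈ S.map ⟨Fin.succ, Fin.succ_injective N⟩,
                g j ⁻¹' (Fin.cases Set.univ sets j) := by
          ext ω
          simp only [Set.mem_iInter]
          constructor
          · intro h j hj
            obtain ⟨i, hi, rfl⟩ := Finset.mem_map.mp hj
            simpa [hg, Fin.cons_succ] using h i hi
          · intro h i hi
            have := h (Fin.succ i) (Finset.mem_map_of_mem _ hi)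
            simpa [hg, Fin.cons_succ] using this
        rw [hset_eq, hmain, Finset.prod_map]
        apply Finset.prod_congr rfl
        intro i _
        rfl
      · intro j hj
        obtain ⟨i, hi, rfl⟩ := Finset.mem_map.mp hj
        simpa using hsets i hi
    -- independence of Y and the vector V
    have hYV : IndepFun Y V μ := by
      classical
      have h0 : (0 : Fin (N+1)) ∈ ({0} : Finset (Fin (N+1))) := Finset.mem_singleton_self 0
      have h := hgind.indepFun_finset {0} {0}ᶜ (by simp) hgmeas
      have h' := h.comp
        (φ := fun v : ({0} : Finset (Fin (N+1))) → ℝ => v ⟨0, h0⟩)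
        (ψ := fun v : (({0}ᶜ : Finset (Fin (N+1)))) → ℝ =>
          fun i : Fin N => v ⟨Fin.succ i, by simp [Fin.succ_ne_zero]⟩)
        (measurable_pi_apply (⟨0, h0⟩ : ({0} : Finset (Fin (N+1)))) : Measurable fun v : ({0} : Finset (Fin (N+1))) → ℝ => v ⟨0, h0⟩)
        (measurable_pi_lambda _ fun i => measurable_pi_apply _)
      have e1 : ((fun v : ({0} : Finset (Fin (N+1))) → ℝ => v ⟨0, h0⟩)
          ∘ (fun a (i : ({0} : Finset (Fin (N+1)))) => g i a)) = Y := by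
        funext ω; simp [hg, hYdef]
      have e2 : ((fun v : (({0}ᶜ : Finset (Fin (N+1)))) → ℝ =>
            fun i : Fin N => v ⟨Fin.succ i, by simp [Fin.succ_ne_zero]⟩)
          ∘ (fun a (i : (({0}ᶜ : Finset (Fin (N+1))))) => g i a)) = V := by
        funext ω; funext i; simp [hg, hV, Fin.cons_succ]
      rw [e1, e2] at h'
      exact h'
    -- the bad set as a product-space event
    set C : Set (ℝ × (Fin N → ℝ)) :=
      {q | β ≤ |(N:ℝ)⁻¹ * (∑ i, if q.2 i ≤ q.1 then (1:ℝ) else 0) - F q.1|} with hC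
    have hsummeas : Measurable fun q : ℝ × (Fin N → ℝ) =>
        ∑ i, (if q.2 i ≤ q.1 then (1:ℝ) else 0) := by
      apply Finset.measurable_sum
      intro i _
      exact Measurable.ite
        (measurableSet_le (measurable_snd.eval) measurable_fst)
        measurable_const measurable_const
    have hCmeas : MeasurableSet C :=
      measurableSet_le measurable_const
        (((measurable_const.mul hsummeas).sub (hFcont.measurable.comp measurable_fst)).abs)
    have hBeq : {ω | β ≤ |empCdf s Xs ω (s (X ω)) - F (Y ω)|}
        = (fun ω => (Y ω, V ω)) ⁻¹' C := rfl
    haveI : IsProbabilityMeasure (μ.map Y) := Measure.isProbabilityMeasure_map hYm.aemeasurable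
    have hmap : μ.map (fun ω => (Y ω, V ω)) = (μ.map Y).prod (μ.map V) :=
      (indepFun_iff_map_prod_eq_prod_map_map hYm.aemeasurable hVm.aemeasurable).mp hYV
    have hinner : ∀ t : ℝ, (μ.map V) (Prod.mk t ⁻¹' C)
        ≤ ENNReal.ofReal (2 * Real.exp (-2 * N * β ^ 2)) := by
      intro t
      have hsec : MeasurableSet (Prod.mk t ⁻¹' C) := hCmeas.preimage (by fun_prop)
      rw [Measure.map_apply hVm hsec]
      have hpre : V ⁻¹' (Prod.mk t ⁻¹' C)
          = {ω | β ≤ |(N:ℝ)⁻¹ * (∑ i, if s (Xs i ω) ≤ t then (1:ℝ) else 0) - F t|} := rfl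
      rw [hpre]
      have hp : ∀ i : Fin N, (μ {ω | s (Xs i ω) ≤ t}).toReal = F t := by
        intro i
        have : μ {ω | s (Xs i ω) ≤ t} = μ {ω | s (X ω) ≤ t} := by
          have h1 : {ω | s (Xs i ω) ≤ t} = (Xs i) ⁻¹' (s ⁻¹' Set.Iic t) := rfl
          have h2 : {ω | s (X ω) ≤ t} = X ⁻¹' (s ⁻¹' Set.Iic t) := rfl
          rw [h1, h2, ← Measure.map_apply (hXs i) (hs measurableSet_Iic),
            ← Measure.map_apply hX (hs measurableSet_Iic), hIdent i]
        rw [this]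
      have hhoef := hoeffding_iid hN (fun i ω => s (Xs i ω)) (fun i => hs.comp (hXs i))
        hWind t (F t) β hβ hp
      rw [ENNReal.le_ofReal_iff_toReal_le (measure_ne_top _ _) (by positivity)]
      exact hhoef
    calc (μ {ω | β ≤ |empCdf s Xs ω (s (X ω)) - F (Y ω)|}).toReal
        = ((μ.map (fun ω => (Y ω, V ω))) C).toReal := by
          rw [Measure.map_apply (hYm.prodMk hVm) hCmeas, ← hBeq]
      _ = (((μ.map Y).prod (μ.map V)) C).toReal := by rw [hmap]
      _ ≤ 2 * Real.exp (-2 * N * β ^ 2) := by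
          rw [Measure.prod_apply hCmeas]
          refine ENNReal.toReal_le_of_le_ofReal (by positivity) ?_
          calc ∫⁻ t, (μ.map V) (Prod.mk t ⁻¹' C) ∂(μ.map Y)
              ≤ ∫⁻ _, ENNReal.ofReal (2 * Real.exp (-2 * N * β ^ 2)) ∂(μ.map Y) :=
                lintegral_mono hinner
            _ = ENNReal.ofReal (2 * Real.exp (-2 * N * β ^ 2)) := by
                rw [lintegral_const, measure_univ, mul_one]
  -- assemble
  calc (∫ ω, |(if 1 - ε ≤ empCdf s Xs ω (s (X ω)) then (1 : ℝ) else 0)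
        - (if 1 - ε ≤ F (Y ω) then (1 : ℝ) else 0)| ∂μ)
      ≤ ∫ ω, ((if 1 - ε - β < F (Y ω) ∧ F (Y ω) < 1 - ε + β then (1:ℝ) else 0)
          + (if β ≤ |empCdf s Xs ω (s (X ω)) - F (Y ω)| then (1:ℝ) else 0)) ∂μ :=
        integral_mono hintd (hintA.add hintB) hpt
    _ = (μ {ω | 1 - ε - β < F (Y ω) ∧ F (Y ω) < 1 - ε + β}).toReal
        + (μ {ω | β ≤ |empCdf s Xs ω (s (X ω)) - F (Y ω)|}).toReal := by
        rw [integral_add hintA hintB, indicator_integral μ hAset, indicator_integral μ hBset]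
    _ ≤ 2 * β + 2 * Real.exp (-2 * N * β ^ 2) := add_le_add hAbound hBbound
    _ = 2 * (β + Real.exp (-2 * N * β ^ 2)) := by ring
end
end

section
/- There exists an absolute constant C > 0 such that for every ε ∈ (0,1): E[|1{F̂_N(s(X)) ≥ 1−ε} − 1{F_s(s(X)) ≥ 1−ε}|] ≤ C N^{−1/2}. -/
open MeasureTheory ProbabilityTheory Set

noncomputable section

open Filter in
lemma cdf_band (ρ : Measure ℝ) [IsProbabilityMeasure ρ]
    (hF : Continuous (cdf ρ)) {c r : ℝ} (hc0 : 0 < c) (hc1 : c < 1) (hr : 0 ≤ r) :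
    ρ {t | |(cdf ρ) t - c| ≤ r} ≤ ENNReal.ofReal (2 * r) := by
  set F : ℝ → ℝ := ⇑(cdf ρ) with hFdef
  have hSeq : {t | |F t - c| ≤ r} = F ⁻¹' (Icc (c - r) (c + r)) := by
    ext t; simp [abs_le, sub_le_iff_le_add, le_sub_iff_add_le, Icc, and_comm]
    constructor
    · rintro ⟨h1, h2⟩; constructor <;> linarith
    · rintro ⟨h1, h2⟩; constructor <;> linarith
  set S : Set ℝ := {t | |F t - c| ≤ r} with hSdef
  have hSclosed : IsClosed S := by
    rw [show S = F ⁻¹' Icc (c - r) (c + r) from hSeq]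
    exact isClosed_Icc.preimage hF
  have hmemS : ∀ t ∈ S, c - r ≤ F t ∧ F t ≤ c + r := by
    intro t ht
    rw [hSdef, mem_setOf_eq, abs_le] at ht
    constructor <;> linarith [ht.1, ht.2]
  have hleftLim : ∀ x : ℝ, Function.leftLim F x = F x := by
    intro x
    refine leftLim_eq_of_tendsto (h := nhdsLT_neBot x) ?_
    exact (hF.tendsto x).mono_left nhdsWithin_le_nhds
  have hIic : ∀ b : ℝ, ρ (Iic b) = ENNReal.ofReal (F b) := by
    intro b
    conv_lhs => rw [← measure_cdf ρ]
    rw [(cdf ρ).measure_Iic (tendsto_cdf_atBot ρ) b, sub_zero]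
  have hIci : ∀ a : ℝ, ρ (Ici a) = ENNReal.ofReal (1 - F a) := by
    intro a
    conv_lhs => rw [← measure_cdf ρ]
    rw [(cdf ρ).measure_Ici (tendsto_cdf_atTop ρ) a, hleftLim]
  have hIoc : ∀ a b : ℝ, ρ (Ioc a b) = ENNReal.ofReal (F b - F a) := by
    intro a b
    conv_lhs => rw [← measure_cdf ρ]
    rw [(cdf ρ).measure_Ioc]
  rcases S.eq_empty_or_nonempty with hS | hSne
  · rw [hS]; simp
  by_cases hcr : c ≤ r
  · -- bound via sup
    have h2r : (1:ℝ) ≤ 2 * r ∨ c + r ≤ 2 * r := Or.inr (by linarith)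
    by_cases hβ : c + r < 1
    · have hev : ∀ᶠ t in atTop, c + r < F t :=
        (tendsto_cdf_atTop ρ).eventually (eventually_gt_nhds hβ)
      obtain ⟨M, hM⟩ := eventually_atTop.1 hev
      have hbdd : BddAbove S := by
        refine ⟨M, fun t ht => ?_⟩
        by_contra hlt
        exact absurd ((hmemS t ht).2) (not_le.2 (hM t (le_of_lt (not_le.1 hlt))))
      have hb : sSup S ∈ S := hSclosed.csSup_mem hSne hbdd
      calc ρ S ≤ ρ (Iic (sSup S)) := measure_mono (fun t ht => le_csSup hbdd ht)
        _ = ENNReal.ofReal (F (sSup S)) := hIic _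
        _ ≤ ENNReal.ofReal (2 * r) :=
            ENNReal.ofReal_le_ofReal (by linarith [(hmemS _ hb).2])
    · calc ρ S ≤ ρ univ := measure_mono (subset_univ S)
        _ = 1 := measure_univ
        _ ≤ ENNReal.ofReal (2 * r) := by
            rw [← ENNReal.ofReal_one]
            exact ENNReal.ofReal_le_ofReal (by linarith [not_lt.1 hβ])
  · have hα : 0 < c - r := by linarith [not_le.1 hcr]
    have hev : ∀ᶠ t in atBot, F t < c - r :=
      (tendsto_cdf_atBot ρ).eventually (eventually_lt_nhds hα)
    obtain ⟨M₁, hM₁⟩ := eventually_atBot.1 hev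
    have hbddb : BddBelow S := by
      refine ⟨M₁, fun t ht => ?_⟩
      by_contra hlt
      exact absurd ((hmemS t ht).1) (not_le.2 (hM₁ t (le_of_lt (not_le.1 hlt))))
    have ha : sInf S ∈ S := hSclosed.csInf_mem hSne hbddb
    by_cases h2 : 1 - c ≤ r
    · calc ρ S ≤ ρ (Ici (sInf S)) := measure_mono (fun t ht => csInf_le hbddb ht)
        _ = ENNReal.ofReal (1 - F (sInf S)) := hIci _
        _ ≤ ENNReal.ofReal (2 * r) :=
            ENNReal.ofReal_le_ofReal (by linarith [(hmemS _ ha).1])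
    · have hβ : c + r < 1 := by linarith [not_le.1 h2]
      have hev2 : ∀ᶠ t in atTop, c + r < F t :=
        (tendsto_cdf_atTop ρ).eventually (eventually_gt_nhds hβ)
      obtain ⟨M₂, hM₂⟩ := eventually_atTop.1 hev2
      have hbdda : BddAbove S := by
        refine ⟨M₂, fun t ht => ?_⟩
        by_contra hlt
        exact absurd ((hmemS t ht).2) (not_le.2 (hM₂ t (le_of_lt (not_le.1 hlt))))
      have hb : sSup S ∈ S := hSclosed.csSup_mem hSne hbdda
      have hab : sInf S ≤ sSup S := csInf_le_csSup hSne hbddb hbdda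
      have hsub : S ⊆ {sInf S} ∪ Ioc (sInf S) (sSup S) := by
        intro t ht
        rcases eq_or_lt_of_le (csInf_le hbddb ht) with h | h
        · exact Or.inl (by simp [← h])
        · exact Or.inr ⟨h, le_csSup hbdda ht⟩
      calc ρ S ≤ ρ ({sInf S} ∪ Ioc (sInf S) (sSup S)) := measure_mono hsub
        _ ≤ ρ {sInf S} + ρ (Ioc (sInf S) (sSup S)) := measure_union_le _ _
        _ = ENNReal.ofReal (F (sInf S) - Function.leftLim F (sInf S))
            + ENNReal.ofReal (F (sSup S) - F (sInf S)) := by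
            rw [hIoc]; congr 1
            conv_lhs => rw [← measure_cdf ρ]
            rw [(cdf ρ).measure_singleton]
        _ = ENNReal.ofReal (F (sSup S) - F (sInf S)) := by
            rw [hleftLim, sub_self, ENNReal.ofReal_zero, zero_add]
        _ ≤ ENNReal.ofReal (2 * r) :=
            ENNReal.ofReal_le_ofReal
              (by linarith [(hmemS _ ha).1, (hmemS _ hb).2])

open Filter in
lemma emp_var_bound {Ω : Type} [MeasurableSpace Ω] (μ : Measure Ω) [IsProbabilityMeasure μ]
    {N : ℕ} (hN : 1 ≤ N) (Z : Fin N → Ω → ℝ)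
    (hZmeas : ∀ i, Measurable (Z i))
    (hZ01 : ∀ i ω, Z i ω = 0 ∨ Z i ω = 1)
    (hindep : Set.Pairwise Set.univ fun i j => IndepFun (Z i) (Z j) μ)
    (p : ℝ) (hp : ∀ i, ∫ ω, Z i ω ∂μ = p) :
    ∫ ω, ((N:ℝ)⁻¹ * ∑ i, Z i ω - p)^2 ∂μ ≤ ((4:ℝ) * N)⁻¹ := by
  have hNpos : (0:ℝ) < N := by exact_mod_cast Nat.lt_of_lt_of_le Nat.zero_lt_one hN
  have hZ2 : ∀ i, MemLp (Z i) 2 μ := by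
    intro i
    refine MemLp.mono_exponent ?_ le_top
    refine memLp_top_of_bound (hZmeas i).aestronglyMeasurable 1 (ae_of_all μ fun ω => ?_)
    rcases hZ01 i ω with h | h <;> rw [h] <;> simp
  set W : Ω → ℝ := fun ω => ∑ i, Z i ω with hWdef
  have hWsum : W = ∑ i, Z i := by ext ω; simp [hWdef]
  have hW2 : MemLp W 2 μ := by rw [hWsum]; exact memLp_finset_sum' _ fun i _ => hZ2 i
  have hZint : ∀ i : Fin N, Integrable (Z i) μ := fun i => (hZ2 i).integrable one_le_two
  have hWint : ∫ ω, W ω ∂μ = N * p := by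
    rw [hWdef]
    rw [integral_finset_sum _ fun i _ => hZint i]
    simp [hp, Finset.card_univ]
  have hvar : variance W μ ≤ (N : ℝ) / 4 := by
    have hsum : variance W μ = ∑ i, variance (Z i) μ := by
      rw [hWsum]
      exact IndepFun.variance_sum (fun i _ => hZ2 i)
        (by intro i hi j hj hij; exact hindep (mem_univ i) (mem_univ j) hij)
    rw [hsum]
    calc ∑ i, variance (Z i) μ ≤ ∑ _i : Fin N, ((1 - 0 : ℝ)/2)^2 := by
          refine Finset.sum_le_sum fun i _ => ?_
          refine variance_le_sq_of_bounded (ae_of_all μ fun ω => ?_) (hZmeas i).aemeasurable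
          rcases hZ01 i ω with h | h <;> rw [h] <;> constructor <;> norm_num
      _ = (N : ℝ) / 4 := by simp [Finset.card_univ]; ring
  have hveq : variance W μ = ∫ ω, (W ω - N * p)^2 ∂μ := by
    rw [variance_eq_integral hW2.aestronglyMeasurable.aemeasurable]
    congr 1
    ext ω
    simp [hWint]
  have hEq : ∀ ω, ((N:ℝ)⁻¹ * ∑ i, Z i ω - p)^2 = (N:ℝ)⁻¹^2 * (W ω - N * p)^2 := by
    intro ω
    have : (N:ℝ)⁻¹ * ∑ i, Z i ω - p = (N:ℝ)⁻¹ * (W ω - N * p) := by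
      field_simp [hWdef]; rfl
    rw [this, mul_pow]
  calc ∫ ω, ((N:ℝ)⁻¹ * ∑ i, Z i ω - p)^2 ∂μ
      = (N:ℝ)⁻¹^2 * ∫ ω, (W ω - N * p)^2 ∂μ := by
        simp_rw [hEq]; exact integral_const_mul _ _
    _ = (N:ℝ)⁻¹^2 * variance W μ := by rw [hveq]
    _ ≤ (N:ℝ)⁻¹^2 * ((N:ℝ)/4) := by
        refine mul_le_mul_of_nonneg_left hvar (by positivity)
    _ = ((4:ℝ) * N)⁻¹ := by field_simp

open Filter in
lemma shell_bound (ρ : Measure ℝ) [IsProbabilityMeasure ρ]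
    {N : ℕ} (hN : 1 ≤ N) (δ : ℝ → ℝ) (hδmeas : Measurable δ) (hδ0 : ∀ t, 0 ≤ δ t)
    (hband : ∀ r : ℝ, 0 ≤ r → ρ {t | δ t ≤ r} ≤ ENNReal.ofReal (2 * r)) :
    ∫ t, min 1 ((4 * N * (δ t)^2)⁻¹) ∂ρ ≤ 5 / Real.sqrt N := by
  have hNpos : (0:ℝ) < N := by exact_mod_cast Nat.lt_of_lt_of_le Nat.zero_lt_one hN
  set sN : ℝ := Real.sqrt N with hsN
  have hsNpos : 0 < sN := Real.sqrt_pos.2 hNpos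
  have hsNsq : sN ^ 2 = N := Real.sq_sqrt hNpos.le
  set u0 : ℝ := (2 * sN)⁻¹ with hu0
  have hu0pos : 0 < u0 := by positivity
  set h : ℝ → ℝ := fun t => min 1 ((4 * N * (δ t)^2)⁻¹) with hh
  have hh0 : ∀ t, 0 ≤ h t := fun t => le_min zero_le_one (by positivity)
  have hh1 : ∀ t, h t ≤ 1 := fun t => min_le_left _ _
  have hhmeas : Measurable h :=
    measurable_const.min (((hδmeas.pow_const 2).const_mul _).inv)
  have hInt : Integrable h ρ := by
    refine ⟨hhmeas.aestronglyMeasurable, ?_⟩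
    refine HasFiniteIntegral.of_bounded (C := 1) (ae_of_all ρ fun t => ?_)
    rw [Real.norm_eq_abs, abs_of_nonneg (hh0 t)]
    exact hh1 t
  set B : Set ℝ := {t | δ t ≤ u0} with hB
  have hBmeas : MeasurableSet B := hδmeas measurableSet_Iic
  set A : ℕ → Set ℝ := fun k => {t | 2^k * u0 < δ t ∧ δ t ≤ 2^(k+1) * u0} with hA
  have hAmeas : ∀ k, MeasurableSet (A k) :=
    fun k => (hδmeas measurableSet_Ioi).inter (hδmeas measurableSet_Iic)
  have hdisj' : ∀ {k l : ℕ}, k < l → Disjoint (A k) (A l) := by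
    intro k l hkl
    rw [Set.disjoint_left]
    rintro t ⟨_, ht2⟩ ⟨ht3, _⟩
    have h2 : (2:ℝ)^(k+1) ≤ 2^l := by
      apply pow_le_pow_right₀ one_le_two hkl
    have : (2:ℝ)^(k+1) * u0 ≤ 2^l * u0 := by
      exact mul_le_mul_of_nonneg_right h2 hu0pos.le
    linarith
  have hdisj : Pairwise (Function.onFun Disjoint A) := by
    intro k l hkl
    rcases lt_or_gt_of_ne hkl with hlt | hgt
    · exact hdisj' hlt
    · exact (hdisj' hgt).symm
  have hcover : Bᶜ ⊆ ⋃ k, A k := by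
    intro t ht
    have htu : u0 < δ t := not_le.1 ht
    have hex : ∃ n : ℕ, δ t ≤ 2^(n+1) * u0 := by
      obtain ⟨n, hn⟩ := pow_unbounded_of_one_lt (y := (2:ℝ)) (δ t / u0) one_lt_two
      refine ⟨n, ?_⟩
      rw [← div_le_iff₀ hu0pos]
      exact le_of_lt (lt_of_lt_of_le hn (by apply pow_le_pow_right₀ one_le_two; omega))
    classical
    set k := Nat.find hex with hk
    refine mem_iUnion.2 ⟨k, ?_, Nat.find_spec hex⟩
    rcases Nat.eq_zero_or_pos k with h0 | hpos
    · rw [h0]; simpa using htu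
    · have := Nat.find_min hex (Nat.sub_lt hpos Nat.one_pos)
      rw [not_le] at this
      have hks : k - 1 + 1 = k := Nat.succ_pred_eq_of_pos hpos
      rw [hks] at this
      exact this
  have hBbound : (ρ B).toReal ≤ 2 * u0 :=
    ENNReal.toReal_le_of_le_ofReal (by positivity) (hband u0 hu0pos.le)
  have hsplit : ∫ t, h t ∂ρ = (∫ t in B, h t ∂ρ) + ∫ t in Bᶜ, h t ∂ρ :=
    (integral_add_compl hBmeas hInt).symm
  have hBpart : ∫ t in B, h t ∂ρ ≤ 2 * u0 := by
    calc ∫ t in B, h t ∂ρ ≤ ∫ _t in B, (1:ℝ) ∂ρ := by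
          refine setIntegral_mono_on hInt.integrableOn (integrableOn_const ?_) hBmeas
            (fun t _ => hh1 t)
          exact (measure_lt_top ρ B).ne
      _ = (ρ B).toReal := by simp [measureReal_def]
      _ ≤ 2 * u0 := hBbound
  have hterm : ∀ k : ℕ, ∫ t in A k, h t ∂ρ ≤ (↑N * u0)⁻¹ * (1/2)^k := by
    intro k
    have hck : ∀ t ∈ A k, h t ≤ (4 * N * (2^k * u0)^2)⁻¹ := by
      intro t ht
      refine le_trans (min_le_right _ _) ?_
      apply inv_anti₀ (by positivity)
      have : (2^k * u0)^2 ≤ (δ t)^2 := by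
        apply sq_le_sq' <;> nlinarith [ht.1, hu0pos, (by positivity : (0:ℝ) < (2:ℝ)^k)]
      nlinarith [hNpos]
    have hmeasA : (ρ (A k)).toReal ≤ 2 * (2^(k+1) * u0) := by
      refine ENNReal.toReal_le_of_le_ofReal (by positivity) ?_
      refine le_trans (measure_mono (fun t ht => ht.2)) (hband _ (by positivity))
    calc ∫ t in A k, h t ∂ρ ≤ ∫ _t in A k, (4 * ↑N * (2^k * u0)^2)⁻¹ ∂ρ := by
          refine setIntegral_mono_on hInt.integrableOn (integrableOn_const ?_) (hAmeas k) hck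
          exact (measure_lt_top ρ _).ne
      _ = (ρ (A k)).toReal * (4 * ↑N * (2^k * u0)^2)⁻¹ := by
          rw [setIntegral_const]; simp [smul_eq_mul, measureReal_def]
      _ ≤ (2 * (2^(k+1) * u0)) * (4 * ↑N * (2^k * u0)^2)⁻¹ := by
          refine mul_le_mul_of_nonneg_right hmeasA (by positivity)
      _ = (↑N * u0)⁻¹ * (1/2)^k := by
          have h2k : (0:ℝ) < 2^k := by positivity
          rw [one_div, inv_pow]
          field_simp [pow_succ, mul_pow]
          ring
  have hsummable : Summable (fun k : ℕ => (↑N * u0)⁻¹ * (1/2:ℝ)^k) :=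
    (summable_geometric_of_lt_one (by norm_num) (by norm_num)).mul_left _
  have hCpart : ∫ t in Bᶜ, h t ∂ρ ≤ (↑N * u0)⁻¹ * 2 := by
    calc ∫ t in Bᶜ, h t ∂ρ ≤ ∫ t in ⋃ k, A k, h t ∂ρ := by
          refine setIntegral_mono_set (hInt.integrableOn)
            (ae_of_all _ fun t => hh0 t) (HasSubset.Subset.eventuallyLE hcover)
      _ = ∑' k, ∫ t in A k, h t ∂ρ :=
          integral_iUnion hAmeas hdisj hInt.integrableOn
      _ ≤ ∑' k, (↑N * u0)⁻¹ * (1/2:ℝ)^k := by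
          refine Summable.tsum_le_tsum hterm ?_ hsummable
          refine Summable.of_nonneg_of_le (fun k => ?_) hterm hsummable
          exact setIntegral_nonneg (hAmeas k) (fun t _ => hh0 t)
      _ = (↑N * u0)⁻¹ * 2 := by
          rw [tsum_mul_left, tsum_geometric_of_lt_one (by norm_num) (by norm_num)]
          norm_num
  calc ∫ t, h t ∂ρ ≤ 2 * u0 + (↑N * u0)⁻¹ * 2 := by
        rw [hsplit]; exact add_le_add hBpart hCpart
    _ = 5 / sN := by
        rw [hu0]
        have : (↑N : ℝ) = sN * sN := by rw [← hsNsq]; ring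
        rw [this]
        field_simp
        ring

/-- there is an absolute constant `C > 0` such that for every `ε ∈ (0,1)`,
`E[|1{F̂_N(s(X)) ≥ 1-ε} - 1{F_s(s(X)) ≥ 1-ε}|] ≤ C N^{-1/2}`. -/
theorem empirical_threshold_mismatch_rate :
    ∃ C : ℝ, 0 < C ∧
      ∀ (Ω : Type) (_ : MeasurableSpace Ω) (μ : Measure Ω) (_ : IsProbabilityMeasure μ)
        (d N : ℕ), 1 ≤ N →
        ∀ (X : Ω → Euc d) (Xs : Fin N → Ω → Euc d),
          Measurable X → (∀ i, Measurable (Xs i)) →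
          -- `X, X_1, …, X_N` are i.i.d.
          iIndepFun
            (Fin.cons (α := fun _ : Fin (N + 1) => Ω → Euc d) X Xs) μ →
          (∀ i, Measure.map (Xs i) μ = Measure.map X μ) →
          ∀ (s : Euc d → ℝ), Measurable s →
            -- the cdf `F_s` of `s(X)` is continuous
            (Continuous fun t => (μ {ω | s (X ω) ≤ t}).toReal) →
            ∀ ε : ℝ, ε ∈ Set.Ioo (0 : ℝ) 1 →
              (∫ ω, |(if 1 - ε ≤ empCdf s Xs ω (s (X ω)) then (1 : ℝ) else 0)
                  - (if 1 - ε ≤ (μ {ω' | s (X ω') ≤ s (X ω)}).toReal then (1 : ℝ) else 0)|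
                ∂μ) ≤ C * (N : ℝ) ^ (-(1 / 2 : ℝ)) := by
  refine ⟨5, by norm_num, ?_⟩
  intro Ω mΩ μ hprob d N hN X Xs hX hXs hIndep hlaw s hs hFcont ε hε
  have hNpos : (0:ℝ) < N := by exact_mod_cast Nat.lt_of_lt_of_le Nat.zero_lt_one hN
  set c : ℝ := 1 - ε with hc
  have hc0 : 0 < c := by simp [hc]; linarith [hε.2]
  have hc1 : c < 1 := by simp [hc]; linarith [hε.1]
  set F : ℝ → ℝ := fun t => (μ {ω | s (X ω) ≤ t}).toReal with hF
  set T : Ω → ℝ := fun ω => s (X ω) with hT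
  have hTmeas : Measurable T := hs.comp hX
  set Y : Ω → (Fin N → Euc d) := fun ω i => Xs i ω with hY
  have hYmeas : Measurable Y := measurable_pi_lambda _ fun i => hXs i
  set ρ : Measure ℝ := Measure.map T μ with hρ
  have : IsProbabilityMeasure ρ := Measure.isProbabilityMeasure_map hTmeas.aemeasurable
  set σ : Measure (Fin N → Euc d) := Measure.map Y μ with hσ
  have : IsProbabilityMeasure σ := Measure.isProbabilityMeasure_map hYmeas.aemeasurable
  -- cdf of ρ is F
  have hcdfF : ∀ t, cdf ρ t = F t := by
    intro t
    rw [cdf_eq_real, measureReal_def, hρ, Measure.map_apply hTmeas measurableSet_Iic]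
    rfl
  have hcdfcont : Continuous (cdf ρ) := by
    have : ⇑(cdf ρ) = F := funext hcdfF
    rw [this]; exact hFcont
  -- measurability of cons family
  have hconsmeas : ∀ i : Fin (N+1),
      Measurable (Fin.cons (α := fun _ : Fin (N + 1) => Ω → Euc d) X Xs i) := by
    intro i
    exact Fin.cases hX hXs i
  -- independence of T and Y
  have hTY : IndepFun T Y μ := by
    have hdisj : Disjoint ({0} : Finset (Fin (N+1))) {0}ᶜ := disjoint_compl_right
    have base := hIndep.indepFun_finset {0} {0}ᶜ hdisj hconsmeas
    have h0mem : (0 : Fin (N+1)) ∈ ({0} : Finset (Fin (N+1))) := Finset.mem_singleton_self 0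
    have hsuccmem : ∀ j : Fin N, (j.succ : Fin (N+1)) ∈ ({0} : Finset (Fin (N+1)))ᶜ := by
      intro j
      simp [Finset.mem_compl, Fin.succ_ne_zero]
    set φ : ({i // i ∈ ({0} : Finset (Fin (N+1)))} → Euc d) → ℝ :=
      fun v => s (v ⟨0, h0mem⟩) with hφ
    set ψ : ({i // i ∈ ({0} : Finset (Fin (N+1)))ᶜ} → Euc d) → (Fin N → Euc d) :=
      fun v j => v ⟨j.succ, hsuccmem j⟩ with hψ
    have hφm : Measurable φ := hs.comp (measurable_pi_apply _)
    have hψm : Measurable ψ := measurable_pi_lambda _ fun j => measurable_pi_apply _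
    have h2 := base.comp hφm hψm
    refine h2.congr (ae_of_all _ fun ω => ?_) (ae_of_all _ fun ω => ?_)
    · simp [hφ, Function.comp, hT]
    · funext j
      simp [hψ, Function.comp, hY]
  -- joint law is product
  have hmap2 : Measure.map (fun ω => (T ω, Y ω)) μ = ρ.prod σ :=
    (indepFun_iff_map_prod_eq_prod_map_map hTmeas.aemeasurable hYmeas.aemeasurable).1 hTY
  -- the function G
  set emp : ℝ × (Fin N → Euc d) → ℝ :=
    fun q => (N:ℝ)⁻¹ * ∑ i, (if s (q.2 i) ≤ q.1 then (1:ℝ) else 0) with hemp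
  have hempmeas : Measurable emp := by
    refine Measurable.const_mul ?_ _
    refine Finset.measurable_sum _ fun i _ => ?_
    exact Measurable.ite
      (measurableSet_le (hs.comp ((measurable_pi_apply i).comp measurable_snd)) measurable_fst)
      measurable_const measurable_const
  set G : ℝ × (Fin N → Euc d) → ℝ :=
    fun q => |(if c ≤ emp q then (1:ℝ) else 0) - (if c ≤ F q.1 then (1:ℝ) else 0)| with hG
  have hGmeas : Measurable G := by
    refine Measurable.abs (Measurable.sub ?_ ?_)
    · exact Measurable.ite (measurableSet_le measurable_const hempmeas)
        measurable_const measurable_const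
    · exact Measurable.ite
        (measurableSet_le measurable_const (hFcont.measurable.comp measurable_fst))
        measurable_const measurable_const
  have hG01 : ∀ q, 0 ≤ G q ∧ G q ≤ 1 := by
    intro q
    constructor
    · exact abs_nonneg _
    · rw [hG]
      dsimp only
      split <;> split <;> norm_num
  have hGint : Integrable G (ρ.prod σ) := by
    refine ⟨hGmeas.aestronglyMeasurable, ?_⟩
    refine HasFiniteIntegral.of_bounded (C := 1) (ae_of_all _ fun q => ?_)
    rw [Real.norm_eq_abs, abs_of_nonneg (hG01 q).1]
    exact (hG01 q).2
  -- integrand equality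
  have hinteq : ∀ ω, |(if 1 - ε ≤ empCdf s Xs ω (s (X ω)) then (1 : ℝ) else 0)
      - (if 1 - ε ≤ (μ {ω' | s (X ω') ≤ s (X ω)}).toReal then (1 : ℝ) else 0)|
      = G (T ω, Y ω) := by
    intro ω
    simp only [hG, hemp, empCdf, hT, hY, hF, hc]; rfl
  -- rewrite integral
  have hstep1 : (∫ ω, |(if 1 - ε ≤ empCdf s Xs ω (s (X ω)) then (1 : ℝ) else 0)
      - (if 1 - ε ≤ (μ {ω' | s (X ω') ≤ s (X ω)}).toReal then (1 : ℝ) else 0)| ∂μ)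
      = ∫ q, G q ∂(ρ.prod σ) := by
    rw [← hmap2, integral_map (hTmeas.prodMk hYmeas).aemeasurable]
    · exact integral_congr_ae (ae_of_all _ fun ω => hinteq ω)
    · rw [hmap2]; exact hGmeas.aestronglyMeasurable
  have hstep2 : ∫ q, G q ∂(ρ.prod σ) = ∫ t, (∫ y, G (t, y) ∂σ) ∂ρ :=
    integral_prod G hGint
  set δ : ℝ → ℝ := fun t => |F t - c| with hδ
  have hδmeas : Measurable δ := ((hFcont.sub continuous_const).abs).measurable
  have hF01 : ∀ t, 0 ≤ F t ∧ F t ≤ 1 := by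
    intro t
    refine ⟨ENNReal.toReal_nonneg, ?_⟩
    rw [hF]
    exact ENNReal.toReal_le_of_le_ofReal zero_le_one (by simpa using prob_le_one)
  have hemp01 : ∀ q, 0 ≤ emp q ∧ emp q ≤ 1 := by
    intro q
    rw [hemp]
    dsimp only
    constructor
    · positivity
    · rw [inv_mul_le_iff₀ hNpos, mul_one]
      calc (∑ i : Fin N, if s (q.2 i) ≤ q.1 then (1:ℝ) else 0)
          ≤ ∑ _i : Fin N, (1:ℝ) := Finset.sum_le_sum (fun i _ => by split <;> norm_num)
        _ = N := by simp
  -- inner bound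
  have hinner : ∀ t, δ t ≠ 0 → (∫ y, G (t, y) ∂σ) ≤ min 1 ((4 * N * (δ t)^2)⁻¹) := by
    intro t hδt
    have hδpos : 0 < δ t := lt_of_le_of_ne (abs_nonneg _) (Ne.symm hδt)
    have hGtmeas : Measurable fun y => G (t, y) := hGmeas.comp measurable_prodMk_left
    have hGtint : Integrable (fun y => G (t, y)) σ := by
      refine ⟨hGtmeas.aestronglyMeasurable,
        HasFiniteIntegral.of_bounded (C := 1) (ae_of_all _ fun y => ?_)⟩
      rw [Real.norm_eq_abs, abs_of_nonneg (hG01 (t,y)).1]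
      exact (hG01 (t,y)).2
    refine le_min ?_ ?_
    · calc ∫ y, G (t, y) ∂σ ≤ ∫ _y, (1:ℝ) ∂σ :=
          integral_mono hGtint (integrable_const 1) (fun y => (hG01 (t,y)).2)
        _ = 1 := by simp
    · set q2 : (Fin N → Euc d) → ℝ := fun y => ((δ t)⁻¹)^2 * (emp (t, y) - F t)^2 with hq2
      have hptaux : ∀ y, ¬ (c ≤ emp (t,y)) ∨ ¬ (c ≤ F t) → (c ≤ emp (t,y)) ∨ (c ≤ F t) →
          (1:ℝ) ≤ q2 y := by
        intro y hnot hyes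
        have hdle : δ t ≤ |emp (t, y) - F t| := by
          rcases hyes with h1 | h2
          · have h2' : ¬ c ≤ F t := by tauto
            have : δ t = c - F t := by
              rw [hδ]; dsimp only
              rw [abs_of_nonpos (by linarith [not_le.1 h2'])]
              ring
            rw [this, abs_of_nonneg (by linarith [not_le.1 h2'])]
            linarith
          · have h1' : ¬ c ≤ emp (t,y) := by tauto
            have : δ t = F t - c := by
              rw [hδ]; dsimp only
              rw [abs_of_nonneg (by linarith)]
            rw [this, abs_sub_comm, abs_of_nonneg (by linarith [not_le.1 h1'])]
            linarith [not_le.1 h1']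
        have hsq : (δ t)^2 ≤ (emp (t,y) - F t)^2 := by
          rw [← sq_abs (emp (t,y) - F t)]
          exact pow_le_pow_left₀ hδpos.le hdle 2
        rw [hq2]
        dsimp only
        calc (1:ℝ) = ((δ t)⁻¹)^2 * (δ t)^2 := by
              field_simp
          _ ≤ ((δ t)⁻¹)^2 * (emp (t,y) - F t)^2 :=
              mul_le_mul_of_nonneg_left hsq (by positivity)
      have hpt : ∀ y, G (t, y) ≤ q2 y := by
        intro y
        have hq2nn : 0 ≤ q2 y := by rw [hq2]; positivity
        rw [hG]
        dsimp only
        by_cases h1 : c ≤ emp (t, y) <;> by_cases h2 : c ≤ F t <;>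
          simp only [h1, h2, if_true, if_false]
        · simpa using hq2nn
        · simpa using hptaux y (Or.inr h2) (Or.inl h1)
        · rw [abs_of_nonpos (by norm_num)]
          simpa using hptaux y (Or.inl h1) (Or.inr h2)
        · simpa using hq2nn
      have hq2meas : Measurable q2 := by
        refine Measurable.const_mul ?_ _
        exact ((hempmeas.comp measurable_prodMk_left).sub measurable_const).pow_const 2
      have hq2int : Integrable q2 σ := by
        refine ⟨hq2meas.aestronglyMeasurable,
          HasFiniteIntegral.of_bounded (C := ((δ t)⁻¹)^2) (ae_of_all _ fun y => ?_)⟩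
        rw [hq2, Real.norm_eq_abs]
        dsimp only
        rw [abs_of_nonneg (by positivity)]
        have h1 : (emp (t,y) - F t)^2 ≤ 1 := by
          nlinarith [(hemp01 (t,y)).1, (hemp01 (t,y)).2, (hF01 t).1, (hF01 t).2]
        nlinarith [sq_nonneg ((δ t)⁻¹)]
      -- variance transfer
      set Z : Fin N → Ω → ℝ := fun i ω => if s (Xs i ω) ≤ t then (1:ℝ) else 0 with hZ
      have hZmeas : ∀ i, Measurable (Z i) := by
        intro i
        exact Measurable.ite (measurableSet_le (hs.comp (hXs i)) measurable_const)
          measurable_const measurable_const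
      have hg : Measurable (fun y : Euc d => if s y ≤ t then (1:ℝ) else 0) :=
        Measurable.ite (measurableSet_le hs measurable_const) measurable_const measurable_const
      have hZindep : Set.Pairwise Set.univ fun i j => IndepFun (Z i) (Z j) μ := by
        intro i _ j _ hij
        have hsucc : (Fin.succ i) ≠ Fin.succ j := fun h => hij (Fin.succ_injective _ h)
        have h := (hIndep.indepFun hsucc).comp hg hg
        refine h.congr (ae_of_all _ fun ω => ?_) (ae_of_all _ fun ω => ?_) <;>
          simp [Function.comp, Fin.cons_succ, hZ]
      have hZp : ∀ i, ∫ ω, Z i ω ∂μ = F t := by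
        intro i
        have hseteq : {ω | s (Xs i ω) ≤ t} = (Xs i) ⁻¹' (s ⁻¹' (Iic t)) := rfl
        have hmeasset : μ {ω | s (Xs i ω) ≤ t} = μ {ω | s (X ω) ≤ t} := by
          rw [hseteq, ← Measure.map_apply (hXs i) (hs measurableSet_Iic), hlaw i,
            Measure.map_apply hX (hs measurableSet_Iic)]
          rfl
        have : ∀ ω, Z i ω = Set.indicator {ω | s (Xs i ω) ≤ t} (fun _ => (1:ℝ)) ω := by
          intro ω
          rw [Set.indicator_apply]
          rfl
        rw [integral_congr_ae (ae_of_all _ this), integral_indicator_const,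
          measureReal_def, hmeasset]
        · rw [hF]; simp [smul_eq_mul]
        · exact (measurableSet_le (hs.comp (hXs i)) measurable_const)
      have hvar := emp_var_bound μ hN Z hZmeas
        (fun i ω => by rw [hZ]; dsimp only; split <;> simp)
        hZindep (F t) hZp
      have htransfer : ∫ y, (emp (t, y) - F t)^2 ∂σ
          = ∫ ω, ((N:ℝ)⁻¹ * ∑ i, Z i ω - F t)^2 ∂μ := by
        exact integral_map hYmeas.aemeasurable
          (((hempmeas.comp measurable_prodMk_left).sub
            measurable_const).pow_const 2).aestronglyMeasurable
      calc ∫ y, G (t, y) ∂σ ≤ ∫ y, q2 y ∂σ := integral_mono hGtint hq2int hpt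
        _ = ((δ t)⁻¹)^2 * ∫ y, (emp (t, y) - F t)^2 ∂σ := by
            rw [hq2]; exact integral_const_mul _ _
        _ ≤ ((δ t)⁻¹)^2 * ((4:ℝ) * N)⁻¹ := by
            refine mul_le_mul_of_nonneg_left ?_ (by positivity)
            rw [htransfer]
            exact hvar
        _ = (4 * N * (δ t)^2)⁻¹ := by
            rw [inv_pow, mul_inv, mul_inv]
            ring
  -- band property
  have hband : ∀ r : ℝ, 0 ≤ r → ρ {t | δ t ≤ r} ≤ ENNReal.ofReal (2*r) := by
    intro r hr
    have hseteq : {t | |(cdf ρ) t - c| ≤ r} = {t | δ t ≤ r} := by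
      ext t
      rw [mem_setOf_eq, mem_setOf_eq, hcdfF t, hδ]
    rw [← hseteq]
    exact cdf_band ρ hcdfcont hc0 hc1 hr
  -- a.e. outer bound
  have hnull : ρ {t | δ t = 0} = 0 := by
    refine le_antisymm ?_ zero_le
    calc ρ {t | δ t = 0} ≤ ρ {t | δ t ≤ 0} := measure_mono (fun t ht => le_of_eq ht)
      _ ≤ ENNReal.ofReal (2 * 0) := hband 0 le_rfl
      _ = 0 := by simp
  have hae : ∀ᵐ t ∂ρ, (∫ y, G (t,y) ∂σ) ≤ min 1 ((4*N*(δ t)^2)⁻¹) := by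
    rw [ae_iff]
    refine measure_mono_null (fun t ht => ?_) hnull
    rw [mem_setOf_eq] at ht ⊢
    by_contra hne
    exact ht (hinner t hne)
  have hminint : Integrable (fun t => min 1 ((4*↑N*(δ t)^2)⁻¹)) ρ := by
    refine ⟨(measurable_const.min (((hδmeas.pow_const 2).const_mul _).inv)).aestronglyMeasurable,
      HasFiniteIntegral.of_bounded (C := 1) (ae_of_all _ fun t => ?_)⟩
    rw [Real.norm_eq_abs, abs_of_nonneg (le_min zero_le_one (by positivity))]
    exact min_le_left _ _
  have houter : ∫ t, (∫ y, G (t,y) ∂σ) ∂ρ ≤ ∫ t, min 1 ((4*↑N*(δ t)^2)⁻¹) ∂ρ :=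
    integral_mono_ae hGint.integral_prod_left hminint hae
  have hshell := shell_bound ρ hN δ hδmeas (fun t => abs_nonneg _) hband
  have hfinal : (5:ℝ) / Real.sqrt N = 5 * (N:ℝ) ^ (-(1/2 : ℝ)) := by
    rw [Real.rpow_neg (Nat.cast_nonneg N), ← Real.sqrt_eq_rpow, div_eq_mul_inv]
  calc (∫ ω, |(if 1 - ε ≤ empCdf s Xs ω (s (X ω)) then (1 : ℝ) else 0)
      - (if 1 - ε ≤ (μ {ω' | s (X ω') ≤ s (X ω)}).toReal then (1 : ℝ) else 0)| ∂μ)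
      = ∫ t, (∫ y, G (t, y) ∂σ) ∂ρ := by rw [hstep1, hstep2]
    _ ≤ ∫ t, min 1 ((4*↑N*(δ t)^2)⁻¹) ∂ρ := houter
    _ ≤ 5 / Real.sqrt N := hshell
    _ = 5 * (N:ℝ) ^ (-(1/2 : ℝ)) := hfinal
end
end

section
/- Assume σ² satisfies the α-exponent (margin) assumption at λ_ε with constants c* > 0 and α ≥ 0. Let h > 0, let λ' ∈ ℝ with |λ' − λ_ε| ≤ h, and let s : ℝ^d → ℝ be measurable with |s(x) − σ²(x)| ≤ h for P_X-almost every x. Then E[|σ²(X) − λ_ε| · 1{1{s(X) ≤ λ'} ≠ 1{σ²(X) ≤ λ_ε}}] ≤ 2h · c* (2h)^α. -/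
open MeasureTheory Set

noncomputable section

/-- under the α-exponent (margin) assumption at `λ_ε`, if `|λ' - λ_ε| ≤ h`
and `|s - σ²| ≤ h` a.e., then
`E[|σ²(X) - λ_ε| 1{1{s(X) ≤ λ'} ≠ 1{σ²(X) ≤ λ_ε}}] ≤ 2h · c*(2h)^α`. -/
theorem margin_mismatch_bound
    {Ω : Type*} [MeasurableSpace Ω] (μ : Measure Ω) [IsProbabilityMeasure μ]
    {d : ℕ} (X : Ω → Euc d) (Y : Ω → ℝ)
    (hX : Measurable X) (hY : Measurable Y)
    (hY2 : Integrable (fun ω => (Y ω) ^ 2) μ)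
    (fstar sigma2 : Euc d → ℝ)
    (hfstarMeas : Measurable fstar) (hsigma2Meas : Measurable sigma2)
    (hfstar : (fun ω => fstar (X ω)) =ᵐ[μ] μ[Y | MeasurableSpace.comap X inferInstance])
    (hsigma2 : (fun ω => sigma2 (X ω)) =ᵐ[μ]
      μ[(fun ω => (Y ω - fstar (X ω)) ^ 2) | MeasurableSpace.comap X inferInstance])
    (ε : ℝ) (hε : ε ∈ Set.Ioo (0 : ℝ) 1)
    (lamε : ℝ)
    (hlamε : lamε = sInf {t : ℝ | 1 - ε ≤ (μ {ω | sigma2 (X ω) ≤ t}).toReal})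
    -- the α-exponent (margin) assumption at `λ_ε`
    (cstar α : ℝ) (hcstar : 0 < cstar) (hα : 0 ≤ α)
    (hmargin : ∀ t : ℝ, 0 < t →
      (μ {ω | 0 < |sigma2 (X ω) - lamε| ∧ |sigma2 (X ω) - lamε| ≤ t}).toReal ≤
        cstar * t ^ α)
    (h : ℝ) (hh : 0 < h)
    (lam' : ℝ) (hlam' : |lam' - lamε| ≤ h)
    (s : Euc d → ℝ) (hs : Measurable s)
    (hsh : ∀ᵐ ω ∂μ, |s (X ω) - sigma2 (X ω)| ≤ h) :
    (∫ ω, |sigma2 (X ω) - lamε| *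
        Set.indicator {x | (s x ≤ lam') ≠ (sigma2 x ≤ lamε)} (fun _ => (1 : ℝ)) (X ω) ∂μ)
      ≤ 2 * h * (cstar * (2 * h) ^ α) := by
  set A : Set Ω := {ω | 0 < |sigma2 (X ω) - lamε| ∧ |sigma2 (X ω) - lamε| ≤ 2 * h} with hA
  have hg : Measurable (fun ω => |sigma2 (X ω) - lamε|) :=
    ((hsigma2Meas.comp hX).sub measurable_const).abs
  have hAmeas : MeasurableSet A :=
    (measurableSet_lt measurable_const hg).inter (measurableSet_le hg measurable_const)
  have hInd : Integrable (fun ω => 2 * h * A.indicator (fun _ => (1 : ℝ)) ω) μ :=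
    ((integrable_const (1 : ℝ)).indicator hAmeas).const_mul (2 * h)
  have hmono : ∀ᵐ ω ∂μ,
      |sigma2 (X ω) - lamε| *
        Set.indicator {x | (s x ≤ lam') ≠ (sigma2 x ≤ lamε)} (fun _ => (1 : ℝ)) (X ω)
      ≤ 2 * h * A.indicator (fun _ => (1 : ℝ)) ω := by
    filter_upwards [hsh] with ω hω
    have hRnn : 0 ≤ 2 * h * A.indicator (fun _ => (1 : ℝ)) ω :=
      mul_nonneg (by linarith) (Set.indicator_nonneg (fun _ _ => zero_le_one) ω)
    by_cases hmem : X ω ∈ {x | (s x ≤ lam') ≠ (sigma2 x ≤ lamε)}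
    · have key : |sigma2 (X ω) - lamε| ≤ 2 * h := by
        rcases abs_le.mp hlam' with ⟨hl1, hl2⟩
        rcases abs_le.mp hω with ⟨hs1, hs2⟩
        rw [abs_le]
        by_cases hP : s (X ω) ≤ lam'
        · have hQ : ¬ sigma2 (X ω) ≤ lamε := fun hq =>
            hmem (propext (iff_of_true hP hq))
          push_neg at hQ
          constructor <;> linarith
        · have hQ : sigma2 (X ω) ≤ lamε := by
            by_contra hq
            exact hmem (propext (iff_of_false hP hq))
          push_neg at hP
          constructor <;> linarith
      rw [Set.indicator_of_mem hmem, mul_one]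
      rcases eq_or_lt_of_le (abs_nonneg (sigma2 (X ω) - lamε)) with h0 | h0
      · rw [← h0]; exact hRnn
      · have hωA : ω ∈ A := ⟨h0, key⟩
        rw [Set.indicator_of_mem hωA, mul_one]
        exact key
    · rw [Set.indicator_of_notMem hmem, mul_zero]
      exact hRnn
  have hnn : 0 ≤ᵐ[μ] fun ω => |sigma2 (X ω) - lamε| *
      Set.indicator {x | (s x ≤ lam') ≠ (sigma2 x ≤ lamε)} (fun _ => (1 : ℝ)) (X ω) :=
    Filter.Eventually.of_forall fun ω =>
      mul_nonneg (abs_nonneg _) (Set.indicator_nonneg (fun _ _ => zero_le_one) _)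
  calc (∫ ω, |sigma2 (X ω) - lamε| *
        Set.indicator {x | (s x ≤ lam') ≠ (sigma2 x ≤ lamε)} (fun _ => (1 : ℝ)) (X ω) ∂μ)
      ≤ ∫ ω, 2 * h * A.indicator (fun _ => (1 : ℝ)) ω ∂μ :=
        integral_mono_of_nonneg hnn hInd hmono
    _ = 2 * h * (μ A).toReal := by
        rw [MeasureTheory.integral_const_mul, integral_indicator_const (1 : ℝ) hAmeas, smul_eq_mul, mul_one, Measure.real]
    _ ≤ 2 * h * (cstar * (2 * h) ^ α) := by
        apply mul_le_mul_of_nonneg_left _ (by linarith)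
        exact hmargin (2 * h) (by linarith)
end
end
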